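/- arXiv:1012.2428 — 3 statements merged into one kernel-verified Lean document; each statement's English description precedes it below -/
import Mathlib

section
/- Let N ≥ 2 be an integer, let y_1,…,y_N and r_1,…,r_N be real numbers, and for each integer j let x_j be the N-dimensional vector whose i-th entry is |y_i + j r_i|. Then for all integers k_1, k_2, k_3 with 1 ≤ k_1 < k_2 < k_3 ≤ N+1, the following 'conditional ultradiscrete Plücker relation' holds: max[x_1 … x̂_{k_2} … x_{N+1}] + max[x_1 … x̂_{k_1} … x̂_{k_3} … x_{N+2}] = max( max[x_1 … x̂_{k_3} … x_{N+1}] + max[x_1 … x̂_{k_1} … x̂_{k_2} … x_{N+2}], max[x_1 … x̂_{k_1} … x_{N+1}] + max[x_1 … x̂_{k_2} … x̂_{k_3} … x_{N+2}] ). -/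
/-- The ultradiscrete permanent of an `N × N` real matrix:
the maximum over all permutations `π` of `∑ i, A i (π i)`. -/
noncomputable def uperm {N : ℕ} (A : Matrix (Fin N) (Fin N) ℝ) : ℝ :=
  Finset.univ.sup' ⟨1, Finset.mem_univ 1⟩
    (fun π : Equiv.Perm (Fin N) => ∑ i, A i (π i))

/-- Ultradiscrete permanent of the matrix whose `j`-th column is the vector `x (c j)`. -/
noncomputable def upX {N : ℕ} (x : ℤ → Fin N → ℝ) (c : Fin N → ℤ) : ℝ :=
  uperm (Matrix.of fun i j => x (c j) i)

/-- The column vector `x_j` with `i`-th entry `|y_i + j r_i|`. -/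
noncomputable def xcol {N : ℕ} (y r : Fin N → ℝ) (j : ℤ) : Fin N → ℝ :=
  fun i => |y i + (j : ℝ) * r i|

/-- Enumeration (in increasing order) of the column index set `{a, a+1, …, a+N} \ {k}`. -/
def omitOne (N : ℕ) (a k : ℤ) : Fin N → ℤ :=
  fun j => if (j.1 : ℤ) + a < k then (j.1 : ℤ) + a else (j.1 : ℤ) + a + 1

/-- Enumeration (in increasing order) of the column index set
`{a, a+1, …, a+N+1} \ {k₁, k₂}` (for `k₁ < k₂`). -/
def omitTwo (N : ℕ) (a k₁ k₂ : ℤ) : Fin N → ℤ :=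
  fun j =>
    if (j.1 : ℤ) + a < k₁ then (j.1 : ℤ) + a
    else if (j.1 : ℤ) + a + 1 < k₂ then (j.1 : ℤ) + a + 1
    else (j.1 : ℤ) + a + 2

namespace UPluck

open Finset

variable {N : ℕ}

/-- value of an assignment -/
noncomputable def val (x : ℤ → Fin N → ℝ) (e : Fin N → ℤ) : ℝ := ∑ i, x (e i) i

lemma upX_eq (x : ℤ → Fin N → ℝ) (c : Fin N → ℤ) :
    upX x c = Finset.sup' (Finset.univ : Finset (Equiv.Perm (Fin N)))
      ⟨1, Finset.mem_univ 1⟩ (fun π : Equiv.Perm (Fin N) => val x (c ∘ π)) := rfl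

lemma comp_le_upX (x : ℤ → Fin N → ℝ) (c : Fin N → ℤ) (π : Equiv.Perm (Fin N)) :
    val x (c ∘ π) ≤ upX x c := by
  rw [upX_eq]
  exact Finset.le_sup' (fun π : Equiv.Perm (Fin N) => val x (c ∘ π)) (Finset.mem_univ π)

lemma exists_attain (x : ℤ → Fin N → ℝ) (c : Fin N → ℤ) :
    ∃ π : Equiv.Perm (Fin N), upX x c = val x (c ∘ π) := by
  rw [upX_eq]
  obtain ⟨π, _, h⟩ := Finset.exists_mem_eq_sup' ⟨1, Finset.mem_univ 1⟩
    (fun π : Equiv.Perm (Fin N) => val x (c ∘ π))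
  exact ⟨π, h⟩

/-- any injective assignment with the same image is dominated by upX -/
lemma val_le_upX (x : ℤ → Fin N → ℝ) (c e : Fin N → ℤ)
    (he : Function.Injective e)
    (him : Finset.image e Finset.univ = Finset.image c Finset.univ) :
    val x e ≤ upX x c := by
  -- find j with c (j i) = e i
  have hmem : ∀ i : Fin N, ∃ j, c j = e i := by
    intro i
    have : e i ∈ Finset.image c Finset.univ := by
      rw [← him]; exact Finset.mem_image_of_mem e (Finset.mem_univ i)
    obtain ⟨j, _, hj⟩ := Finset.mem_image.mp this
    exact ⟨j, hj⟩
  choose j hj using hmem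
  have hjinj : Function.Injective j := by
    intro i i' h
    apply he
    rw [← hj i, ← hj i', h]
  have hbij : Function.Bijective j := (Finite.injective_iff_bijective).mp hjinj
  let π := Equiv.ofBijective j hbij
  have : val x e = val x (c ∘ π) := by
    apply Finset.sum_congr rfl
    intro i _
    simp only [Function.comp_apply]
    rw [show (π : Fin N → Fin N) i = j i from rfl, hj]
  rw [this]
  exact comp_le_upX x c π

lemma comp_inj (c : Fin N → ℤ) (hc : Function.Injective c) (π : Equiv.Perm (Fin N)) :
    Function.Injective (c ∘ π) := hc.comp π.injective

lemma comp_image (c : Fin N → ℤ) (π : Equiv.Perm (Fin N)) :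
    Finset.image (c ∘ π) Finset.univ = Finset.image c Finset.univ := by
  ext z
  simp only [Finset.mem_image, Finset.mem_univ, true_and, Function.comp_apply]
  constructor
  · rintro ⟨i, hi⟩; exact ⟨π i, hi⟩
  · rintro ⟨i, hi⟩; exact ⟨π.symm i, by simpa using hi⟩

section Omit

lemma omitTwo_strictMono (u v : ℤ) (huv : u < v) : StrictMono (omitTwo N 1 u v) := by
  intro j j' hlt
  have hj : (j.1 : ℤ) < (j'.1 : ℤ) := by exact_mod_cast hlt
  unfold omitTwo
  split_ifs with h1 h2 h3 h4 h5 h6 h7 <;> omega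

lemma omitTwo_injective (u v : ℤ) (huv : u < v) : Function.Injective (omitTwo N 1 u v) :=
  (omitTwo_strictMono u v huv).injective

lemma omitTwo_image (u v : ℤ) (hu : 1 ≤ u) (huv : u < v) (hv : v ≤ (N : ℤ) + 2) :
    Finset.image (omitTwo N 1 u v) Finset.univ
      = (Finset.Icc (1 : ℤ) ((N : ℤ) + 2)) \ {u, v} := by
  apply Finset.eq_of_subset_of_card_le
  · intro z hz
    obtain ⟨j, _, hj⟩ := Finset.mem_image.mp hz
    have hjN : (j.1 : ℤ) ≤ (N : ℤ) - 1 := by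
      have := j.2
      omega
    have hj0 : (0 : ℤ) ≤ (j.1 : ℤ) := by positivity
    subst hj
    simp only [omitTwo, Finset.mem_sdiff, Finset.mem_Icc, Finset.mem_insert,
      Finset.mem_singleton]
    split_ifs with h1 h2 <;> omega
  · have hcard : (Finset.image (omitTwo N 1 u v) Finset.univ).card = N := by
      rw [Finset.card_image_of_injective _ (omitTwo_injective u v huv), Finset.card_univ,
        Fintype.card_fin]
    rw [hcard]
    have h1 : ({u, v} : Finset ℤ) ⊆ Finset.Icc (1 : ℤ) ((N : ℤ) + 2) := by
      intro z hz
      simp only [Finset.mem_insert, Finset.mem_singleton] at hz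
      rcases hz with rfl | rfl <;> simp only [Finset.mem_Icc] <;> omega
    rw [Finset.card_sdiff_of_subset h1]
    have : ({u, v} : Finset ℤ).card = 2 := by
      rw [Finset.card_insert_of_notMem (by simp; omega), Finset.card_singleton]
    rw [this]
    rw [Int.card_Icc]
    omega

lemma omitOne_eq_omitTwo (k : ℤ) : omitOne N 1 k = omitTwo N 1 k ((N : ℤ) + 2) := by
  funext j
  have hjN : (j.1 : ℤ) ≤ (N : ℤ) - 1 := by have := j.2; omega
  unfold omitOne omitTwo
  split_ifs with h1 h2 h3 <;> omega

end Omit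

end UPluck

namespace UPluck

lemma absl_diff_le (Y R u v : ℝ) (huv : u ≤ v) :
    |(|Y + v * R|) - (|Y + u * R|)| ≤ |R| * (v - u) := by
  have h2 : |Y + v * R - (Y + u * R)| = |R| * (v - u) := by
    have h3 : Y + v * R - (Y + u * R) = R * (v - u) := by ring
    rw [h3, abs_mul, abs_of_nonneg (by linarith : (0:ℝ) ≤ v - u)]
  calc |(|Y + v * R|) - (|Y + u * R|)|
      ≤ |Y + v * R - (Y + u * R)| := abs_abs_sub_abs_le_abs_sub _ _
    _ = |R| * (v - u) := h2

lemma absl_two_slope (Y R u v w : ℝ) (huv : u ≤ v) (hvw : v ≤ w) :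
    (|Y + v * R|) - (|Y + u * R|) = -(|R| * (v - u)) ∨
    (|Y + w * R|) - (|Y + v * R|) = |R| * (w - v) := by
  rcases le_or_gt 0 R with hR | hR
  · rcases le_or_gt (Y + v * R) 0 with hv | hv
    · left
      have hu : Y + u * R ≤ 0 := by nlinarith
      rw [abs_of_nonpos hv, abs_of_nonpos hu, abs_of_nonneg hR]; ring
    · right
      have hw : 0 ≤ Y + w * R := by nlinarith
      rw [abs_of_nonneg hw, abs_of_pos hv, abs_of_nonneg hR]; ring
  · rcases le_or_gt 0 (Y + v * R) with hv | hv
    · left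
      have hu : 0 ≤ Y + u * R := by nlinarith
      rw [abs_of_nonneg hv, abs_of_nonneg hu, abs_of_neg hR]; ring
    · right
      have hw : Y + w * R ≤ 0 := by nlinarith
      rw [abs_of_nonpos hw, abs_of_neg hv, abs_of_neg hR]; ring

private lemma lt_of_mul_lt_mul_pos {a b L : ℝ} (h : a * L < b * L) (hL : 0 < L) : a < b := by
  by_contra hc
  push_neg at hc
  have := mul_le_mul_of_nonneg_right hc hL.le
  linarith

lemma two_row_swap (Y₁ R₁ Y₂ R₂ w₁ w₂ w₃ w₄ : ℝ)
    (h12 : w₁ < w₂) (h23 : w₂ < w₃) (h34 : w₃ < w₄) :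
    (0 ≤ (|Y₁ + w₂ * R₁|) - (|Y₁ + w₁ * R₁|) + ((|Y₂ + w₁ * R₂|) - (|Y₂ + w₂ * R₂|))) ∨
    (0 ≤ (|Y₁ + w₄ * R₁|) - (|Y₁ + w₁ * R₁|) + ((|Y₂ + w₁ * R₂|) - (|Y₂ + w₄ * R₂|))) ∨
    (0 ≤ (|Y₁ + w₂ * R₁|) - (|Y₁ + w₃ * R₁|) + ((|Y₂ + w₃ * R₂|) - (|Y₂ + w₂ * R₂|))) ∨
    (0 ≤ (|Y₁ + w₄ * R₁|) - (|Y₁ + w₃ * R₁|) + ((|Y₂ + w₃ * R₂|) - (|Y₂ + w₄ * R₂|))) := by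
  by_contra hcon
  push_neg at hcon
  obtain ⟨c1, c2, c3, c4⟩ := hcon
  have hρ₁0 : (0:ℝ) ≤ |R₁| := abs_nonneg _
  have hρ₂0 : (0:ℝ) ≤ |R₂| := abs_nonneg _
  have b1_12 := abs_le.mp (absl_diff_le Y₁ R₁ w₁ w₂ h12.le)
  have b1_23 := abs_le.mp (absl_diff_le Y₁ R₁ w₂ w₃ h23.le)
  have b1_34 := abs_le.mp (absl_diff_le Y₁ R₁ w₃ w₄ h34.le)
  have b2_12 := abs_le.mp (absl_diff_le Y₂ R₂ w₁ w₂ h12.le)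
  have b2_23 := abs_le.mp (absl_diff_le Y₂ R₂ w₂ w₃ h23.le)
  have b2_34 := abs_le.mp (absl_diff_le Y₂ R₂ w₃ w₄ h34.le)
  have ts1 := absl_two_slope Y₁ R₁ w₂ w₃ w₄ h23.le h34.le
  have ts2a := absl_two_slope Y₂ R₂ w₁ w₂ w₃ h12.le h23.le
  have ts2b := absl_two_slope Y₂ R₂ w₂ w₃ w₄ h23.le h34.le
  have hL1 : (0:ℝ) < w₂ - w₁ := by linarith
  have hL2 : (0:ℝ) < w₃ - w₂ := by linarith
  have hL3 : (0:ℝ) < w₄ - w₃ := by linarith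
  -- abbreviate the abs atoms
  generalize hA1 : |Y₁ + w₁ * R₁| = A1 at *
  generalize hA2 : |Y₁ + w₂ * R₁| = A2 at *
  generalize hA3 : |Y₁ + w₃ * R₁| = A3 at *
  generalize hA4 : |Y₁ + w₄ * R₁| = A4 at *
  generalize hB1 : |Y₂ + w₁ * R₂| = B1 at *
  generalize hB2 : |Y₂ + w₂ * R₂| = B2 at *
  generalize hB3 : |Y₂ + w₃ * R₂| = B3 at *
  generalize hB4 : |Y₂ + w₄ * R₂| = B4 at *
  generalize hr1 : |R₁| = p1 at *
  generalize hr2 : |R₂| = p2 at *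
  rcases ts2a with hB | hA
  · -- Case B : B2 - B1 = -(p2 * L1); from c1, ρ₂ < ρ₁
    have h1 : p2 * (w₂ - w₁) < p1 * (w₂ - w₁) := by linarith [b1_12.1]
    have hρ : p2 < p1 := lt_of_mul_lt_mul_pos h1 hL1
    rcases ts1 with h2 | h2
    · -- A3 - A2 = -(p1 * L2): from c3, p1 < p2
      have h3 : p1 * (w₃ - w₂) < p2 * (w₃ - w₂) := by linarith [b2_23.1]
      have : p1 < p2 := lt_of_mul_lt_mul_pos h3 hL2
      linarith
    · -- A4 - A3 = p1 * L3 : from c4, p1 < p2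
      have h3 : p1 * (w₄ - w₃) < p2 * (w₄ - w₃) := by linarith [b2_34.2]
      have : p1 < p2 := lt_of_mul_lt_mul_pos h3 hL3
      linarith
  · -- Case A : B3 - B2 = p2 * L2
    rcases ts2b with hA1' | hA2'
    · -- p2 * L2 = -(p2 * L2), so p2 = 0
      have hp2 : p2 = 0 := by
        have h0 : p2 * (w₃ - w₂) = 0 := by linarith
        rcases mul_eq_zero.mp h0 with h | h
        · exact h
        · exact absurd h (by linarith)
      rw [hp2] at b2_23 b2_34
      have hz2 : (0:ℝ) * (w₃ - w₂) = 0 := zero_mul _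
      have hz3 : (0:ℝ) * (w₄ - w₃) = 0 := zero_mul _
      rcases ts1 with h2 | h2
      · have : (0:ℝ) ≤ p1 * (w₃ - w₂) := mul_nonneg hρ₁0 hL2.le
        linarith [b2_23.1, b2_23.2]
      · have : (0:ℝ) ≤ p1 * (w₄ - w₃) := mul_nonneg hρ₁0 hL3.le
        linarith [b2_34.1, b2_34.2]
    · -- B4 - B3 = p2 * L3 ; from c3: p2 < p1
      have h1 : p2 * (w₃ - w₂) < p1 * (w₃ - w₂) := by linarith [b1_23.2]
      have hρ : p2 < p1 := lt_of_mul_lt_mul_pos h1 hL2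
      rcases ts1 with h2 | h2
      · -- A3 - A2 = -(p1 L2), but A3 - A2 > p2 L2 ≥ 0
        have h4 : (0:ℝ) ≤ p2 * (w₃ - w₂) := mul_nonneg hρ₂0 hL2.le
        have h5 : (0:ℝ) ≤ p1 * (w₃ - w₂) := mul_nonneg hρ₁0 hL2.le
        linarith
      · -- A4 - A3 = p1 L3 ; c4: B4 - B3 > A4 - A3 so p2 L3 > p1 L3 so p2 > p1
        have h3 : p1 * (w₄ - w₃) < p2 * (w₄ - w₃) := by linarith
        have : p1 < p2 := lt_of_mul_lt_mul_pos h3 hL3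
        linarith

end UPluck

namespace UPluck

variable {N : ℕ}

/-- Existence of the alternating path starting at a column `α` covered by `σ` only. -/
lemma exists_path (σ τ : Fin N → ℤ) (hσ : Function.Injective σ) (hτ : Function.Injective τ)
    (α : ℤ) (hα1 : ∃ i, σ i = α) (hα2 : ¬∃ i, τ i = α) :
    ∃ (m : ℕ) (col : ℕ → ℤ) (row : ℕ → Fin N),
      0 < m ∧ col 0 = α ∧
      (∀ t, t < m → σ (row t) = col t) ∧
      (∀ t, t < m → τ (row t) = col (t + 1)) ∧
      (¬∃ i, σ i = col m) ∧
      (∀ t t', t ≤ m → t' ≤ m → col t = col t' → t = t') := by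
  classical
  obtain ⟨i0, hi0⟩ := hα1
  set g : ℤ → ℤ := fun z => if h : ∃ i, σ i = z then τ h.choose else z with hg
  set col : ℕ → ℤ := fun t => g^[t] α with hcol
  have hcol0 : col 0 = α := rfl
  have hstep : ∀ t (h : ∃ i, σ i = col t), col (t + 1) = τ h.choose := by
    intro t h
    have : col (t + 1) = g (col t) := Function.iterate_succ_apply' g t α
    rw [this, hg]
    simp only [dif_pos h]
  -- distinctness along the defined part
  have hdist : ∀ T, (∀ k, k < T → ∃ i, σ i = col k) →
      ∀ t t', t ≤ T → t' ≤ T → t < t' → col t ≠ col t' := by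
    intro T hT t
    induction t using Nat.strong_induction_on with
    | _ t ih =>
      intro t' ht htt' hlt heq
      rcases Nat.eq_zero_or_pos t with rfl | htpos
      · -- col t' = α ∈ range τ, contradiction
        have h1 : ∃ i, σ i = col (t' - 1) := hT _ (by omega)
        have h2 : col t' = τ h1.choose := by
          have := hstep (t' - 1) h1
          rwa [Nat.sub_add_cancel (by omega)] at this
        exact hα2 ⟨h1.choose, by rw [← h2, ← heq, hcol0]⟩
      · have h1 : ∃ i, σ i = col (t - 1) := hT _ (by omega)
        have h2 : ∃ i, σ i = col (t' - 1) := hT _ (by omega)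
        have e1 : col t = τ h1.choose := by
          have := hstep (t - 1) h1
          rwa [Nat.sub_add_cancel (by omega)] at this
        have e2 : col t' = τ h2.choose := by
          have := hstep (t' - 1) h2
          rwa [Nat.sub_add_cancel (by omega)] at this
        have : h1.choose = h2.choose := hτ (by rw [← e1, ← e2, heq])
        have hcols : col (t - 1) = col (t' - 1) := by
          rw [← h1.choose_spec, ← h2.choose_spec, this]
        exact ih (t - 1) (by omega) (t' - 1) (by omega) (by omega) (by omega) hcols
  -- escape exists
  have hesc : ∃ k, ¬∃ i, σ i = col k := by
    by_contra hc
    push_neg at hc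
    have hall : ∀ k, ∃ i, σ i = col k := hc
    have hd := hdist (N + 1) (fun k _ => hall k)
    set F : Fin (N + 1) → Fin N := fun k => (hall k.1).choose with hF
    have hFinj : Function.Injective F := by
      intro k k' hkk'
      have hkk'' : (hall k.1).choose = (hall k'.1).choose := hkk'
      have : col k.1 = col k'.1 := by
        rw [← (hall k.1).choose_spec, ← (hall k'.1).choose_spec, hkk'']
      by_contra hne
      have hne' : k.1 ≠ k'.1 := fun h => hne (Fin.ext h)
      rcases Nat.lt_or_ge k.1 k'.1 with h | h
      · exact hd k.1 k'.1 (by omega) (by omega) h this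
      · exact hd k'.1 k.1 (by omega) (by omega) (by omega) this.symm
    have := Fintype.card_le_of_injective F hFinj
    simp only [Fintype.card_fin] at this
    omega
  set m := Nat.find hesc with hm
  have hmprop : ¬∃ i, σ i = col m := Nat.find_spec hesc
  have hmmin : ∀ t, t < m → ∃ i, σ i = col t := by
    intro t ht
    have := Nat.find_min hesc ht
    push_neg at this
    simpa using this
  have hmpos : 0 < m := by
    rcases Nat.eq_zero_or_pos m with h | h
    · exfalso; apply hmprop; rw [h, hcol0]; exact ⟨i0, hi0⟩
    · exact h
  refine ⟨m, col, fun t => if h : ∃ i, σ i = col t then h.choose else i0, hmpos, hcol0, ?_, ?_, hmprop, ?_⟩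
  · intro t ht
    simp only [dif_pos (hmmin t ht)]
    exact (hmmin t ht).choose_spec
  · intro t ht
    simp only [dif_pos (hmmin t ht)]
    exact (hstep t (hmmin t ht)).symm
  · intro t t' ht ht' heq
    by_contra hne
    rcases Nat.lt_or_ge t t' with h | h
    · exact hdist m hmmin t t' ht ht' h heq
    · exact hdist m hmmin t' t ht' ht (by omega) heq.symm

/-- Columns of two alternating paths starting at distinct `σ`-only columns are disjoint. -/
lemma paths_disjoint (σ τ : Fin N → ℤ) (hτ : Function.Injective τ)
    (α α' : ℤ) (hne : α ≠ α') (hα2 : ¬∃ i, τ i = α) (hα2' : ¬∃ i, τ i = α')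
    (m m' : ℕ) (col col' : ℕ → ℤ) (row row' : ℕ → Fin N)
    (hc0 : col 0 = α) (hc0' : col' 0 = α')
    (hσr : ∀ t, t < m → σ (row t) = col t) (hτr : ∀ t, t < m → τ (row t) = col (t + 1))
    (hσr' : ∀ t, t < m' → σ (row' t) = col' t) (hτr' : ∀ t, t < m' → τ (row' t) = col' (t + 1)) :
    ∀ t t', t ≤ m → t' ≤ m' → col t ≠ col' t' := by
  intro t
  induction t using Nat.strong_induction_on with
  | _ t ih =>
    intro t' ht ht' heq
    rcases Nat.eq_zero_or_pos t with rfl | htpos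
    · rcases Nat.eq_zero_or_pos t' with rfl | ht'pos
      · rw [hc0, hc0'] at heq; exact hne heq
      · apply hα2
        refine ⟨row' (t' - 1), ?_⟩
        have := hτr' (t' - 1) (by omega)
        rw [Nat.sub_add_cancel (by omega)] at this
        rw [this, ← heq, hc0]
    · rcases Nat.eq_zero_or_pos t' with rfl | ht'pos
      · apply hα2'
        refine ⟨row (t - 1), ?_⟩
        have := hτr (t - 1) (by omega)
        rw [Nat.sub_add_cancel (by omega)] at this
        rw [this, heq, hc0']
      · have e1 := hτr (t - 1) (by omega)
        have e2 := hτr' (t' - 1) (by omega)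
        rw [Nat.sub_add_cancel (by omega)] at e1 e2
        have hrr : row (t - 1) = row' (t' - 1) := hτ (by rw [e1, e2, heq])
        have : col (t - 1) = col' (t' - 1) := by
          rw [← hσr (t - 1) (by omega), ← hσr' (t' - 1) (by omega), hrr]
        exact ih (t - 1) (by omega) (t' - 1) (by omega) (by omega) this

end UPluck

namespace UPluck

variable {N : ℕ}

/-- The exchange lemma: swapping along the full alternating path from `α`. -/
lemma exchange_path (x : ℤ → Fin N → ℝ) (σ τ : Fin N → ℤ)
    (hσ : Function.Injective σ) (hτ : Function.Injective τ)
    (α : ℤ) (hα2 : ¬∃ i, τ i = α)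
    (m : ℕ) (col : ℕ → ℤ) (row : ℕ → Fin N)
    (hmpos : 0 < m) (hc0 : col 0 = α)
    (hσr : ∀ t, t < m → σ (row t) = col t)
    (hτr : ∀ t, t < m → τ (row t) = col (t + 1))
    (hend : ¬∃ i, σ i = col m)
    (hdist : ∀ t t', t ≤ m → t' ≤ m → col t = col t' → t = t') :
    ∃ (σ' τ' : Fin N → ℤ),
      Function.Injective σ' ∧ Function.Injective τ' ∧
      Finset.image σ' Finset.univ = insert (col m) ((Finset.image σ Finset.univ).erase α) ∧
      Finset.image τ' Finset.univ = insert α ((Finset.image τ Finset.univ).erase (col m)) ∧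
      val x σ' + val x τ' = val x σ + val x τ := by
  classical
  -- basic facts
  have hrow_inj : ∀ t t', t < m → t' < m → row t = row t' → t = t' := by
    intro t t' ht ht' h
    apply hdist t t' (le_of_lt ht) (le_of_lt ht')
    rw [← hσr t ht, ← hσr t' ht', h]
  set P : Fin N → Prop := fun w => ∃ t, t < m ∧ w = row t with hP
  set σ' : Fin N → ℤ := fun w => if P w then τ w else σ w with hσ'
  set τ' : Fin N → ℤ := fun w => if P w then σ w else τ w with hτ'
  have hσ'row : ∀ t, t < m → σ' (row t) = col (t + 1) := by
    intro t ht
    rw [hσ']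
    simp only [if_pos (⟨t, ht, rfl⟩ : P (row t))]
    rw [if_pos (c := P (row t)) ⟨t, ht, rfl⟩]; exact hτr t ht
  have hσ'not : ∀ w, ¬ P w → σ' w = σ w := by
    intro w hw; rw [hσ']; simp only [if_neg hw]
  have hτ'row : ∀ t, t < m → τ' (row t) = col t := by
    intro t ht
    rw [hτ']
    simp only [if_pos (⟨t, ht, rfl⟩ : P (row t))]
    rw [if_pos (c := P (row t)) ⟨t, ht, rfl⟩]; exact hσr t ht
  have hτ'not : ∀ w, ¬ P w → τ' w = τ w := by
    intro w hw; rw [hτ']; simp only [if_neg hw]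
  have hβτ : τ (row (m - 1)) = col m := by
    have := hτr (m - 1) (by omega)
    rwa [Nat.sub_add_cancel (by omega)] at this
  refine ⟨σ', τ', ?_, ?_, ?_, ?_, ?_⟩
  · -- injectivity of σ'
    intro w w' heq
    by_cases hw : P w <;> by_cases hw' : P w'
    · obtain ⟨t, ht, rfl⟩ := hw; obtain ⟨t', ht', rfl⟩ := hw'
      rw [hσ'row t ht, hσ'row t' ht'] at heq
      have htt' : t = t' := by
        have := hdist (t+1) (t'+1) (by omega) (by omega) heq
        omega
      exact congrArg row htt'
    · exfalso
      obtain ⟨t, ht, rfl⟩ := hw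
      rw [hσ'row t ht, hσ'not w' hw'] at heq
      rcases Nat.lt_or_ge (t+1) m with h | h
      · exact hw' ⟨t+1, h, hσ (by rw [hσr (t+1) h, ← heq])⟩
      · have hm : t + 1 = m := by omega
        exact hend ⟨w', by rw [← heq, hm]⟩
    · exfalso
      obtain ⟨t', ht', rfl⟩ := hw'
      rw [hσ'row t' ht', hσ'not w hw] at heq
      rcases Nat.lt_or_ge (t'+1) m with h | h
      · exact hw ⟨t'+1, h, hσ (by rw [hσr (t'+1) h, heq])⟩
      · have hm : t' + 1 = m := by omega
        exact hend ⟨w, by rw [heq, hm]⟩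
    · rw [hσ'not w hw, hσ'not w' hw'] at heq
      exact hσ heq
  · -- injectivity of τ'
    intro w w' heq
    by_cases hw : P w <;> by_cases hw' : P w'
    · obtain ⟨t, ht, rfl⟩ := hw; obtain ⟨t', ht', rfl⟩ := hw'
      rw [hτ'row t ht, hτ'row t' ht'] at heq
      exact congrArg row (hdist t t' (by omega) (by omega) heq)
    · exfalso
      obtain ⟨t, ht, rfl⟩ := hw
      rw [hτ'row t ht, hτ'not w' hw'] at heq
      rcases Nat.eq_zero_or_pos t with rfl | htpos
      · exact hα2 ⟨w', by rw [← heq, hc0]⟩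
      · have e1 := hτr (t-1) (by omega)
        rw [Nat.sub_add_cancel (by omega)] at e1
        exact hw' ⟨t-1, by omega, hτ (by rw [e1, ← heq])⟩
    · exfalso
      obtain ⟨t', ht', rfl⟩ := hw'
      rw [hτ'row t' ht', hτ'not w hw] at heq
      rcases Nat.eq_zero_or_pos t' with rfl | htpos
      · exact hα2 ⟨w, by rw [heq, hc0]⟩
      · have e1 := hτr (t'-1) (by omega)
        rw [Nat.sub_add_cancel (by omega)] at e1
        exact hw ⟨t'-1, by omega, hτ (by rw [e1, heq])⟩
    · rw [hτ'not w hw, hτ'not w' hw'] at heq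
      exact hτ heq
  · -- image of σ'
    ext z
    simp only [Finset.mem_image, Finset.mem_univ, true_and, Finset.mem_insert,
      Finset.mem_erase]
    constructor
    · rintro ⟨w, rfl⟩
      by_cases hw : P w
      · obtain ⟨t, ht, rfl⟩ := hw
        rw [hσ'row t ht]
        rcases Nat.lt_or_ge (t+1) m with h | h
        · right
          refine ⟨?_, ⟨row (t+1), hσr (t+1) h⟩⟩
          rw [← hc0]
          intro hcc
          have := hdist (t+1) 0 (by omega) (by omega) hcc
          omega
        · left; congr 1; omega
      · rw [hσ'not w hw]
        right
        refine ⟨?_, ⟨w, rfl⟩⟩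
        rw [← hc0]
        intro hcc
        exact hw ⟨0, hmpos, (hσ (by rw [hσr 0 hmpos, hcc])).symm⟩
    · rintro (rfl | ⟨hza, w, rfl⟩)
      · exact ⟨row (m-1), by rw [hσ'row (m-1) (by omega), Nat.sub_add_cancel (by omega)]⟩
      · by_cases hw : P w
        · obtain ⟨t, ht, rfl⟩ := hw
          have htpos : 0 < t := by
            rcases Nat.eq_zero_or_pos t with rfl | h
            · exact absurd (by rw [hσr 0 hmpos, hc0]) hza
            · exact h
          refine ⟨row (t-1), ?_⟩
          rw [hσ'row (t-1) (by omega), Nat.sub_add_cancel (by omega), hσr t ht]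
        · exact ⟨w, hσ'not w hw⟩
  · -- image of τ'
    ext z
    simp only [Finset.mem_image, Finset.mem_univ, true_and, Finset.mem_insert,
      Finset.mem_erase]
    constructor
    · rintro ⟨w, rfl⟩
      by_cases hw : P w
      · obtain ⟨t, ht, rfl⟩ := hw
        rw [hτ'row t ht]
        rcases Nat.eq_zero_or_pos t with rfl | htpos
        · left; exact hc0
        · right
          have e1 := hτr (t-1) (by omega)
          rw [Nat.sub_add_cancel (by omega)] at e1
          refine ⟨?_, ⟨row (t-1), e1⟩⟩
          intro hcc
          have := hdist t m (by omega) (le_refl m) hcc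
          omega
      · rw [hτ'not w hw]
        right
        refine ⟨?_, ⟨w, rfl⟩⟩
        intro hcc
        exact hw ⟨m-1, by omega, hτ (by rw [hβτ, ← hcc])⟩
    · rintro (rfl | ⟨hzb, w, rfl⟩)
      · exact ⟨row 0, by rw [hτ'row 0 hmpos, hc0]⟩
      · by_cases hw : P w
        · obtain ⟨t, ht, rfl⟩ := hw
          have e1 := hτr t ht
          have ht1 : t + 1 < m := by
            rcases Nat.lt_or_ge (t+1) m with h | h
            · exact h
            · exfalso
              apply hzb
              rw [e1]
              congr 1
              omega
          exact ⟨row (t+1), by rw [hτ'row (t+1) ht1, e1]⟩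
        · exact ⟨w, hτ'not w hw⟩
  · -- value identity
    rw [val, val, val, val, ← Finset.sum_add_distrib, ← Finset.sum_add_distrib]
    apply Finset.sum_congr rfl
    intro i _
    by_cases hw : P i
    · obtain ⟨t, ht, rfl⟩ := hw
      rw [hσ']
      simp only [if_pos (⟨t, ht, rfl⟩ : P (row t))]
      rw [hτ']
      simp only [if_pos (⟨t, ht, rfl⟩ : P (row t))]
      rw [if_pos (c := P (row t)) ⟨t, ht, rfl⟩, if_pos (c := P (row t)) ⟨t, ht, rfl⟩]
      ring
    · rw [hσ'not i hw, hτ'not i hw]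

end UPluck

namespace UPluck

/-- strictly between -/
def betw (x u v : ℤ) : Prop := min u v < x ∧ x < max u v

instance : ∀ x u v, Decidable (betw x u v) := fun x u v => by unfold betw; infer_instance

/-- Parity function: for `x` distinct from all `colA` values, the number of intervals
of the chain `colA` strictly containing `x` has parity determined by the endpoints. -/
lemma chain_parity (colA : ℕ → ℤ) (l : ℕ) (x : ℤ) (hx : ∀ u, u ≤ l → colA u ≠ x) :
    (∑ u ∈ Finset.range l, (if betw x (colA u) (colA (u+1)) then (1 : ZMod 2) else 0))
      = (if colA 0 < x then (1 : ZMod 2) else 0) + (if colA l < x then 1 else 0) := by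
  induction l with
  | zero =>
    simp only [Finset.range_zero, Finset.sum_empty]
    split_ifs <;> decide
  | succ L ih =>
    have hx' : ∀ u, u ≤ L → colA u ≠ x := fun u hu => hx u (by omega)
    rw [Finset.sum_range_succ, ih hx']
    have key : (if betw x (colA L) (colA (L+1)) then (1 : ZMod 2) else 0)
        = (if colA L < x then (1 : ZMod 2) else 0) + (if colA (L+1) < x then 1 else 0) := by
      have h1 : colA L ≠ x := hx L (by omega)
      have h2 : colA (L+1) ≠ x := hx (L+1) (by omega)
      by_cases hA : colA L < x <;> by_cases hB : colA (L+1) < x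
      · rw [if_neg (by unfold betw; omega : ¬betw x (colA L) (colA (L+1))), if_pos hA, if_pos hB]; decide
      · rw [if_pos (by unfold betw; omega : betw x (colA L) (colA (L+1))),
          if_pos hA, if_neg hB]
        decide
      · rw [if_pos (by unfold betw; omega : betw x (colA L) (colA (L+1))),
          if_neg hA, if_pos hB]
        decide
      · rw [if_neg (by unfold betw; omega : ¬betw x (colA L) (colA (L+1))), if_neg hA, if_neg hB]; decide
    rw [key]
    have h2 : ∀ a b c : ZMod 2, a + b + (b + c) = a + c := by decide
    exact h2 _ _ _

/-- If the parity of the two endpoints of chain B w.r.t. chain A differs, some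
interval of B "interleaves" some interval of A. -/
lemma exists_interleave (colA colB : ℕ → ℤ) (l m : ℕ)
    (hdisj : ∀ t u, t ≤ m → u ≤ l → colB t ≠ colA u)
    (hpar : ((if colA 0 < colB 0 then (1 : ZMod 2) else 0) + (if colA l < colB 0 then 1 else 0))
      ≠ ((if colA 0 < colB m then (1 : ZMod 2) else 0) + (if colA l < colB m then 1 else 0))) :
    ∃ t, t < m ∧ ∃ u, u < l ∧
      ¬ (betw (colB t) (colA u) (colA (u+1)) ↔ betw (colB (t+1)) (colA u) (colA (u+1))) := by
  by_contra hc
  push_neg at hc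
  -- then the count function is constant along B
  have hconst : ∀ t, t < m →
      (∑ u ∈ Finset.range l, (if betw (colB t) (colA u) (colA (u+1)) then (1 : ZMod 2) else 0))
      = (∑ u ∈ Finset.range l, (if betw (colB (t+1)) (colA u) (colA (u+1)) then (1 : ZMod 2) else 0)) := by
    intro t ht
    apply Finset.sum_congr rfl
    intro u hu
    have := hc t ht u (Finset.mem_range.mp hu)
    by_cases h1 : betw (colB t) (colA u) (colA (u+1)) <;>
      by_cases h2 : betw (colB (t+1)) (colA u) (colA (u+1)) <;>
      simp only [if_pos, if_neg, h1, h2] <;> tauto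
  have hall : ∀ t, t ≤ m →
      (∑ u ∈ Finset.range l, (if betw (colB t) (colA u) (colA (u+1)) then (1 : ZMod 2) else 0))
      = (∑ u ∈ Finset.range l, (if betw (colB 0) (colA u) (colA (u+1)) then (1 : ZMod 2) else 0)) := by
    intro t
    induction t with
    | zero => intro _; rfl
    | succ T ih =>
      intro hT
      rw [← hconst T (by omega)]
      exact ih (by omega)
  have h0 := chain_parity colA l (colB 0) (fun u hu => (hdisj 0 u (by omega) hu).symm)
  have hm := chain_parity colA l (colB m) (fun u hu => (hdisj m u (le_refl m) hu).symm)
  apply hpar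
  rw [← h0, ← hm, hall m (le_refl m)]

end UPluck

namespace UPluck

private lemma aux_swap (Y₁ R₁ Y₂ R₂ : ℝ) (p p' q q' : ℤ)
    (hqq' : q < q') (hb1 : q < p) (hb2 : p < q') (hout : p' < q ∨ q' < p') :
    ∃ x z : ℤ, (x = p ∨ x = p') ∧ (z = q ∨ z = q') ∧
      0 ≤ |Y₁ + (z : ℝ) * R₁| - |Y₁ + (x : ℝ) * R₁| +
        (|Y₂ + (x : ℝ) * R₂| - |Y₂ + (z : ℝ) * R₂|) := by
  rcases hout with h | h
  · -- p' < q < p < q' : row1 = (Y₁,R₁) owns {p', p}, row2 owns {q, q'}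
    have ts := two_row_swap Y₁ R₁ Y₂ R₂ (p' : ℝ) (q : ℝ) (p : ℝ) (q' : ℝ)
      (by exact_mod_cast h) (by exact_mod_cast hb1) (by exact_mod_cast hb2)
    rcases ts with h1 | h1 | h1 | h1
    · exact ⟨p', q, Or.inr rfl, Or.inl rfl, by linarith⟩
    · exact ⟨p', q', Or.inr rfl, Or.inr rfl, by linarith⟩
    · exact ⟨p, q, Or.inl rfl, Or.inl rfl, by linarith⟩
    · exact ⟨p, q', Or.inl rfl, Or.inr rfl, by linarith⟩
  · -- q < p < q' < p' : row1 = (Y₂,R₂) owns {q, q'}, row2 = (Y₁,R₁) owns {p, p'}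
    have ts := two_row_swap Y₂ R₂ Y₁ R₁ (q : ℝ) (p : ℝ) (q' : ℝ) (p' : ℝ)
      (by exact_mod_cast hb1) (by exact_mod_cast hb2) (by exact_mod_cast h)
    rcases ts with h1 | h1 | h1 | h1
    · exact ⟨p, q, Or.inl rfl, Or.inl rfl, by linarith⟩
    · exact ⟨p', q, Or.inr rfl, Or.inl rfl, by linarith⟩
    · exact ⟨p, q', Or.inl rfl, Or.inr rfl, by linarith⟩
    · exact ⟨p', q', Or.inr rfl, Or.inr rfl, by linarith⟩

/-- From an interleaving pair, some crossing swap is non-losing. -/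
lemma crossing_swap_exists (Y₁ R₁ Y₂ R₂ : ℝ) (p p' q q' : ℤ)
    (hd1 : p ≠ q) (hd2 : p ≠ q') (hd3 : p' ≠ q) (hd4 : p' ≠ q') (hqq : q ≠ q')
    (hx : ¬ (betw p q q' ↔ betw p' q q')) :
    ∃ x z : ℤ, (x = p ∨ x = p') ∧ (z = q ∨ z = q') ∧
      0 ≤ |Y₁ + (z : ℝ) * R₁| - |Y₁ + (x : ℝ) * R₁| +
        (|Y₂ + (x : ℝ) * R₂| - |Y₂ + (z : ℝ) * R₂|) := by
  unfold betw at hx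
  have hcase : (betw p q q' ∧ ¬ betw p' q q') ∨ (betw p' q q' ∧ ¬ betw p q q') := by
    unfold betw; tauto
  rcases hcase with ⟨hin, hout⟩ | ⟨hin, hout⟩
  · unfold betw at hin hout
    rcases lt_or_gt_of_ne hqq with hlt | hlt
    · exact aux_swap Y₁ R₁ Y₂ R₂ p p' q q' hlt (by omega) (by omega) (by omega)
    · obtain ⟨x, z, hxm, hzm, hval⟩ :=
        aux_swap Y₁ R₁ Y₂ R₂ p p' q' q hlt (by omega) (by omega) (by omega)
      exact ⟨x, z, hxm, hzm.symm, hval⟩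
  · unfold betw at hin hout
    rcases lt_or_gt_of_ne hqq with hlt | hlt
    · obtain ⟨x, z, hxm, hzm, hval⟩ :=
        aux_swap Y₁ R₁ Y₂ R₂ p' p q q' hlt (by omega) (by omega) (by omega)
      exact ⟨x, z, hxm.symm, hzm, hval⟩
    · obtain ⟨x, z, hxm, hzm, hval⟩ :=
        aux_swap Y₁ R₁ Y₂ R₂ p' p q' q hlt (by omega) (by omega) (by omega)
      exact ⟨x, z, hxm.symm, hzm.symm, hval⟩

end UPluck

namespace UPluck

variable {N : ℕ}

lemma crossing_construction (x : ℤ → Fin N → ℝ) (σ τ : Fin N → ℤ)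
    (hσ : Function.Injective σ) (hτ : Function.Injective τ)
    (m : ℕ) (colB : ℕ → ℤ) (rowB : ℕ → Fin N) (hm : 0 < m)
    (hσB : ∀ t, t < m → σ (rowB t) = colB t)
    (hτB : ∀ t, t < m → τ (rowB t) = colB (t+1))
    (hBdist : ∀ t t', t ≤ m → t' ≤ m → colB t = colB t' → t = t')
    (hBend : ¬∃ i, σ i = colB m) (hB0 : ¬∃ i, τ i = colB 0)
    (l : ℕ) (colA : ℕ → ℤ) (rowA : ℕ → Fin N) (hl : 0 < l)
    (hσA : ∀ u, u < l → σ (rowA u) = colA u)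
    (hτA : ∀ u, u < l → τ (rowA u) = colA (u+1))
    (hAdist : ∀ u u', u ≤ l → u' ≤ l → colA u = colA u' → u = u')
    (hAend : ¬∃ i, σ i = colA l)
    (hdisj : ∀ t u, t ≤ m → u ≤ l → colB t ≠ colA u)
    (t u : ℕ) (ht : t < m) (hu : u < l)
    (xc xc' zc zc' : ℤ)
    (hxcs : (xc = colB t ∧ xc' = colB (t+1)) ∨ (xc = colB (t+1) ∧ xc' = colB t))
    (hzcs : (zc = colA u ∧ zc' = colA (u+1)) ∨ (zc = colA (u+1) ∧ zc' = colA u)) :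
    ∃ σ' τ' : Fin N → ℤ, Function.Injective σ' ∧ Function.Injective τ' ∧
      Finset.image σ' Finset.univ = insert (colA l) ((Finset.image σ Finset.univ).erase (colB 0)) ∧
      Finset.image τ' Finset.univ = insert (colB 0) ((Finset.image τ Finset.univ).erase (colA l)) ∧
      val x σ' + val x τ' = val x σ + val x τ
        + (x zc (rowB t) - x xc (rowB t) + (x xc (rowA u) - x zc (rowA u))) := by
  classical
  -- row disjointness and injectivity facts
  have hrowBinj : ∀ t₁ t₂, t₁ < m → t₂ < m → rowB t₁ = rowB t₂ → t₁ = t₂ := by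
    intro t₁ t₂ h1 h2 h
    exact hBdist t₁ t₂ (by omega) (by omega) (by rw [← hσB t₁ h1, ← hσB t₂ h2, h])
  have hrowAinj : ∀ u₁ u₂, u₁ < l → u₂ < l → rowA u₁ = rowA u₂ → u₁ = u₂ := by
    intro u₁ u₂ h1 h2 h
    exact hAdist u₁ u₂ (by omega) (by omega) (by rw [← hσA u₁ h1, ← hσA u₂ h2, h])
  have hrowBA : ∀ t₁ u₁, t₁ < m → u₁ < l → rowB t₁ ≠ rowA u₁ := by
    intro t₁ u₁ h1 h2 h
    exact hdisj t₁ u₁ (by omega) (by omega) (by rw [← hσB t₁ h1, ← hσA u₁ h2, h])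
  set SW : Fin N → Prop :=
    fun w => (∃ t', t' < t ∧ w = rowB t') ∨ (∃ u', u < u' ∧ u' < l ∧ w = rowA u') with hSW
  set σ' : Fin N → ℤ := fun w =>
    if w = rowB t then zc else if w = rowA u then zc' else if SW w then τ w else σ w with hσ'
  set τ' : Fin N → ℤ := fun w =>
    if w = rowB t then xc' else if w = rowA u then xc else if SW w then σ w else τ w with hτ'
  -- pointwise value lemmas
  have hne_tu : rowB t ≠ rowA u := hrowBA t u ht hu
  have hσ'B : ∀ t', t' < t → σ' (rowB t') = colB (t'+1) := by
    intro t' h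
    rw [hσ']
    simp only
    rw [if_neg, if_neg, if_pos (Or.inl ⟨t', h, rfl⟩)]
    · exact hτB t' (by omega)
    · intro hc; exact hrowBA t' u (by omega) hu hc
    · intro hc; have := hrowBinj t' t (by omega) ht hc; omega
  have hσ'Btail : ∀ t', t < t' → t' < m → σ' (rowB t') = colB t' := by
    intro t' h1 h2
    rw [hσ']
    simp only
    rw [if_neg, if_neg, if_neg]
    · exact hσB t' h2
    · rintro (⟨t'', h3, h4⟩ | ⟨u'', h3, h4, h5⟩)
      · have := hrowBinj t' t'' h2 (by omega) h4
        omega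
      · exact hrowBA t' u'' h2 h4 h5
    · intro hc; exact hrowBA t' u h2 hu hc
    · intro hc; have := hrowBinj t' t h2 ht hc; omega
  have hσ'Ahead : ∀ u', u' < u → σ' (rowA u') = colA u' := by
    intro u' h
    rw [hσ']
    simp only
    rw [if_neg, if_neg, if_neg]
    · exact hσA u' (by omega)
    · rintro (⟨t'', h3, h4⟩ | ⟨u'', h3, h4, h5⟩)
      · exact (hrowBA t'' u' (by omega) (by omega) h4.symm).elim
      · have := hrowAinj u' u'' (by omega) h4 h5
        omega
    · intro hc; have := hrowAinj u' u (by omega) hu hc; omega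
    · intro hc; exact hrowBA t u' ht (by omega) hc.symm
  have hσ'Atail : ∀ u', u < u' → u' < l → σ' (rowA u') = colA (u'+1) := by
    intro u' h1 h2
    rw [hσ']
    simp only
    rw [if_neg, if_neg, if_pos (Or.inr ⟨u', h1, h2, rfl⟩)]
    · exact hτA u' h2
    · intro hc; have := hrowAinj u' u h2 hu hc; omega
    · intro hc; exact hrowBA t u' ht h2 hc.symm
  have hσ't : σ' (rowB t) = zc := by simp only [hσ', if_true]
  have hσ'u : σ' (rowA u) = zc' := by
    simp only [hσ']
    rw [if_neg (Ne.symm hne_tu)]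
    simp only [if_true]
  have hPBPA : ∀ w, (¬∃ t', t' < m ∧ w = rowB t') → (¬∃ u', u' < l ∧ w = rowA u') →
      σ' w = σ w ∧ τ' w = τ w := by
    intro w h1 h2
    have c1 : w ≠ rowB t := fun hc => h1 ⟨t, ht, hc⟩
    have c2 : w ≠ rowA u := fun hc => h2 ⟨u, hu, hc⟩
    have c3 : ¬ SW w := by
      rintro (⟨t'', h3, h4⟩ | ⟨u'', h3, h4, h5⟩)
      · exact h1 ⟨t'', by omega, h4⟩
      · exact h2 ⟨u'', by omega, h5⟩
    constructor
    · rw [hσ']; simp only; rw [if_neg c1, if_neg c2, if_neg c3]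
    · rw [hτ']; simp only; rw [if_neg c1, if_neg c2, if_neg c3]
  -- tau' values
  have hτ'B : ∀ t', t' < t → τ' (rowB t') = colB t' := by
    intro t' h
    rw [hτ']
    simp only
    rw [if_neg, if_neg, if_pos (Or.inl ⟨t', h, rfl⟩)]
    · exact hσB t' (by omega)
    · intro hc; exact hrowBA t' u (by omega) hu hc
    · intro hc; have := hrowBinj t' t (by omega) ht hc; omega
  have hτ'Btail : ∀ t', t < t' → t' < m → τ' (rowB t') = colB (t'+1) := by
    intro t' h1 h2
    rw [hτ']
    simp only
    rw [if_neg, if_neg, if_neg]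
    · exact hτB t' h2
    · rintro (⟨t'', h3, h4⟩ | ⟨u'', h3, h4, h5⟩)
      · have := hrowBinj t' t'' h2 (by omega) h4
        omega
      · exact hrowBA t' u'' h2 h4 h5
    · intro hc; exact hrowBA t' u h2 hu hc
    · intro hc; have := hrowBinj t' t h2 ht hc; omega
  have hτ'Ahead : ∀ u', u' < u → τ' (rowA u') = colA (u'+1) := by
    intro u' h
    rw [hτ']
    simp only
    rw [if_neg, if_neg, if_neg]
    · exact hτA u' (by omega)
    · rintro (⟨t'', h3, h4⟩ | ⟨u'', h3, h4, h5⟩)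
      · exact (hrowBA t'' u' (by omega) (by omega) h4.symm).elim
      · have := hrowAinj u' u'' (by omega) h4 h5
        omega
    · intro hc; have := hrowAinj u' u (by omega) hu hc; omega
    · intro hc; exact hrowBA t u' ht (by omega) hc.symm
  have hτ'Atail : ∀ u', u < u' → u' < l → τ' (rowA u') = colA u' := by
    intro u' h1 h2
    rw [hτ']
    simp only
    rw [if_neg, if_neg, if_pos (Or.inr ⟨u', h1, h2, rfl⟩)]
    · exact hσA u' h2
    · intro hc; have := hrowAinj u' u h2 hu hc; omega
    · intro hc; exact hrowBA t u' ht h2 hc.symm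
  have hτ't : τ' (rowB t) = xc' := by simp only [hτ', if_true]
  have hτ'u : τ' (rowA u) = xc := by
    simp only [hτ']
    rw [if_neg (Ne.symm hne_tu)]
    simp only [if_true]
  -- image of σ'
  have himσ : Finset.image σ' Finset.univ
      = insert (colA l) ((Finset.image σ Finset.univ).erase (colB 0)) := by
    apply Finset.Subset.antisymm
    · intro z hz
      obtain ⟨w, _, rfl⟩ := Finset.mem_image.mp hz
      simp only [Finset.mem_insert, Finset.mem_erase, Finset.mem_image, Finset.mem_univ, true_and]
      -- helper: any colA value (index ≤ l) is ok
      have hAok : ∀ v, v ≤ l → (colA v = colA l ∨ (colA v ≠ colB 0 ∧ ∃ i, σ i = colA v)) := by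
        intro v hv
        rcases Nat.lt_or_ge v l with h | h
        · exact Or.inr ⟨fun hc => hdisj 0 v (by omega) (by omega) hc.symm, ⟨rowA v, hσA v h⟩⟩
        · left; congr 1; omega
      by_cases h1 : ∃ t', t' < m ∧ w = rowB t'
      · obtain ⟨t', ht', rfl⟩ := h1
        rcases Nat.lt_trichotomy t' t with h | h | h
        · rw [hσ'B t' h]
          right
          refine ⟨fun hc => ?_, ⟨rowB (t'+1), hσB (t'+1) (by omega)⟩⟩
          have := hBdist (t'+1) 0 (by omega) (by omega) hc
          omega
        · subst h
          rw [hσ't]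
          rcases hzcs with ⟨h2, _⟩ | ⟨h2, _⟩
          · rw [h2]
            rcases hAok u (by omega) with h3 | h3
            · exact Or.inl h3
            · exact Or.inr h3
          · rw [h2]
            rcases hAok (u+1) (by omega) with h3 | h3
            · exact Or.inl h3
            · exact Or.inr h3
        · rw [hσ'Btail t' h ht']
          right
          refine ⟨fun hc => ?_, ⟨rowB t', hσB t' ht'⟩⟩
          have := hBdist t' 0 (by omega) (by omega) hc
          omega
      · by_cases h2 : ∃ u', u' < l ∧ w = rowA u'
        · obtain ⟨u', hu', rfl⟩ := h2
          rcases Nat.lt_trichotomy u' u with h | h | h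
          · rw [hσ'Ahead u' h]
            rcases hAok u' (by omega) with h3 | h3
            · exact Or.inl h3
            · exact Or.inr h3
          · subst h
            rw [hσ'u]
            rcases hzcs with ⟨_, h3⟩ | ⟨_, h3⟩
            · rw [h3]
              rcases hAok (u'+1) (by omega) with h4 | h4
              · exact Or.inl h4
              · exact Or.inr h4
            · rw [h3]
              rcases hAok u' (by omega) with h4 | h4
              · exact Or.inl h4
              · exact Or.inr h4
          · rw [hσ'Atail u' h hu']
            rcases hAok (u'+1) (by omega) with h3 | h3
            · exact Or.inl h3
            · exact Or.inr h3
        · rw [(hPBPA w h1 h2).1]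
          right
          refine ⟨fun hc => h1 ⟨0, by omega, hσ (by rw [hσB 0 (by omega), ← hc])⟩, ⟨w, rfl⟩⟩
    · intro z hz
      simp only [Finset.mem_insert, Finset.mem_erase, Finset.mem_image, Finset.mem_univ,
        true_and] at hz
      rw [Finset.mem_image]
      rcases hz with rfl | ⟨hz0, w, rfl⟩
      · -- z = colA l
        rcases Nat.lt_or_ge (u+1) l with h | h
        · exact ⟨rowA (l-1), Finset.mem_univ _, by
            rw [hσ'Atail (l-1) (by omega) (by omega), Nat.sub_add_cancel (by omega)]⟩
        · have hul : u + 1 = l := by omega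
          rcases hzcs with ⟨h2, h3⟩ | ⟨h2, h3⟩
          · exact ⟨rowA u, Finset.mem_univ _, by rw [hσ'u, h3, hul]⟩
          · exact ⟨rowB t, Finset.mem_univ _, by rw [hσ't, h2, hul]⟩
      · by_cases h1 : ∃ t', t' < m ∧ w = rowB t'
        · obtain ⟨t', ht', rfl⟩ := h1
          rw [hσB t' ht']
          rw [hσB t' ht'] at hz0
          have ht'0 : 0 < t' := by
            rcases Nat.eq_zero_or_pos t' with rfl | h
            · exact absurd rfl hz0
            · exact h
          rcases Nat.lt_or_ge t t' with h | h
          · exact ⟨rowB t', Finset.mem_univ _, hσ'Btail t' h ht'⟩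
          · -- t' ≤ t, t' ≥ 1 : σ' (rowB (t'-1)) = colB t'
            exact ⟨rowB (t'-1), Finset.mem_univ _, by
              rw [hσ'B (t'-1) (by omega), Nat.sub_add_cancel (by omega)]⟩
        · by_cases h2 : ∃ u', u' < l ∧ w = rowA u'
          · obtain ⟨u', hu', rfl⟩ := h2
            rw [hσA u' hu']
            rcases Nat.lt_trichotomy u' u with h | h | h
            · exact ⟨rowA u', Finset.mem_univ _, hσ'Ahead u' h⟩
            · subst h
              rcases hzcs with ⟨h3, _⟩ | ⟨_, h3⟩
              · exact ⟨rowB t, Finset.mem_univ _, by rw [hσ't, h3]⟩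
              · exact ⟨rowA u', Finset.mem_univ _, by rw [hσ'u, h3]⟩
            · rcases Nat.eq_or_lt_of_le (by omega : u + 1 ≤ u') with h3 | h3
              · rcases hzcs with ⟨_, h4⟩ | ⟨h4, _⟩
                · exact ⟨rowA u, Finset.mem_univ _, by rw [hσ'u, h4, h3]⟩
                · exact ⟨rowB t, Finset.mem_univ _, by rw [hσ't, h4, h3]⟩
              · exact ⟨rowA (u'-1), Finset.mem_univ _, by
                  rw [hσ'Atail (u'-1) (by omega) (by omega), Nat.sub_add_cancel (by omega)]⟩
          · exact ⟨w, Finset.mem_univ _, (hPBPA w h1 h2).1⟩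
  -- image of τ'
  have himτ : Finset.image τ' Finset.univ
      = insert (colB 0) ((Finset.image τ Finset.univ).erase (colA l)) := by
    apply Finset.Subset.antisymm
    · intro z hz
      obtain ⟨w, _, rfl⟩ := Finset.mem_image.mp hz
      simp only [Finset.mem_insert, Finset.mem_erase, Finset.mem_image, Finset.mem_univ, true_and]
      have hBok : ∀ v, v ≤ m → (colB v = colB 0 ∨ (colB v ≠ colA l ∧ ∃ i, τ i = colB v)) := by
        intro v hv
        rcases Nat.eq_zero_or_pos v with rfl | h
        · exact Or.inl rfl
        · refine Or.inr ⟨fun hc => hdisj v l (by omega) (le_refl l) hc, ⟨rowB (v-1), ?_⟩⟩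
          rw [hτB (v-1) (by omega), Nat.sub_add_cancel (by omega)]
      by_cases h1 : ∃ t', t' < m ∧ w = rowB t'
      · obtain ⟨t', ht', rfl⟩ := h1
        rcases Nat.lt_trichotomy t' t with h | h | h
        · rw [hτ'B t' h]
          rcases hBok t' (by omega) with h3 | h3
          · exact Or.inl h3
          · exact Or.inr h3
        · subst h
          rw [hτ't]
          rcases hxcs with ⟨_, h2⟩ | ⟨_, h2⟩
          · rw [h2]
            rcases hBok (t'+1) (by omega) with h3 | h3
            · exact Or.inl h3
            · exact Or.inr h3
          · rw [h2]
            rcases hBok t' (by omega) with h3 | h3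
            · exact Or.inl h3
            · exact Or.inr h3
        · rw [hτ'Btail t' h ht']
          rcases hBok (t'+1) (by omega) with h3 | h3
          · exact Or.inl h3
          · exact Or.inr h3
      · by_cases h2 : ∃ u', u' < l ∧ w = rowA u'
        · obtain ⟨u', hu', rfl⟩ := h2
          rcases Nat.lt_trichotomy u' u with h | h | h
          · rw [hτ'Ahead u' h]
            right
            refine ⟨fun hc => ?_, ⟨rowA u', hτA u' hu'⟩⟩
            have := hAdist (u'+1) l (by omega) (le_refl l) hc
            omega
          · subst h
            rw [hτ'u]
            rcases hxcs with ⟨h3, _⟩ | ⟨h3, _⟩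
            · rw [h3]
              rcases hBok t (by omega) with h4 | h4
              · exact Or.inl h4
              · exact Or.inr h4
            · rw [h3]
              rcases hBok (t+1) (by omega) with h4 | h4
              · exact Or.inl h4
              · exact Or.inr h4
          · rw [hτ'Atail u' h hu']
            right
            refine ⟨fun hc => ?_, ⟨rowA (u'-1), by
              rw [hτA (u'-1) (by omega), Nat.sub_add_cancel (by omega)]⟩⟩
            have := hAdist u' l (by omega) (le_refl l) hc
            omega
        · rw [(hPBPA w h1 h2).2]
          right
          have hll : τ (rowA (l-1)) = colA l := by
            rw [hτA (l-1) (by omega), Nat.sub_add_cancel (by omega)]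
          refine ⟨fun hc => h2 ⟨l-1, by omega, hτ (by rw [hll, ← hc])⟩, ⟨w, rfl⟩⟩
    · intro z hz
      simp only [Finset.mem_insert, Finset.mem_erase, Finset.mem_image, Finset.mem_univ,
        true_and] at hz
      rw [Finset.mem_image]
      rcases hz with rfl | ⟨hz0, w, rfl⟩
      · rcases Nat.eq_zero_or_pos t with rfl | h
        · rcases hxcs with ⟨h2, _⟩ | ⟨_, h2⟩
          · exact ⟨rowA u, Finset.mem_univ _, by rw [hτ'u, h2]⟩
          · exact ⟨rowB 0, Finset.mem_univ _, by rw [hτ't, h2]⟩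
        · exact ⟨rowB 0, Finset.mem_univ _, by rw [hτ'B 0 h]⟩
      · by_cases h1 : ∃ t', t' < m ∧ w = rowB t'
        · obtain ⟨t', ht', rfl⟩ := h1
          rw [hτB t' ht']
          rcases Nat.lt_trichotomy t' t with h | h | h
          · rcases Nat.eq_or_lt_of_le (by omega : t' + 1 ≤ t) with h3 | h3
            · rcases hxcs with ⟨h4, _⟩ | ⟨_, h4⟩
              · exact ⟨rowA u, Finset.mem_univ _, by rw [hτ'u, h4, h3]⟩
              · exact ⟨rowB t, Finset.mem_univ _, by rw [hτ't, h4, h3]⟩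
            · exact ⟨rowB (t'+1), Finset.mem_univ _, by rw [hτ'B (t'+1) h3]⟩
          · subst h
            rcases hxcs with ⟨_, h4⟩ | ⟨h4, _⟩
            · exact ⟨rowB t', Finset.mem_univ _, by rw [hτ't, h4]⟩
            · exact ⟨rowA u, Finset.mem_univ _, by rw [hτ'u, h4]⟩
          · exact ⟨rowB t', Finset.mem_univ _, hτ'Btail t' h ht'⟩
        · by_cases h2 : ∃ u', u' < l ∧ w = rowA u'
          · obtain ⟨u', hu', rfl⟩ := h2
            rw [hτA u' hu']
            rw [hτA u' hu'] at hz0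
            have hu'l : u' + 1 < l := by
              rcases Nat.lt_or_ge (u'+1) l with h | h
              · exact h
              · exfalso; apply hz0; congr 1; omega
            rcases Nat.lt_or_ge u' u with h | h
            · exact ⟨rowA u', Finset.mem_univ _, hτ'Ahead u' h⟩
            · exact ⟨rowA (u'+1), Finset.mem_univ _, by
                rw [hτ'Atail (u'+1) (by omega) hu'l]⟩
          · exact ⟨w, Finset.mem_univ _, (hPBPA w h1 h2).2⟩
  -- injectivity via cardinality
  have hNpos : 0 < N := (rowB 0).pos
  have hBin : colB 0 ∈ Finset.image σ Finset.univ :=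
    Finset.mem_image.mpr ⟨rowB 0, Finset.mem_univ _, hσB 0 hm⟩
  have hAnotinσ : colA l ∉ Finset.image σ Finset.univ := by
    intro hc
    obtain ⟨i, _, hi⟩ := Finset.mem_image.mp hc
    exact hAend ⟨i, hi⟩
  have hAinτ : colA l ∈ Finset.image τ Finset.univ := by
    refine Finset.mem_image.mpr ⟨rowA (l-1), Finset.mem_univ _, ?_⟩
    rw [hτA (l-1) (by omega), Nat.sub_add_cancel (by omega)]
  have hBnotinτ : colB 0 ∉ Finset.image τ Finset.univ := by
    intro hc
    obtain ⟨i, _, hi⟩ := Finset.mem_image.mp hc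
    exact hB0 ⟨i, hi⟩
  have hcardσ : (Finset.image σ' Finset.univ).card = N := by
    rw [himσ, Finset.card_insert_of_notMem
      (fun hc => hAnotinσ (Finset.mem_of_mem_erase hc)),
      Finset.card_erase_of_mem hBin,
      Finset.card_image_of_injective _ hσ, Finset.card_univ, Fintype.card_fin]
    omega
  have hcardτ : (Finset.image τ' Finset.univ).card = N := by
    rw [himτ, Finset.card_insert_of_notMem
      (fun hc => hBnotinτ (Finset.mem_of_mem_erase hc)),
      Finset.card_erase_of_mem hAinτ,
      Finset.card_image_of_injective _ hτ, Finset.card_univ, Fintype.card_fin]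
    omega
  have hinjσ' : Function.Injective σ' := by
    have h1 : Set.InjOn σ' (Finset.univ : Finset (Fin N)) :=
      Finset.injOn_of_card_image_eq (by rw [hcardσ, Finset.card_univ, Fintype.card_fin])
    intro a b h
    exact h1 (Finset.mem_coe.mpr (Finset.mem_univ a)) (Finset.mem_coe.mpr (Finset.mem_univ b)) h
  have hinjτ' : Function.Injective τ' := by
    have h1 : Set.InjOn τ' (Finset.univ : Finset (Fin N)) :=
      Finset.injOn_of_card_image_eq (by rw [hcardτ, Finset.card_univ, Fintype.card_fin])
    intro a b h
    exact h1 (Finset.mem_coe.mpr (Finset.mem_univ a)) (Finset.mem_coe.mpr (Finset.mem_univ b)) h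
  -- value identity
  refine ⟨σ', τ', hinjσ', hinjτ', himσ, himτ, ?_⟩
  have key : ∀ i, i ≠ rowB t → i ≠ rowA u →
      x (σ' i) i + x (τ' i) i = x (σ i) i + x (τ i) i := by
    intro i h1 h2
    by_cases hb : ∃ t', t' < m ∧ i = rowB t'
    · obtain ⟨t', ht', rfl⟩ := hb
      have htne : t' ≠ t := fun hc => h1 (congrArg rowB hc)
      rcases Nat.lt_or_ge t' t with h | h
      · rw [hσ'B t' h, hτ'B t' h, hσB t' ht', hτB t' ht']
        all_goals ring
      · have h' : t < t' := by omega
        rw [hσ'Btail t' h' ht', hτ'Btail t' h' ht', hσB t' ht', hτB t' ht']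
        all_goals ring
    · by_cases ha : ∃ u', u' < l ∧ i = rowA u'
      · obtain ⟨u', hu', rfl⟩ := ha
        have hune : u' ≠ u := fun hc => h2 (congrArg rowA hc)
        rcases Nat.lt_or_ge u' u with h | h
        · rw [hσ'Ahead u' h, hτ'Ahead u' h, hσA u' hu', hτA u' hu']
          all_goals ring
        · have h' : u < u' := by omega
          rw [hσ'Atail u' h' hu', hτ'Atail u' h' hu', hσA u' hu', hτA u' hu']
          all_goals ring
      · rw [(hPBPA i hb ha).1, (hPBPA i hb ha).2]
  have hrs : rowA u ∈ Finset.univ.erase (rowB t) :=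
    Finset.mem_erase.mpr ⟨Ne.symm hne_tu, Finset.mem_univ _⟩
  have expand : ∀ F : Fin N → ℝ, (∑ i, F i)
      = F (rowB t) + (F (rowA u) + ∑ i ∈ (Finset.univ.erase (rowB t)).erase (rowA u), F i) := by
    intro F
    rw [Finset.add_sum_erase _ F hrs, Finset.add_sum_erase _ F (Finset.mem_univ (rowB t))]
  have hsame : (∑ i ∈ (Finset.univ.erase (rowB t)).erase (rowA u), (x (σ' i) i + x (τ' i) i))
      = ∑ i ∈ (Finset.univ.erase (rowB t)).erase (rowA u), (x (σ i) i + x (τ i) i) := by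
    apply Finset.sum_congr rfl
    intro i hi
    have h2 := (Finset.mem_erase.mp hi).1
    have h1 := (Finset.mem_erase.mp (Finset.mem_of_mem_erase hi)).1
    exact key i h1 h2
  have hvr : x (σ' (rowB t)) (rowB t) + x (τ' (rowB t)) (rowB t)
      = x (σ (rowB t)) (rowB t) + x (τ (rowB t)) (rowB t) + (x zc (rowB t) - x xc (rowB t)) := by
    rw [hσ't, hτ't, hσB t ht, hτB t ht]
    rcases hxcs with ⟨h3, h4⟩ | ⟨h3, h4⟩ <;> rw [h3, h4] <;> ring
  have hvs : x (σ' (rowA u)) (rowA u) + x (τ' (rowA u)) (rowA u)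
      = x (σ (rowA u)) (rowA u) + x (τ (rowA u)) (rowA u) + (x xc (rowA u) - x zc (rowA u)) := by
    rw [hσ'u, hτ'u, hσA u hu, hτA u hu]
    rcases hzcs with ⟨h3, h4⟩ | ⟨h3, h4⟩ <;> rw [h3, h4] <;> ring
  have e1 := expand (fun i => x (σ' i) i + x (τ' i) i)
  have e2 := expand (fun i => x (σ i) i + x (τ i) i)
  have final : (∑ i, (x (σ' i) i + x (τ' i) i))
      = (∑ i, (x (σ i) i + x (τ i) i))
        + (x zc (rowB t) - x xc (rowB t) + (x xc (rowA u) - x zc (rowA u))) := by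
    rw [e1, e2, hsame, hvr, hvs]
    ring
  have d1 : val x σ' + val x τ' = ∑ i, (x (σ' i) i + x (τ' i) i) := by
    rw [val, val, ← Finset.sum_add_distrib]
  have d2 : val x σ + val x τ = ∑ i, (x (σ i) i + x (τ i) i) := by
    rw [val, val, ← Finset.sum_add_distrib]
  rw [d1, d2, final]

end UPluck

namespace UPluck

variable {N : ℕ}

/-- Bad-case repair: two disjoint alternating paths with differing parity yield a
value-nondecreasing crossing surgery. -/
lemma bad_case (y r : Fin N → ℝ) (σ τ : Fin N → ℤ)
    (hσ : Function.Injective σ) (hτ : Function.Injective τ)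
    (m : ℕ) (colB : ℕ → ℤ) (rowB : ℕ → Fin N) (hm : 0 < m)
    (hσB : ∀ t, t < m → σ (rowB t) = colB t)
    (hτB : ∀ t, t < m → τ (rowB t) = colB (t+1))
    (hBdist : ∀ t t', t ≤ m → t' ≤ m → colB t = colB t' → t = t')
    (hBend : ¬∃ i, σ i = colB m) (hB0 : ¬∃ i, τ i = colB 0)
    (l : ℕ) (colA : ℕ → ℤ) (rowA : ℕ → Fin N) (hl : 0 < l)
    (hσA : ∀ u, u < l → σ (rowA u) = colA u)
    (hτA : ∀ u, u < l → τ (rowA u) = colA (u+1))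
    (hAdist : ∀ u u', u ≤ l → u' ≤ l → colA u = colA u' → u = u')
    (hAend : ¬∃ i, σ i = colA l)
    (hdisj : ∀ t u, t ≤ m → u ≤ l → colB t ≠ colA u)
    (hpar : ((if colA 0 < colB 0 then (1 : ZMod 2) else 0) + (if colA l < colB 0 then 1 else 0))
      ≠ ((if colA 0 < colB m then (1 : ZMod 2) else 0) + (if colA l < colB m then 1 else 0))) :
    ∃ σ' τ' : Fin N → ℤ, Function.Injective σ' ∧ Function.Injective τ' ∧
      Finset.image σ' Finset.univ = insert (colA l) ((Finset.image σ Finset.univ).erase (colB 0)) ∧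
      Finset.image τ' Finset.univ = insert (colB 0) ((Finset.image τ Finset.univ).erase (colA l)) ∧
      val (xcol y r) σ + val (xcol y r) τ ≤ val (xcol y r) σ' + val (xcol y r) τ' := by
  obtain ⟨t, ht, u, hu, hint⟩ := exists_interleave colA colB l m hdisj hpar
  -- the crossing swap
  obtain ⟨xcv, zcv, hxch, hzch, hswap⟩ := crossing_swap_exists
    (y (rowB t)) (r (rowB t)) (y (rowA u)) (r (rowA u))
    (colB t) (colB (t+1)) (colA u) (colA (u+1))
    (hdisj t u (by omega) (by omega))
    (hdisj t (u+1) (by omega) (by omega))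
    (hdisj (t+1) u (by omega) (by omega))
    (hdisj (t+1) (u+1) (by omega) (by omega))
    (fun hc => by have := hAdist u (u+1) (by omega) (by omega) hc; omega)
    hint
  have hxcs : (xcv = colB t ∧ (if xcv = colB t then colB (t+1) else colB t) = colB (t+1)) ∨
      (xcv = colB (t+1) ∧ (if xcv = colB t then colB (t+1) else colB t) = colB t) := by
    rcases hxch with h | h
    · left; exact ⟨h, by rw [if_pos h]⟩
    · by_cases h2 : xcv = colB t
      · left; exact ⟨h2, by rw [if_pos h2]⟩
      · right; exact ⟨h, by rw [if_neg h2]⟩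
  have hzcs : (zcv = colA u ∧ (if zcv = colA u then colA (u+1) else colA u) = colA (u+1)) ∨
      (zcv = colA (u+1) ∧ (if zcv = colA u then colA (u+1) else colA u) = colA u) := by
    rcases hzch with h | h
    · left; exact ⟨h, by rw [if_pos h]⟩
    · by_cases h2 : zcv = colA u
      · left; exact ⟨h2, by rw [if_pos h2]⟩
      · right; exact ⟨h, by rw [if_neg h2]⟩
  obtain ⟨σ', τ', hinj1, hinj2, him1, him2, hval⟩ :=
    crossing_construction (xcol y r) σ τ hσ hτ m colB rowB hm hσB hτB hBdist hBend hB0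
      l colA rowA hl hσA hτA hAdist hAend hdisj t u ht hu
      xcv (if xcv = colB t then colB (t+1) else colB t)
      zcv (if zcv = colA u then colA (u+1) else colA u) hxcs hzcs
  refine ⟨σ', τ', hinj1, hinj2, him1, him2, ?_⟩
  rw [hval]
  have hΔ : 0 ≤ xcol y r zcv (rowB t) - xcol y r xcv (rowB t)
      + (xcol y r xcv (rowA u) - xcol y r zcv (rowA u)) := by
    simpa only [xcol] using hswap
  linarith

end UPluck

namespace UPluck

variable {N : ℕ}

lemma mem_image_iff {σ : Fin N → ℤ} {S : Finset ℤ}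
    (h : Finset.image σ Finset.univ = S) (z : ℤ) : (∃ i, σ i = z) ↔ z ∈ S := by
  rw [← h]
  simp only [Finset.mem_image, Finset.mem_univ, true_and]

lemma mem_sdiff_pair {z u v : ℤ} (hN : 0 < N) :
    z ∈ (Finset.Icc (1:ℤ) ((N:ℤ)+2)) \ {u, v} ↔ (1 ≤ z ∧ z ≤ (N:ℤ)+2) ∧ ¬(z = u ∨ z = v) := by
  simp only [Finset.mem_sdiff, Finset.mem_Icc, Finset.mem_insert, Finset.mem_singleton]

/-- `Y ≤ X` : `Q c d + Q a b ≤ Q b d + Q a c`. -/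
lemma ineq_Y (y r : Fin N → ℝ) (a b c d : ℤ)
    (ha : 1 ≤ a) (hab : a < b) (hbc : b < c) (hcd : c < d) (hd : d ≤ (N:ℤ)+2) :
    upX (xcol y r) (omitTwo N 1 c d) + upX (xcol y r) (omitTwo N 1 a b)
      ≤ upX (xcol y r) (omitTwo N 1 b d) + upX (xcol y r) (omitTwo N 1 a c) := by
  classical
  set x := xcol y r with hx
  obtain ⟨π₁, hπ₁⟩ := exists_attain x (omitTwo N 1 c d)
  obtain ⟨π₂, hπ₂⟩ := exists_attain x (omitTwo N 1 a b)
  set σ : Fin N → ℤ := (omitTwo N 1 c d) ∘ π₁ with hσdef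
  set τ : Fin N → ℤ := (omitTwo N 1 a b) ∘ π₂ with hτdef
  have hσ : Function.Injective σ := comp_inj _ (omitTwo_injective c d hcd) π₁
  have hτ : Function.Injective τ := comp_inj _ (omitTwo_injective a b hab) π₂
  have himσ : Finset.image σ Finset.univ = (Finset.Icc (1:ℤ) ((N:ℤ)+2)) \ {c, d} := by
    rw [hσdef, comp_image, omitTwo_image c d (by omega) hcd (by omega)]
  have himτ : Finset.image τ Finset.univ = (Finset.Icc (1:ℤ) ((N:ℤ)+2)) \ {a, b} := by
    rw [hτdef, comp_image, omitTwo_image a b (by omega) hab (by omega)]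
  have hNpos : 0 < N := by
    by_contra hc
    push_neg at hc
    interval_cases N
    omega
  have hbσ : ∃ i, σ i = b := (mem_image_iff himσ b).mpr (by rw [mem_sdiff_pair hNpos]; omega)
  have hbτ : ¬∃ i, τ i = b := by
    rw [mem_image_iff himτ b, mem_sdiff_pair hNpos]
    omega
  have haσ : ∃ i, σ i = a := (mem_image_iff himσ a).mpr (by rw [mem_sdiff_pair hNpos]; omega)
  have haτ : ¬∃ i, τ i = a := by
    rw [mem_image_iff himτ a, mem_sdiff_pair hNpos]
    omega
  -- path from b
  obtain ⟨m, colB, rowB, hm, hcB0, hσB, hτB, hBend, hBdist⟩ := exists_path σ τ hσ hτ b hbσ hbτ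
  have hBm : colB m = c ∨ colB m = d := by
    have h1 : ∃ i, τ i = colB m := by
      refine ⟨rowB (m-1), ?_⟩
      rw [hτB (m-1) (by omega), Nat.sub_add_cancel (by omega)]
    rw [mem_image_iff himτ, mem_sdiff_pair hNpos] at h1
    have h2 := hBend
    rw [mem_image_iff himσ, mem_sdiff_pair hNpos] at h2
    omega
  have hQval : upX x (omitTwo N 1 c d) + upX x (omitTwo N 1 a b) = val x σ + val x τ := by
    rw [hπ₁, hπ₂]
  rcases hBm with hBm | hBm
  · -- good case : endpoint c, direct exchange
    obtain ⟨σ', τ', hi1, hi2, him1, him2, hveq⟩ :=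
      exchange_path x σ τ hσ hτ b hbτ m colB rowB hm hcB0 hσB hτB hBend hBdist
    rw [hQval, ← hveq]
    have e1 : Finset.image σ' Finset.univ = Finset.image (omitTwo N 1 b d) Finset.univ := by
      rw [him1, himσ, hBm, omitTwo_image b d (by omega) (by omega) (by omega)]
      ext z
      simp only [Finset.mem_insert, Finset.mem_erase, Finset.mem_sdiff, Finset.mem_Icc,
        Finset.mem_singleton]
      omega
    have e2 : Finset.image τ' Finset.univ = Finset.image (omitTwo N 1 a c) Finset.univ := by
      rw [him2, himτ, hBm, omitTwo_image a c (by omega) (by omega) (by omega)]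
      ext z
      simp only [Finset.mem_insert, Finset.mem_erase, Finset.mem_sdiff, Finset.mem_Icc,
        Finset.mem_singleton]
      omega
    exact add_le_add (val_le_upX x _ σ' hi1 e1) (val_le_upX x _ τ' hi2 e2)
  · -- bad case : endpoint d ; take the path from a, whose endpoint must be c
    obtain ⟨l, colA, rowA, hl, hcA0, hσA, hτA, hAend, hAdist⟩ := exists_path σ τ hσ hτ a haσ haτ
    have hdisj : ∀ t u, t ≤ m → u ≤ l → colB t ≠ colA u := by
      intro t u h1 h2
      exact (paths_disjoint σ τ hτ b a (by omega) hbτ haτ m l colB colA rowB rowA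
        hcB0 hcA0 hσB hτB hσA hτA) t u h1 h2
    have hAl : colA l = c := by
      have h1 : ∃ i, τ i = colA l := by
        refine ⟨rowA (l-1), ?_⟩
        rw [hτA (l-1) (by omega), Nat.sub_add_cancel (by omega)]
      rw [mem_image_iff himτ, mem_sdiff_pair hNpos] at h1
      have h2 := hAend
      rw [mem_image_iff himσ, mem_sdiff_pair hNpos] at h2
      have h3 := hdisj m l (le_refl m) (le_refl l)
      rw [hBm] at h3
      omega
    have hpar : ((if colA 0 < colB 0 then (1 : ZMod 2) else 0) + (if colA l < colB 0 then 1 else 0))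
        ≠ ((if colA 0 < colB m then (1 : ZMod 2) else 0) + (if colA l < colB m then 1 else 0)) := by
      rw [hcA0, hcB0, hAl, hBm]
      rw [if_pos (by omega : a < b), if_neg (by omega : ¬ c < b),
        if_pos (by omega : a < d), if_pos (by omega : c < d)]
      decide
    obtain ⟨σ', τ', hi1, hi2, him1, him2, hvle⟩ :=
      bad_case y r σ τ hσ hτ m colB rowB hm hσB hτB hBdist hBend
        (by rw [hcB0]; exact hbτ)
        l colA rowA hl hσA hτA hAdist hAend hdisj hpar
    rw [hQval]
    refine le_trans hvle ?_
    have e1 : Finset.image σ' Finset.univ = Finset.image (omitTwo N 1 b d) Finset.univ := by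
      rw [him1, himσ, hAl, hcB0, omitTwo_image b d (by omega) (by omega) (by omega)]
      ext z
      simp only [Finset.mem_insert, Finset.mem_erase, Finset.mem_sdiff, Finset.mem_Icc,
        Finset.mem_singleton]
      omega
    have e2 : Finset.image τ' Finset.univ = Finset.image (omitTwo N 1 a c) Finset.univ := by
      rw [him2, himτ, hAl, hcB0, omitTwo_image a c (by omega) (by omega) (by omega)]
      ext z
      simp only [Finset.mem_insert, Finset.mem_erase, Finset.mem_sdiff, Finset.mem_Icc,
        Finset.mem_singleton]
      omega
    exact add_le_add (val_le_upX x _ σ' hi1 e1) (val_le_upX x _ τ' hi2 e2)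

end UPluck

namespace UPluck

variable {N : ℕ}

/-- `Z ≤ X` : `Q a d + Q b c ≤ Q b d + Q a c`. -/
lemma ineq_Z (y r : Fin N → ℝ) (a b c d : ℤ)
    (ha : 1 ≤ a) (hab : a < b) (hbc : b < c) (hcd : c < d) (hd : d ≤ (N:ℤ)+2) :
    upX (xcol y r) (omitTwo N 1 a d) + upX (xcol y r) (omitTwo N 1 b c)
      ≤ upX (xcol y r) (omitTwo N 1 b d) + upX (xcol y r) (omitTwo N 1 a c) := by
  classical
  set x := xcol y r with hx
  obtain ⟨π₁, hπ₁⟩ := exists_attain x (omitTwo N 1 b c)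
  obtain ⟨π₂, hπ₂⟩ := exists_attain x (omitTwo N 1 a d)
  set σ : Fin N → ℤ := (omitTwo N 1 b c) ∘ π₁ with hσdef
  set τ : Fin N → ℤ := (omitTwo N 1 a d) ∘ π₂ with hτdef
  have hσ : Function.Injective σ := comp_inj _ (omitTwo_injective b c hbc) π₁
  have hτ : Function.Injective τ := comp_inj _ (omitTwo_injective a d (by omega)) π₂
  have himσ : Finset.image σ Finset.univ = (Finset.Icc (1:ℤ) ((N:ℤ)+2)) \ {b, c} := by
    rw [hσdef, comp_image, omitTwo_image b c (by omega) hbc (by omega)]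
  have himτ : Finset.image τ Finset.univ = (Finset.Icc (1:ℤ) ((N:ℤ)+2)) \ {a, d} := by
    rw [hτdef, comp_image, omitTwo_image a d (by omega) (by omega) (by omega)]
  have hNpos : 0 < N := by
    by_contra hc
    push_neg at hc
    interval_cases N
    omega
  have hdσ : ∃ i, σ i = d := (mem_image_iff himσ d).mpr (by rw [mem_sdiff_pair hNpos]; omega)
  have hdτ : ¬∃ i, τ i = d := by
    rw [mem_image_iff himτ d, mem_sdiff_pair hNpos]
    omega
  have haσ : ∃ i, σ i = a := (mem_image_iff himσ a).mpr (by rw [mem_sdiff_pair hNpos]; omega)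
  have haτ : ¬∃ i, τ i = a := by
    rw [mem_image_iff himτ a, mem_sdiff_pair hNpos]
    omega
  obtain ⟨m, colB, rowB, hm, hcB0, hσB, hτB, hBend, hBdist⟩ := exists_path σ τ hσ hτ d hdσ hdτ
  have hBm : colB m = b ∨ colB m = c := by
    have h1 : ∃ i, τ i = colB m := by
      refine ⟨rowB (m-1), ?_⟩
      rw [hτB (m-1) (by omega), Nat.sub_add_cancel (by omega)]
    rw [mem_image_iff himτ, mem_sdiff_pair hNpos] at h1
    have h2 := hBend
    rw [mem_image_iff himσ, mem_sdiff_pair hNpos] at h2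
    omega
  have hQval : upX x (omitTwo N 1 a d) + upX x (omitTwo N 1 b c) = val x σ + val x τ := by
    rw [hπ₁, hπ₂]
    ring
  rcases hBm with hBm | hBm
  swap
  · -- good case : endpoint c, direct exchange
    obtain ⟨σ', τ', hi1, hi2, him1, him2, hveq⟩ :=
      exchange_path x σ τ hσ hτ d hdτ m colB rowB hm hcB0 hσB hτB hBend hBdist
    rw [hQval, ← hveq]
    have e1 : Finset.image σ' Finset.univ = Finset.image (omitTwo N 1 b d) Finset.univ := by
      rw [him1, himσ, hBm, omitTwo_image b d (by omega) (by omega) (by omega)]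
      ext z
      simp only [Finset.mem_insert, Finset.mem_erase, Finset.mem_sdiff, Finset.mem_Icc,
        Finset.mem_singleton]
      omega
    have e2 : Finset.image τ' Finset.univ = Finset.image (omitTwo N 1 a c) Finset.univ := by
      rw [him2, himτ, hBm, omitTwo_image a c (by omega) (by omega) (by omega)]
      ext z
      simp only [Finset.mem_insert, Finset.mem_erase, Finset.mem_sdiff, Finset.mem_Icc,
        Finset.mem_singleton]
      omega
    exact add_le_add (val_le_upX x _ σ' hi1 e1) (val_le_upX x _ τ' hi2 e2)
  · -- bad case : endpoint b ; take the path from a, whose endpoint must be c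
    obtain ⟨l, colA, rowA, hl, hcA0, hσA, hτA, hAend, hAdist⟩ := exists_path σ τ hσ hτ a haσ haτ
    have hdisj : ∀ t u, t ≤ m → u ≤ l → colB t ≠ colA u := by
      intro t u h1 h2
      exact (paths_disjoint σ τ hτ d a (by omega) hdτ haτ m l colB colA rowB rowA
        hcB0 hcA0 hσB hτB hσA hτA) t u h1 h2
    have hAl : colA l = c := by
      have h1 : ∃ i, τ i = colA l := by
        refine ⟨rowA (l-1), ?_⟩
        rw [hτA (l-1) (by omega), Nat.sub_add_cancel (by omega)]
      rw [mem_image_iff himτ, mem_sdiff_pair hNpos] at h1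
      have h2 := hAend
      rw [mem_image_iff himσ, mem_sdiff_pair hNpos] at h2
      have h3 := hdisj m l (le_refl m) (le_refl l)
      rw [hBm] at h3
      omega
    have hpar : ((if colA 0 < colB 0 then (1 : ZMod 2) else 0) + (if colA l < colB 0 then 1 else 0))
        ≠ ((if colA 0 < colB m then (1 : ZMod 2) else 0) + (if colA l < colB m then 1 else 0)) := by
      rw [hcA0, hcB0, hAl, hBm]
      rw [if_pos (by omega : a < d), if_pos (by omega : c < d),
        if_pos (by omega : a < b), if_neg (by omega : ¬ c < b)]
      decide
    obtain ⟨σ', τ', hi1, hi2, him1, him2, hvle⟩ :=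
      bad_case y r σ τ hσ hτ m colB rowB hm hσB hτB hBdist hBend
        (by rw [hcB0]; exact hdτ)
        l colA rowA hl hσA hτA hAdist hAend hdisj hpar
    rw [hQval]
    refine le_trans hvle ?_
    have e1 : Finset.image σ' Finset.univ = Finset.image (omitTwo N 1 b d) Finset.univ := by
      rw [him1, himσ, hAl, hcB0, omitTwo_image b d (by omega) (by omega) (by omega)]
      ext z
      simp only [Finset.mem_insert, Finset.mem_erase, Finset.mem_sdiff, Finset.mem_Icc,
        Finset.mem_singleton]
      omega
    have e2 : Finset.image τ' Finset.univ = Finset.image (omitTwo N 1 a c) Finset.univ := by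
      rw [him2, himτ, hAl, hcB0, omitTwo_image a c (by omega) (by omega) (by omega)]
      ext z
      simp only [Finset.mem_insert, Finset.mem_erase, Finset.mem_sdiff, Finset.mem_Icc,
        Finset.mem_singleton]
      omega
    exact add_le_add (val_le_upX x _ σ' hi1 e1) (val_le_upX x _ τ' hi2 e2)

/-- `X ≤ max(Y, Z)`. -/
lemma ineq_X (y r : Fin N → ℝ) (a b c d : ℤ)
    (ha : 1 ≤ a) (hab : a < b) (hbc : b < c) (hcd : c < d) (hd : d ≤ (N:ℤ)+2) :
    upX (xcol y r) (omitTwo N 1 b d) + upX (xcol y r) (omitTwo N 1 a c)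
      ≤ max (upX (xcol y r) (omitTwo N 1 c d) + upX (xcol y r) (omitTwo N 1 a b))
          (upX (xcol y r) (omitTwo N 1 a d) + upX (xcol y r) (omitTwo N 1 b c)) := by
  classical
  set x := xcol y r with hx
  obtain ⟨π₁, hπ₁⟩ := exists_attain x (omitTwo N 1 b d)
  obtain ⟨π₂, hπ₂⟩ := exists_attain x (omitTwo N 1 a c)
  set σ : Fin N → ℤ := (omitTwo N 1 b d) ∘ π₁ with hσdef
  set τ : Fin N → ℤ := (omitTwo N 1 a c) ∘ π₂ with hτdef
  have hσ : Function.Injective σ := comp_inj _ (omitTwo_injective b d (by omega)) π₁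
  have hτ : Function.Injective τ := comp_inj _ (omitTwo_injective a c (by omega)) π₂
  have himσ : Finset.image σ Finset.univ = (Finset.Icc (1:ℤ) ((N:ℤ)+2)) \ {b, d} := by
    rw [hσdef, comp_image, omitTwo_image b d (by omega) (by omega) (by omega)]
  have himτ : Finset.image τ Finset.univ = (Finset.Icc (1:ℤ) ((N:ℤ)+2)) \ {a, c} := by
    rw [hτdef, comp_image, omitTwo_image a c (by omega) (by omega) (by omega)]
  have hNpos : 0 < N := by
    by_contra hc
    push_neg at hc
    interval_cases N
    omega
  have hcσ : ∃ i, σ i = c := (mem_image_iff himσ c).mpr (by rw [mem_sdiff_pair hNpos]; omega)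
  have hcτ : ¬∃ i, τ i = c := by
    rw [mem_image_iff himτ c, mem_sdiff_pair hNpos]
    omega
  obtain ⟨m, colB, rowB, hm, hcB0, hσB, hτB, hBend, hBdist⟩ := exists_path σ τ hσ hτ c hcσ hcτ
  have hBm : colB m = b ∨ colB m = d := by
    have h1 : ∃ i, τ i = colB m := by
      refine ⟨rowB (m-1), ?_⟩
      rw [hτB (m-1) (by omega), Nat.sub_add_cancel (by omega)]
    rw [mem_image_iff himτ, mem_sdiff_pair hNpos] at h1
    have h2 := hBend
    rw [mem_image_iff himσ, mem_sdiff_pair hNpos] at h2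
    omega
  have hQval : upX x (omitTwo N 1 b d) + upX x (omitTwo N 1 a c) = val x σ + val x τ := by
    rw [hπ₁, hπ₂]
  obtain ⟨σ', τ', hi1, hi2, him1, him2, hveq⟩ :=
    exchange_path x σ τ hσ hτ c hcτ m colB rowB hm hcB0 hσB hτB hBend hBdist
  rcases hBm with hBm | hBm
  · refine le_trans ?_ (le_max_left _ _)
    rw [hQval, ← hveq]
    have e1 : Finset.image σ' Finset.univ = Finset.image (omitTwo N 1 c d) Finset.univ := by
      rw [him1, himσ, hBm, omitTwo_image c d (by omega) (by omega) (by omega)]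
      ext z
      simp only [Finset.mem_insert, Finset.mem_erase, Finset.mem_sdiff, Finset.mem_Icc,
        Finset.mem_singleton]
      omega
    have e2 : Finset.image τ' Finset.univ = Finset.image (omitTwo N 1 a b) Finset.univ := by
      rw [him2, himτ, hBm, omitTwo_image a b (by omega) (by omega) (by omega)]
      ext z
      simp only [Finset.mem_insert, Finset.mem_erase, Finset.mem_sdiff, Finset.mem_Icc,
        Finset.mem_singleton]
      omega
    exact add_le_add (val_le_upX x _ σ' hi1 e1) (val_le_upX x _ τ' hi2 e2)
  · refine le_trans ?_ (le_max_right _ _)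
    rw [hQval, ← hveq]
    have e1 : Finset.image σ' Finset.univ = Finset.image (omitTwo N 1 b c) Finset.univ := by
      rw [him1, himσ, hBm, omitTwo_image b c (by omega) (by omega) (by omega)]
      ext z
      simp only [Finset.mem_insert, Finset.mem_erase, Finset.mem_sdiff, Finset.mem_Icc,
        Finset.mem_singleton]
      omega
    have e2 : Finset.image τ' Finset.univ = Finset.image (omitTwo N 1 a d) Finset.univ := by
      rw [him2, himτ, hBm, omitTwo_image a d (by omega) (by omega) (by omega)]
      ext z
      simp only [Finset.mem_insert, Finset.mem_erase, Finset.mem_sdiff, Finset.mem_Icc,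
        Finset.mem_singleton]
      omega
    have := add_le_add (val_le_upX x _ σ' hi1 e1) (val_le_upX x _ τ' hi2 e2)
    linarith

end UPluck

/-- The conditional ultradiscrete Plücker relation. -/
theorem conditional_uPlucker (N : ℕ) (hN : 2 ≤ N) (y r : Fin N → ℝ)
    (k₁ k₂ k₃ : ℤ) (hk₁ : 1 ≤ k₁) (h₁₂ : k₁ < k₂) (h₂₃ : k₂ < k₃) (hk₃ : k₃ ≤ (N : ℤ) + 1) :
    upX (xcol y r) (omitOne N 1 k₂) + upX (xcol y r) (omitTwo N 1 k₁ k₃) =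
      max (upX (xcol y r) (omitOne N 1 k₃) + upX (xcol y r) (omitTwo N 1 k₁ k₂))
          (upX (xcol y r) (omitOne N 1 k₁) + upX (xcol y r) (omitTwo N 1 k₂ k₃)) := by
  rw [UPluck.omitOne_eq_omitTwo k₂, UPluck.omitOne_eq_omitTwo k₃, UPluck.omitOne_eq_omitTwo k₁]
  apply le_antisymm
  · exact UPluck.ineq_X y r k₁ k₂ k₃ ((N:ℤ)+2) hk₁ h₁₂ h₂₃ (by omega) (by omega)
  · apply max_le
    · exact UPluck.ineq_Y y r k₁ k₂ k₃ ((N:ℤ)+2) hk₁ h₁₂ h₂₃ (by omega) (by omega)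
    · exact UPluck.ineq_Z y r k₁ k₂ k₃ ((N:ℤ)+2) hk₁ h₁₂ h₂₃ (by omega) (by omega)
end

section
/- (Lemma 1) Let N ≥ 2 be an integer, let y_1,…,y_N and r_1,…,r_N be real numbers, let x_j be the N-dimensional vector whose i-th entry is |y_i + j r_i|, and let 1 ≤ k_1 < k_2 < k_3 ≤ N+1 be integers. If the inequality max[x_1 … x̂_{k_2} … x_{N+1}] + max[x_1 … x̂_{k_1} … x̂_{k_3} … x_{N+2}] ≥ max[x_1 … x̂_{k_3} … x_{N+1}] + max[x_1 … x̂_{k_1} … x̂_{k_2} … x_{N+2}] holds, then the equality max[x_1 … x̂_{k_2} … x_{N+1}] + max[x_1 … x̂_{k_1} … x̂_{k_3} … x_{N+2}] = max( max[x_1 … x̂_{k_3} … x_{N+1}] + max[x_1 … x̂_{k_1} … x̂_{k_2} … x_{N+2}], max[x_1 … x̂_{k_1} … x_{N+1}] + max[x_1 … x̂_{k_2} … x̂_{k_3} … x_{N+2}] ) holds. -/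
section Lemma1Aux
open Function Set


lemma omitOne_inj (N : ℕ) (a k : ℤ) : Injective (omitOne N a k) := by
  intro i j h
  simp only [omitOne] at h
  have : (i.1 : ℤ) = j.1 := by split_ifs at h <;> omega
  exact Fin.ext (by exact_mod_cast this)

lemma omitTwo_inj (N : ℕ) (a k₁ k₂ : ℤ) : Injective (omitTwo N a k₁ k₂) := by
  intro i j h
  simp only [omitTwo] at h
  have : (i.1 : ℤ) = j.1 := by split_ifs at h <;> omega
  exact Fin.ext (by exact_mod_cast this)

lemma omitOne_range (N : ℕ) (a k : ℤ) (h1 : a ≤ k) (h2 : k ≤ a + N) :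
    range (omitOne N a k) = {z | a ≤ z ∧ z ≤ a + N ∧ z ≠ k} := by
  ext z
  simp only [mem_range, mem_setOf_eq, omitOne]
  constructor
  · rintro ⟨j, rfl⟩
    have hj := j.2
    split_ifs with h <;> omega
  · rintro ⟨hz1, hz2, hz3⟩
    rcases lt_or_gt_of_ne hz3 with h | h
    · refine ⟨⟨(z - a).toNat, by omega⟩, ?_⟩
      simp only [Fin.val_mk]
      split_ifs with h' <;> omega
    · refine ⟨⟨(z - a - 1).toNat, by omega⟩, ?_⟩
      simp only [Fin.val_mk]
      split_ifs with h' <;> omega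

lemma omitTwo_range (N : ℕ) (a k₁ k₂ : ℤ) (h1 : a ≤ k₁) (h12 : k₁ < k₂) (h2 : k₂ ≤ a + N + 1) :
    range (omitTwo N a k₁ k₂) = {z | a ≤ z ∧ z ≤ a + N + 1 ∧ z ≠ k₁ ∧ z ≠ k₂} := by
  ext z
  simp only [mem_range, mem_setOf_eq, omitTwo]
  constructor
  · rintro ⟨j, rfl⟩
    have hj := j.2
    split_ifs with h h' <;> omega
  · rintro ⟨hz1, hz2, hz3, hz4⟩
    rcases lt_trichotomy z k₁ with h | h | h
    · refine ⟨⟨(z - a).toNat, by omega⟩, ?_⟩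
      simp only [Fin.val_mk]
      split_ifs <;> omega
    · omega
    rcases lt_trichotomy z k₂ with h' | h' | h'
    · refine ⟨⟨(z - a - 1).toNat, by omega⟩, ?_⟩
      simp only [Fin.val_mk]
      split_ifs <;> omega
    · omega
    · refine ⟨⟨(z - a - 2).toNat, by omega⟩, ?_⟩
      simp only [Fin.val_mk]
      split_ifs <;> omega


lemma exchange_core {N : ℕ} (σ σ' : Fin N → ℤ) (hσ : Injective σ) (hσ' : Injective σ')
    (s : ℤ) (hs : s ∈ range σ) (hs' : s ∉ range σ') :
    ∃ t, t ∈ range σ' ∧ t ∉ range σ ∧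
      ∃ τ τ' : Fin N → ℤ, Injective τ ∧ Injective τ' ∧
        range τ = (range σ \ {s}) ∪ {t} ∧
        range τ' = (range σ' \ {t}) ∪ {s} ∧
        ∀ i, (τ i = σ i ∧ τ' i = σ' i) ∨ (τ i = σ' i ∧ τ' i = σ i) := by
  classical
  set F : ℤ → ℤ := fun z => if h : ∃ i, σ i = z then σ' h.choose else z with hF
  have hFσ : ∀ i, F (σ i) = σ' i := by
    intro i
    have h : ∃ j, σ j = σ i := ⟨i, rfl⟩
    simp only [hF, dif_pos h]
    exact congrArg σ' (hσ h.choose_spec)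
  set seq : ℕ → ℤ := fun n => F^[n] s with hseq
  have seq_succ : ∀ n, seq (n + 1) = F (seq n) := fun n => Function.iterate_succ_apply' F n s
  have seq0 : seq 0 = s := rfl
  have stepi : ∀ n i, σ i = seq n → σ' i = seq (n + 1) := by
    intro n i hi
    rw [seq_succ, ← hi, hFσ]
  have cancel : ∀ a b, seq a ∈ range σ → seq b ∈ range σ → seq (a + 1) = seq (b + 1) →
      seq a = seq b := by
    rintro a b ⟨i, hi⟩ ⟨j, hj⟩ h
    have : σ' i = σ' j := by rw [stepi a i hi, stepi b j hj, h]
    rw [← hi, ← hj, hσ' this]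
  have noRepeat : ∀ a b, a < b → (∀ n, n < b → seq n ∈ range σ) → seq a ≠ seq b := by
    intro a
    induction a with
    | zero =>
      intro b hb hmem heq
      obtain ⟨b', rfl⟩ : ∃ b', b = b' + 1 := ⟨b - 1, by omega⟩
      obtain ⟨i, hi⟩ := hmem b' (by omega)
      exact hs' ⟨i, by rw [stepi b' i hi, ← heq, seq0]⟩
    | succ a ih =>
      intro b hb hmem heq
      obtain ⟨b', rfl⟩ : ∃ b', b = b' + 1 := ⟨b - 1, by omega⟩
      have h2 := cancel a b' (hmem a (by omega)) (hmem b' (by omega)) heq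
      exact ih b' (by omega) (fun n hn => hmem n (by omega)) h2
  have hm : ∃ m, seq m ∉ range σ := by
    by_contra h
    push_neg at h
    have hinj : Injective seq := by
      intro a b hab
      rcases Nat.lt_trichotomy a b with h1 | h1 | h1
      · exact absurd hab (noRepeat a b h1 fun n _ => h n)
      · exact h1
      · exact absurd hab.symm (noRepeat b a h1 fun n _ => h n)
    exact Set.infinite_range_of_injective hinj
      ((Set.finite_range σ).subset (by rintro _ ⟨n, rfl⟩; exact h n))
  obtain ⟨m, hmspec, hmem⟩ : ∃ m, seq m ∉ range σ ∧ ∀ n, n < m → seq n ∈ range σ :=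
    ⟨Nat.find hm, Nat.find_spec hm, fun n hn => not_not.mp (Nat.find_min hm hn)⟩
  have hm1 : 1 ≤ m := by
    by_contra h
    have h0 : m = 0 := by omega
    rw [h0, seq0] at hmspec
    exact hmspec hs
  have seqinj : ∀ a b, a ≤ m → b ≤ m → seq a = seq b → a = b := by
    intro a b ha hb heq
    rcases Nat.lt_trichotomy a b with h1 | h1 | h1
    · exact absurd heq (noRepeat a b h1 fun n hn => hmem n (by omega))
    · exact h1
    · exact absurd heq.symm (noRepeat b a h1 fun n hn => hmem n (by omega))
  have htmem : seq m ∈ range σ' := by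
    obtain ⟨i, hi⟩ := hmem (m - 1) (by omega)
    have h2 := stepi (m - 1) i hi
    rw [Nat.sub_add_cancel hm1] at h2
    exact ⟨i, h2⟩
  set p : Fin N → Prop := fun i => ∃ n, n < m ∧ σ i = seq n with hp
  have pq : ∀ i, p i ↔ ∃ n, 1 ≤ n ∧ n ≤ m ∧ σ' i = seq n := by
    intro i
    constructor
    · rintro ⟨n, hn, hi⟩
      exact ⟨n + 1, by omega, by omega, stepi n i hi⟩
    · rintro ⟨n, h1, h2, hi⟩
      obtain ⟨n', rfl⟩ : ∃ n', n = n' + 1 := ⟨n - 1, by omega⟩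
      obtain ⟨j, hj⟩ := hmem n' (by omega)
      have h3 : σ' j = σ' i := by rw [stepi n' j hj, hi]
      exact ⟨n', by omega, by rw [← hσ' h3]; exact hj⟩
  set τ : Fin N → ℤ := fun i => if p i then σ' i else σ i with hτ
  set τ' : Fin N → ℤ := fun i => if p i then σ i else σ' i with hτ'
  refine ⟨seq m, htmem, hmspec, τ, τ', ?_, ?_, ?_, ?_, ?_⟩
  · -- Injective τ
    intro i j hij
    by_cases hi : p i <;> by_cases hj : p j <;>
      simp only [hτ, hi, hj, if_true, if_false] at hij
    · exact hσ' hij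
    · exfalso
      obtain ⟨n, h1, h2, h3⟩ := (pq i).mp hi
      rcases eq_or_lt_of_le h2 with h4 | h4
      · exact hmspec ⟨j, by rw [← hij, h3, h4]⟩
      · exact hj ⟨n, h4, by rw [← hij, h3]⟩
    · exfalso
      obtain ⟨n, h1, h2, h3⟩ := (pq j).mp hj
      rcases eq_or_lt_of_le h2 with h4 | h4
      · exact hmspec ⟨i, by rw [hij, h3, h4]⟩
      · exact hi ⟨n, h4, by rw [hij, h3]⟩
    · exact hσ hij
  · -- Injective τ'
    intro i j hij
    by_cases hi : p i <;> by_cases hj : p j <;>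
      simp only [hτ', hi, hj, if_true, if_false] at hij
    · exact hσ hij
    · exfalso
      obtain ⟨n, h1, h2⟩ := hi
      rcases Nat.eq_zero_or_pos n with h3 | h3
      · exact hs' ⟨j, by rw [← hij, h2, h3, seq0]⟩
      · exact hj ((pq j).mpr ⟨n, h3, by omega, by rw [← hij, h2]⟩)
    · exfalso
      obtain ⟨n, h1, h2⟩ := hj
      rcases Nat.eq_zero_or_pos n with h3 | h3
      · exact hs' ⟨i, by rw [hij, h2, h3, seq0]⟩
      · exact hi ((pq i).mpr ⟨n, h3, by omega, by rw [hij, h2]⟩)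
    · exact hσ' hij
  · -- range τ
    ext z
    simp only [Set.mem_union, Set.mem_diff, Set.mem_singleton_iff, Set.mem_range]
    constructor
    · rintro ⟨i, rfl⟩
      by_cases hi : p i
      · simp only [hτ, hi, if_true]
        obtain ⟨n, h1, h2, h3⟩ := (pq i).mp hi
        rcases eq_or_lt_of_le h2 with h4 | h4
        · right; rw [h3, h4]
        · left
          refine ⟨by rw [h3]; exact hmem n h4, ?_⟩
          rw [h3]
          intro hc
          have := seqinj n 0 (by omega) (by omega) (by rw [hc, seq0])
          omega
      · simp only [hτ, hi, if_false]
        exact Or.inl ⟨⟨i, rfl⟩, fun hc => hi ⟨0, by omega, by rw [hc, seq0]⟩⟩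
    · rintro (⟨⟨i, rfl⟩, hne⟩ | rfl)
      · by_cases hi : p i
        · obtain ⟨n, h1, h2⟩ := hi
          have hn0 : n ≠ 0 := fun hc => hne (by rw [h2, hc, seq0])
          obtain ⟨j, hj⟩ := hmem (n - 1) (by omega)
          have hj' : σ' j = seq n := by
            have h3 := stepi (n - 1) j hj
            rwa [Nat.sub_add_cancel (by omega)] at h3
          have hpj : p j := ⟨n - 1, by omega, hj⟩
          exact ⟨j, by simp only [hτ, hpj, if_true]; rw [hj', h2]⟩
        · exact ⟨i, by simp only [hτ, hi, if_false]⟩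
      · obtain ⟨j, hj⟩ := hmem (m - 1) (by omega)
        have hj' : σ' j = seq m := by
          have h3 := stepi (m - 1) j hj
          rwa [Nat.sub_add_cancel hm1] at h3
        have hpj : p j := ⟨m - 1, by omega, hj⟩
        exact ⟨j, by simp only [hτ, hpj, if_true]; exact hj'⟩
  · -- range τ'
    ext z
    simp only [Set.mem_union, Set.mem_diff, Set.mem_singleton_iff, Set.mem_range]
    constructor
    · rintro ⟨i, rfl⟩
      by_cases hi : p i
      · simp only [hτ', hi, if_true]
        obtain ⟨n, h1, h2⟩ := hi
        rcases Nat.eq_zero_or_pos n with h3 | h3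
        · right; rw [h2, h3, seq0]
        · left
          constructor
          · obtain ⟨j, hj⟩ := hmem (n - 1) (by omega)
            have hj' : σ' j = seq n := by
              have h4 := stepi (n - 1) j hj
              rwa [Nat.sub_add_cancel h3] at h4
            exact ⟨j, by rw [hj', h2]⟩
          · rw [h2]
            intro hc
            have := seqinj n m (by omega) le_rfl hc
            omega
      · simp only [hτ', hi, if_false]
        exact Or.inl ⟨⟨i, rfl⟩, fun hc => hi ((pq i).mpr ⟨m, hm1, le_rfl, hc⟩)⟩
    · rintro (⟨⟨i, rfl⟩, hne⟩ | rfl)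
      · by_cases hi : p i
        · obtain ⟨n, h1, h2, h3⟩ := (pq i).mp hi
          have hn : n < m := lt_of_le_of_ne h2 fun hc => hne (by rw [h3, hc])
          obtain ⟨j, hj⟩ := hmem n hn
          have hpj : p j := ⟨n, hn, hj⟩
          exact ⟨j, by simp only [hτ', hpj, if_true]; rw [hj, h3]⟩
        · exact ⟨i, by simp only [hτ', hi, if_false]⟩
      · obtain ⟨i, hi⟩ := hs
        have hpi : p i := ⟨0, by omega, by rw [hi, seq0]⟩
        exact ⟨i, by simp only [hτ', hpi, if_true]; exact hi⟩
  · intro i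
    by_cases hi : p i
    · right; constructor <;> simp [hτ, hτ', hi]
    · left; constructor <;> simp [hτ, hτ', hi]

lemma upX_attain {N : ℕ} (x : ℤ → Fin N → ℝ) (c : Fin N → ℤ) :
    ∃ π : Equiv.Perm (Fin N), upX x c = ∑ i, x (c (π i)) i := by
  obtain ⟨π, -, h⟩ := Finset.exists_mem_eq_sup' (⟨1, Finset.mem_univ 1⟩ :
      (Finset.univ : Finset (Equiv.Perm (Fin N))).Nonempty)
      (fun π : Equiv.Perm (Fin N) => ∑ i, x (c (π i)) i)
  exact ⟨π, h⟩

lemma upX_le {N : ℕ} (x : ℤ → Fin N → ℝ) (c : Fin N → ℤ) (π : Equiv.Perm (Fin N)) :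
    ∑ i, x (c (π i)) i ≤ upX x c :=
  Finset.le_sup' (fun π : Equiv.Perm (Fin N) => ∑ i, x (c (π i)) i) (Finset.mem_univ π)

lemma exists_perm_comp {N : ℕ} {c τ : Fin N → ℤ} (hc : Injective c) (hτ : Injective τ)
    (h : range τ = range c) : ∃ π : Equiv.Perm (Fin N), ∀ i, τ i = c (π i) := by
  refine ⟨(Equiv.ofInjective τ hτ).trans ((Equiv.setCongr h).trans
    (Equiv.ofInjective c hc).symm), fun i => ?_⟩
  simp [Equiv.apply_ofInjective_symm]

lemma exchangeE {N : ℕ} (x : ℤ → Fin N → ℝ) (c c' : Fin N → ℤ)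
    (hc : Injective c) (hc' : Injective c')
    (s : ℤ) (hs : s ∈ range c) (hs' : s ∉ range c') :
    ∃ t, t ∈ range c' ∧ t ∉ range c ∧
      ∀ d d' : Fin N → ℤ, Injective d → Injective d' →
        range d = (range c \ {s}) ∪ {t} →
        range d' = (range c' \ {t}) ∪ {s} →
        upX x c + upX x c' ≤ upX x d + upX x d' := by
  obtain ⟨π, hπ⟩ := upX_attain x c
  obtain ⟨π', hπ'⟩ := upX_attain x c'
  set σ : Fin N → ℤ := fun i => c (π i) with hσdef
  set σ' : Fin N → ℤ := fun i => c' (π' i) with hσ'def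
  have hσ : Injective σ := hc.comp π.injective
  have hσ' : Injective σ' := hc'.comp π'.injective
  have hrσ : range σ = range c := π.surjective.range_comp c
  have hrσ' : range σ' = range c' := π'.surjective.range_comp c'
  obtain ⟨t, ht1, ht2, τ, τ', hτi, hτi', hrτ, hrτ', hswap⟩ :=
    exchange_core σ σ' hσ hσ' s (by rw [hrσ]; exact hs) (by rw [hrσ']; exact hs')
  refine ⟨t, by rw [← hrσ']; exact ht1, by rw [← hrσ]; exact ht2,
    fun d d' hd hd' hrd hrd' => ?_⟩
  obtain ⟨ρ, hρ⟩ := exists_perm_comp hd hτi (by rw [hrτ, hrd, hrσ])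
  obtain ⟨ρ', hρ'⟩ := exists_perm_comp hd' hτi' (by rw [hrτ', hrd', hrσ'])
  have hsum : (∑ i, x (τ i) i) + (∑ i, x (τ' i) i) =
      (∑ i, x (σ i) i) + (∑ i, x (σ' i) i) := by
    rw [← Finset.sum_add_distrib, ← Finset.sum_add_distrib]
    apply Finset.sum_congr rfl
    intro i _
    rcases hswap i with ⟨h1, h2⟩ | ⟨h1, h2⟩ <;> rw [h1, h2]
    ring
  have e1 : (∑ i, x (τ i) i) = ∑ i, x (d (ρ i)) i :=
    Finset.sum_congr rfl fun i _ => by rw [hρ i]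
  have e2 : (∑ i, x (τ' i) i) = ∑ i, x (d' (ρ' i)) i :=
    Finset.sum_congr rfl fun i _ => by rw [hρ' i]
  calc upX x c + upX x c' = (∑ i, x (σ i) i) + (∑ i, x (σ' i) i) := by rw [hπ, hπ']
    _ = (∑ i, x (d (ρ i)) i) + (∑ i, x (d' (ρ' i)) i) := by rw [← hsum, e1, e2]
    _ ≤ upX x d + upX x d' := add_le_add (upX_le x d ρ) (upX_le x d' ρ')

end Lemma1Aux

open Function Set in
/-- Lemma 1: if one of the two inequalities holds, the conditional ultradiscrete
Plücker relation follows. -/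
theorem lemma1 (N : ℕ) (hN : 2 ≤ N) (y r : Fin N → ℝ)
    (k₁ k₂ k₃ : ℤ) (hk₁ : 1 ≤ k₁) (h₁₂ : k₁ < k₂) (h₂₃ : k₂ < k₃) (hk₃ : k₃ ≤ (N : ℤ) + 1)
    (hineq : upX (xcol y r) (omitOne N 1 k₂) + upX (xcol y r) (omitTwo N 1 k₁ k₃) ≥
      upX (xcol y r) (omitOne N 1 k₃) + upX (xcol y r) (omitTwo N 1 k₁ k₂)) :
    upX (xcol y r) (omitOne N 1 k₂) + upX (xcol y r) (omitTwo N 1 k₁ k₃) =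
      max (upX (xcol y r) (omitOne N 1 k₃) + upX (xcol y r) (omitTwo N 1 k₁ k₂))
          (upX (xcol y r) (omitOne N 1 k₁) + upX (xcol y r) (omitTwo N 1 k₂ k₃)) := by

  set x := xcol y r with hx
  have R1 : ∀ k : ℤ, 1 ≤ k → k ≤ (N : ℤ) + 1 →
      range (omitOne N 1 k) = {z : ℤ | 1 ≤ z ∧ z ≤ (N : ℤ) + 1 ∧ z ≠ k} := by
    intro k h1 h2
    rw [omitOne_range N 1 k h1 (by omega)]
    ext z; simp only [mem_setOf_eq]; omega
  have R2 : ∀ a b : ℤ, 1 ≤ a → a < b → b ≤ (N : ℤ) + 2 →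
      range (omitTwo N 1 a b) = {z : ℤ | 1 ≤ z ∧ z ≤ (N : ℤ) + 2 ∧ z ≠ a ∧ z ≠ b} := by
    intro a b h1 h2 h3
    rw [omitTwo_range N 1 a b h1 h2 (by omega)]
    ext z; simp only [mem_setOf_eq]; omega
  have rk1 := R1 k₁ (by omega) (by omega)
  have rk2 := R1 k₂ (by omega) (by omega)
  have rk3 := R1 k₃ (by omega) (by omega)
  have r13 := R2 k₁ k₃ (by omega) (by omega) (by omega)
  have r12 := R2 k₁ k₂ (by omega) (by omega) (by omega)
  have r23 := R2 k₂ k₃ (by omega) (by omega) (by omega)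
  -- Exchange 1 : T₁ ≤ T₂ ∨ T₁ ≤ T₃
  have h1 : upX x (omitOne N 1 k₂) + upX x (omitTwo N 1 k₁ k₃) ≤
        upX x (omitOne N 1 k₃) + upX x (omitTwo N 1 k₁ k₂) ∨
      upX x (omitOne N 1 k₂) + upX x (omitTwo N 1 k₁ k₃) ≤
        upX x (omitOne N 1 k₁) + upX x (omitTwo N 1 k₂ k₃) := by
    obtain ⟨t, ht1, ht2, hkey⟩ := exchangeE x (omitOne N 1 k₂) (omitTwo N 1 k₁ k₃)
      (omitOne_inj N 1 k₂) (omitTwo_inj N 1 k₁ k₃) k₁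
      (by rw [rk2]; exact ⟨by omega, by omega, by omega⟩)
      (by rw [r13]; simp only [mem_setOf_eq]; omega)
    rw [r13] at ht1; rw [rk2] at ht2
    simp only [mem_setOf_eq] at ht1 ht2
    have htval : t = k₂ ∨ t = (N : ℤ) + 2 := by omega
    rcases htval with h' | h'
    all_goals rw [h'] at hkey
    · right
      apply hkey (omitOne N 1 k₁) (omitTwo N 1 k₂ k₃) (omitOne_inj N 1 k₁)
        (omitTwo_inj N 1 k₂ k₃)
      · rw [rk1, rk2]
        ext z; simp only [mem_setOf_eq, mem_union, mem_diff, mem_singleton_iff]; omega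
      · rw [r23, r13]
        ext z; simp only [mem_setOf_eq, mem_union, mem_diff, mem_singleton_iff]; omega
    · left
      have := hkey (omitTwo N 1 k₁ k₂) (omitOne N 1 k₃) (omitTwo_inj N 1 k₁ k₂)
        (omitOne_inj N 1 k₃)
        (by rw [r12, rk2]
            ext z; simp only [mem_setOf_eq, mem_union, mem_diff, mem_singleton_iff]; omega)
        (by rw [rk3, r13]
            ext z; simp only [mem_setOf_eq, mem_union, mem_diff, mem_singleton_iff]; omega)
      linarith
  -- Exchange 2 : T₃ ≤ T₁ ∨ T₃ ≤ T₂
  have h2 : upX x (omitOne N 1 k₁) + upX x (omitTwo N 1 k₂ k₃) ≤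
        upX x (omitOne N 1 k₂) + upX x (omitTwo N 1 k₁ k₃) ∨
      upX x (omitOne N 1 k₁) + upX x (omitTwo N 1 k₂ k₃) ≤
        upX x (omitOne N 1 k₃) + upX x (omitTwo N 1 k₁ k₂) := by
    obtain ⟨t, ht1, ht2, hkey⟩ := exchangeE x (omitOne N 1 k₁) (omitTwo N 1 k₂ k₃)
      (omitOne_inj N 1 k₁) (omitTwo_inj N 1 k₂ k₃) k₂
      (by rw [rk1]; exact ⟨by omega, by omega, by omega⟩)
      (by rw [r23]; simp only [mem_setOf_eq]; omega)
    rw [r23] at ht1; rw [rk1] at ht2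
    simp only [mem_setOf_eq] at ht1 ht2
    have htval : t = k₁ ∨ t = (N : ℤ) + 2 := by omega
    rcases htval with h' | h'
    all_goals rw [h'] at hkey
    · left
      apply hkey (omitOne N 1 k₂) (omitTwo N 1 k₁ k₃) (omitOne_inj N 1 k₂)
        (omitTwo_inj N 1 k₁ k₃)
      · rw [rk2, rk1]
        ext z; simp only [mem_setOf_eq, mem_union, mem_diff, mem_singleton_iff]; omega
      · rw [r13, r23]
        ext z; simp only [mem_setOf_eq, mem_union, mem_diff, mem_singleton_iff]; omega
    · right
      have := hkey (omitTwo N 1 k₁ k₂) (omitOne N 1 k₃) (omitTwo_inj N 1 k₁ k₂)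
        (omitOne_inj N 1 k₃)
        (by rw [r12, rk1]
            ext z; simp only [mem_setOf_eq, mem_union, mem_diff, mem_singleton_iff]; omega)
        (by rw [rk3, r23]
            ext z; simp only [mem_setOf_eq, mem_union, mem_diff, mem_singleton_iff]; omega)
      linarith
  have hT3 : upX x (omitOne N 1 k₁) + upX x (omitTwo N 1 k₂ k₃) ≤
      upX x (omitOne N 1 k₂) + upX x (omitTwo N 1 k₁ k₃) := by
    rcases h2 with h | h
    · exact h
    · linarith
  apply le_antisymm
  · rcases h1 with h | h
    · exact le_trans h (le_max_left _ _)
    · exact le_trans h (le_max_right _ _)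
  · exact max_le hineq hT3
end

section
/- (Lemma 2, shifted form of the conditional ultradiscrete Plücker relation) Let N ≥ 2 be an integer, let y_1,…,y_N and r_1,…,r_N be real numbers, and for each integer j let x_j be the N-dimensional vector whose i-th entry is |y_i + j r_i|. Then for all integers k_1, k_2, k_3 with 1 < k_1 < k_2 < k_3 ≤ N+2: max[x_2 … x̂_{k_2} … x_{N+2}] + max[x_1 … x̂_{k_1} … x̂_{k_3} … x_{N+2}] = max( max[x_2 … x̂_{k_3} … x_{N+2}] + max[x_1 … x̂_{k_1} … x̂_{k_2} … x_{N+2}], max[x_2 … x̂_{k_1} … x_{N+2}] + max[x_1 … x̂_{k_2} … x̂_{k_3} … x_{N+2}] ). -/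
namespace L2

variable {N : ℕ}

lemma le_upX (x : ℤ → Fin N → ℝ) (c : Fin N → ℤ) (σ : Equiv.Perm (Fin N)) :
    ∑ i, x (c (σ i)) i ≤ upX x c :=
  Finset.le_sup' (fun π : Equiv.Perm (Fin N) => ∑ i, (Matrix.of fun i j => x (c j) i) i (π i))
    (Finset.mem_univ σ)

lemma exists_upX (x : ℤ → Fin N → ℝ) (c : Fin N → ℤ) :
    ∃ σ : Equiv.Perm (Fin N), upX x c = ∑ i, x (c (σ i)) i := by
  obtain ⟨σ, -, h⟩ := Finset.exists_mem_eq_sup' (α := ℝ)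
    (⟨1, Finset.mem_univ 1⟩ : (Finset.univ : Finset (Equiv.Perm (Fin N))).Nonempty)
    (fun π : Equiv.Perm (Fin N) => ∑ i, (Matrix.of fun i j => x (c j) i) i (π i))
  exact ⟨σ, h⟩

lemma sum_le_upX (x : ℤ → Fin N → ℝ) (c φ : Fin N → ℤ)
    (hc : Function.Injective c) (hφ : Function.Injective φ)
    (h : Set.range φ = Set.range c) :
    ∑ i, x (φ i) i ≤ upX x c := by
  rcases Nat.eq_zero_or_pos N with h0 | hpos
  · subst h0
    have : ∑ i : Fin 0, x (φ i) i = 0 := by simp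
    rw [this]
    obtain ⟨σ, hσ⟩ := exists_upX x c
    rw [hσ]; simp
  have : ∀ i, ∃ j, c j = φ i := by
    intro i
    have : φ i ∈ Set.range c := h ▸ Set.mem_range_self i
    exact this
  choose σ hσ using this
  have hσinj : Function.Injective σ := by
    intro i i' hii
    apply hφ
    rw [← hσ i, ← hσ i', hii]
  have hbij : Function.Bijective σ := Finite.injective_iff_bijective.mp hσinj
  have := le_upX x c (Equiv.ofBijective σ hbij)
  convert this using 2 with i
  rw [Equiv.ofBijective_apply, hσ i]


variable {N : ℕ}

lemma omitOne_inj {k : ℤ} : Function.Injective (omitOne N 2 k) := by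
  intro i j hij
  simp only [omitOne] at hij
  apply Fin.ext
  split_ifs at hij <;> omega

lemma omitTwo_inj {k k' : ℤ} (h : k < k') : Function.Injective (omitTwo N 1 k k') := by
  intro i j hij
  simp only [omitTwo] at hij
  apply Fin.ext
  split_ifs at hij <;> omega

lemma range_omitOne {k : ℤ} (h2 : 2 ≤ k) (hk : k ≤ (N:ℤ) + 2) :
    Set.range (omitOne N 2 k) = {m : ℤ | 2 ≤ m ∧ m ≤ (N:ℤ) + 2 ∧ m ≠ k} := by
  ext m
  simp only [Set.mem_range, Set.mem_setOf_eq]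
  constructor
  · rintro ⟨j, rfl⟩
    simp only [omitOne]
    have := j.2
    split_ifs <;> (refine ⟨by omega, by omega, by omega⟩)
  · rintro ⟨h1, h2', h3⟩
    by_cases hmk : m < k
    · refine ⟨⟨(m - 2).toNat, ?_⟩, ?_⟩
      · omega
      · simp only [omitOne]
        rw [if_pos] <;> omega
    · refine ⟨⟨(m - 3).toNat, ?_⟩, ?_⟩
      · omega
      · simp only [omitOne]
        rw [if_neg] <;> omega

lemma range_omitTwo {k k' : ℤ} (h1 : 1 ≤ k) (hkk : k < k') (hk' : k' ≤ (N:ℤ) + 2) :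
    Set.range (omitTwo N 1 k k') = {m : ℤ | 1 ≤ m ∧ m ≤ (N:ℤ) + 2 ∧ m ≠ k ∧ m ≠ k'} := by
  ext m
  simp only [Set.mem_range, Set.mem_setOf_eq]
  constructor
  · rintro ⟨j, rfl⟩
    simp only [omitTwo]
    have := j.2
    split_ifs <;> refine ⟨by omega, by omega, by omega, by omega⟩
  · rintro ⟨ha, hb, hc, hd⟩
    by_cases hm1 : m < k
    · refine ⟨⟨(m - 1).toNat, by omega⟩, ?_⟩
      simp only [omitTwo]
      rw [if_pos] <;> omega
    · by_cases hm2 : m < k'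
      · refine ⟨⟨(m - 2).toNat, by omega⟩, ?_⟩
        simp only [omitTwo]
        rw [if_neg (by omega), if_pos] <;> omega
      · refine ⟨⟨(m - 3).toNat, by omega⟩, ?_⟩
        simp only [omitTwo]
        rw [if_neg (by omega), if_neg] <;> omega



private lemma dplus (y r a b : ℝ) : 2*y + (a+b)*r ≤ |y+a*r| + |y+b*r| := by
  have h1 := le_abs_self (y+a*r)
  have h2 := le_abs_self (y+b*r)
  linarith

private lemma dminus (y r a b : ℝ) : -(2*y + (a+b)*r) ≤ |y+a*r| + |y+b*r| := by
  have h1 := neg_abs_le (y+a*r)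
  have h2 := neg_abs_le (y+b*r)
  linarith

private lemma dD (y r a b : ℝ) (hab : a ≤ b) : (b-a)*|r| ≤ |y+a*r| + |y+b*r| := by
  have h : (b-a)*|r| = |(y+b*r) - (y+a*r)| := by
    rw [show (y+b*r) - (y+a*r) = (b-a)*r by ring, abs_mul,
      abs_of_nonneg (by linarith : (0:ℝ) ≤ b - a)]
  rw [h, show (y+b*r) - (y+a*r) = (y+b*r) + (-(y+a*r)) by ring]
  calc |(y+b*r) + (-(y+a*r))| ≤ |y+b*r| + |(-(y+a*r))| := abs_add_le _ _
    _ = |y+b*r| + |y+a*r| := by rw [abs_neg]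
    _ = |y+a*r| + |y+b*r| := by ring

private lemma hup (y r a b : ℝ) (hab : a ≤ b) :
    |y+a*r| + |y+b*r| ≤ max (|2*y + (a+b)*r|) ((b-a)*|r|) := by
  have hD : |(b-a)*r| = (b-a)*|r| := by
    rw [abs_mul, abs_of_nonneg (by linarith : (0:ℝ) ≤ b - a)]
  rcases abs_cases (y+a*r) with ⟨ha1, _⟩ | ⟨ha1, _⟩ <;>
    rcases abs_cases (y+b*r) with ⟨hb1, _⟩ | ⟨hb1, _⟩
  · refine le_max_of_le_left ?_
    have := le_abs_self (2*y + (a+b)*r); linarith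
  · refine le_max_of_le_right ?_
    rw [← hD]
    have h2 := neg_le_abs ((b-a)*r)
    linarith
  · refine le_max_of_le_right ?_
    rw [← hD]
    have := le_abs_self ((b-a)*r); linarith
  · refine le_max_of_le_left ?_
    have := neg_le_abs (2*y + (a+b)*r); linarith

/-- The atomic exchange inequality for two "Casorati" rows and four sorted columns. -/
lemma atomic (y1 r1 y2 r2 q1 q2 q3 q4 : ℝ) (h12 : q1 ≤ q2) (h23 : q2 ≤ q3) (h34 : q3 ≤ q4) :
    |y1+q1*r1| + |y1+q3*r1| + (|y2+q2*r2| + |y2+q4*r2|) ≤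
      max (max (|y1+q1*r1| + |y1+q2*r1| + (|y2+q3*r2| + |y2+q4*r2|))
               (|y1+q3*r1| + |y1+q4*r1| + (|y2+q1*r2| + |y2+q2*r2|)))
          (max (|y1+q1*r1| + |y1+q4*r1| + (|y2+q2*r2| + |y2+q3*r2|))
               (|y1+q2*r1| + |y1+q3*r1| + (|y2+q1*r2| + |y2+q4*r2|))) := by
  have h13 : q1 ≤ q3 := le_trans h12 h23
  have h24 : q2 ≤ q4 := le_trans h23 h34
  have h14 : q1 ≤ q4 := le_trans h13 h34
  have hf := hup y1 r1 q1 q3 h13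
  have hg := hup y2 r2 q2 q4 h24

  have g1 : (|y1+q1*r1| + |y1+q2*r1| + (|y2+q3*r2| + |y2+q4*r2|)) ≤ max (max (|y1+q1*r1| + |y1+q2*r1| + (|y2+q3*r2| + |y2+q4*r2|)) (|y1+q3*r1| + |y1+q4*r1| + (|y2+q1*r2| + |y2+q2*r2|))) (max (|y1+q1*r1| + |y1+q4*r1| + (|y2+q2*r2| + |y2+q3*r2|)) (|y1+q2*r1| + |y1+q3*r1| + (|y2+q1*r2| + |y2+q4*r2|))) := le_max_of_le_left (le_max_left _ _)
  have g2 : (|y1+q3*r1| + |y1+q4*r1| + (|y2+q1*r2| + |y2+q2*r2|)) ≤ max (max (|y1+q1*r1| + |y1+q2*r1| + (|y2+q3*r2| + |y2+q4*r2|)) (|y1+q3*r1| + |y1+q4*r1| + (|y2+q1*r2| + |y2+q2*r2|))) (max (|y1+q1*r1| + |y1+q4*r1| + (|y2+q2*r2| + |y2+q3*r2|)) (|y1+q2*r1| + |y1+q3*r1| + (|y2+q1*r2| + |y2+q4*r2|))) := le_max_of_le_left (le_max_right _ _)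
  have g3 : (|y1+q1*r1| + |y1+q4*r1| + (|y2+q2*r2| + |y2+q3*r2|)) ≤ max (max (|y1+q1*r1| + |y1+q2*r1| + (|y2+q3*r2| + |y2+q4*r2|)) (|y1+q3*r1| + |y1+q4*r1| + (|y2+q1*r2| + |y2+q2*r2|))) (max (|y1+q1*r1| + |y1+q4*r1| + (|y2+q2*r2| + |y2+q3*r2|)) (|y1+q2*r1| + |y1+q3*r1| + (|y2+q1*r2| + |y2+q4*r2|))) := le_max_of_le_right (le_max_left _ _)
  have g4 : (|y1+q2*r1| + |y1+q3*r1| + (|y2+q1*r2| + |y2+q4*r2|)) ≤ max (max (|y1+q1*r1| + |y1+q2*r1| + (|y2+q3*r2| + |y2+q4*r2|)) (|y1+q3*r1| + |y1+q4*r1| + (|y2+q1*r2| + |y2+q2*r2|))) (max (|y1+q1*r1| + |y1+q4*r1| + (|y2+q2*r2| + |y2+q3*r2|)) (|y1+q2*r1| + |y1+q3*r1| + (|y2+q1*r2| + |y2+q4*r2|))) := le_max_of_le_right (le_max_right _ _)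
  rcases max_choice (|2*y1 + (q1+q3)*r1|) ((q3-q1)*|r1|) with hmf | hmf <;> rw [hmf] at hf <;>
    rcases max_choice (|2*y2 + (q2+q4)*r2|) ((q4-q2)*|r2|) with hmg | hmg <;> rw [hmg] at hg
  · -- S,S
    rcases abs_choice (2*y1 + (q1+q3)*r1) with haf | haf <;> rw [haf] at hf <;>
      rcases abs_choice (2*y2 + (q2+q4)*r2) with hag | hag <;> rw [hag] at hg
    · -- (+,+)
      rcases le_total r2 r1 with hr | hr
      · refine le_trans ?_ g4
        have key : (2*y1 + (q2+q3)*r1) + (2*y2 + (q1+q4)*r2) - ((2*y1 + (q1+q3)*r1) + (2*y2 + (q2+q4)*r2)) = (q2-q1)*(r1-r2) := by ring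
        have pos : (0:ℝ) ≤ (q2-q1)*(r1-r2) := mul_nonneg (by linarith) (by linarith)
        have df := dplus y1 r1 q2 q3
        have dg := dplus y2 r2 q1 q4
        linarith
      · refine le_trans ?_ g1
        have key : (2*y1 + (q1+q2)*r1) + (2*y2 + (q3+q4)*r2) - ((2*y1 + (q1+q3)*r1) + (2*y2 + (q2+q4)*r2)) = (q3-q2)*(r2-r1) := by ring
        have pos : (0:ℝ) ≤ (q3-q2)*(r2-r1) := mul_nonneg (by linarith) (by linarith)
        have df := dplus y1 r1 q1 q2
        have dg := dplus y2 r2 q3 q4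
        linarith
    · -- (+,-)
      rcases le_total 0 (r1+r2) with hr | hr
      · refine le_trans ?_ g2
        have key : (2*y1 + (q3+q4)*r1) + (-(2*y2 + (q1+q2)*r2)) - ((2*y1 + (q1+q3)*r1) + (-(2*y2 + (q2+q4)*r2))) = (q4-q1)*(r1+r2) := by ring
        have pos : (0:ℝ) ≤ (q4-q1)*(r1+r2) := mul_nonneg (by linarith) (by linarith)
        have df := dplus y1 r1 q3 q4
        have dg := dminus y2 r2 q1 q2
        linarith
      · refine le_trans ?_ g1
        have key : (2*y1 + (q1+q2)*r1) + (-(2*y2 + (q3+q4)*r2)) - ((2*y1 + (q1+q3)*r1) + (-(2*y2 + (q2+q4)*r2))) = (q3-q2)*(-(r1+r2)) := by ring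
        have pos : (0:ℝ) ≤ (q3-q2)*(-(r1+r2)) := mul_nonneg (by linarith) (by linarith)
        have df := dplus y1 r1 q1 q2
        have dg := dminus y2 r2 q3 q4
        linarith
    · -- (-,+)
      rcases le_total 0 (r1+r2) with hr | hr
      · refine le_trans ?_ g1
        have key : (-(2*y1 + (q1+q2)*r1)) + (2*y2 + (q3+q4)*r2) - ((-(2*y1 + (q1+q3)*r1)) + (2*y2 + (q2+q4)*r2)) = (q3-q2)*(r1+r2) := by ring
        have pos : (0:ℝ) ≤ (q3-q2)*(r1+r2) := mul_nonneg (by linarith) (by linarith)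
        have df := dminus y1 r1 q1 q2
        have dg := dplus y2 r2 q3 q4
        linarith
      · refine le_trans ?_ g2
        have key : (-(2*y1 + (q3+q4)*r1)) + (2*y2 + (q1+q2)*r2) - ((-(2*y1 + (q1+q3)*r1)) + (2*y2 + (q2+q4)*r2)) = (q4-q1)*(-(r1+r2)) := by ring
        have pos : (0:ℝ) ≤ (q4-q1)*(-(r1+r2)) := mul_nonneg (by linarith) (by linarith)
        have df := dminus y1 r1 q3 q4
        have dg := dplus y2 r2 q1 q2
        linarith
    · -- (-,-)
      rcases le_total r2 r1 with hr | hr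
      · refine le_trans ?_ g1
        have key : (-(2*y1 + (q1+q2)*r1)) + (-(2*y2 + (q3+q4)*r2)) - ((-(2*y1 + (q1+q3)*r1)) + (-(2*y2 + (q2+q4)*r2))) = (q3-q2)*(r1-r2) := by ring
        have pos : (0:ℝ) ≤ (q3-q2)*(r1-r2) := mul_nonneg (by linarith) (by linarith)
        have df := dminus y1 r1 q1 q2
        have dg := dminus y2 r2 q3 q4
        linarith
      · refine le_trans ?_ g4
        have key : (-(2*y1 + (q2+q3)*r1)) + (-(2*y2 + (q1+q4)*r2)) - ((-(2*y1 + (q1+q3)*r1)) + (-(2*y2 + (q2+q4)*r2))) = (q2-q1)*(r2-r1) := by ring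
        have pos : (0:ℝ) ≤ (q2-q1)*(r2-r1) := mul_nonneg (by linarith) (by linarith)
        have df := dminus y1 r1 q2 q3
        have dg := dminus y2 r2 q1 q4
        linarith
  · -- S,D
    rcases abs_choice (2*y1 + (q1+q3)*r1) with haf | haf <;> rw [haf] at hf
    · -- (+,D)
      rcases le_total 0 (r1+|r2|) with hr | hr
      · refine le_trans ?_ g4
        have key : (2*y1 + (q2+q3)*r1) + ((q4-q1)*|r2|) - ((2*y1 + (q1+q3)*r1) + ((q4-q2)*|r2|)) = (q2-q1)*(r1+|r2|) := by ring
        have pos : (0:ℝ) ≤ (q2-q1)*(r1+|r2|) := mul_nonneg (by linarith) (by linarith)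
        have df := dplus y1 r1 q2 q3
        have dg := dD y2 r2 q1 q4 h14
        linarith
      · refine le_trans ?_ g1
        have key : (2*y1 + (q1+q2)*r1) + ((q4-q3)*|r2|) - ((2*y1 + (q1+q3)*r1) + ((q4-q2)*|r2|)) = (q3-q2)*(-(r1+|r2|)) := by ring
        have pos : (0:ℝ) ≤ (q3-q2)*(-(r1+|r2|)) := mul_nonneg (by linarith) (by linarith)
        have df := dplus y1 r1 q1 q2
        have dg := dD y2 r2 q3 q4 h34
        linarith
    · -- (-,D)
      rcases le_total r1 (|r2|) with hr | hr
      · refine le_trans ?_ g4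
        have key : (-(2*y1 + (q2+q3)*r1)) + ((q4-q1)*|r2|) - ((-(2*y1 + (q1+q3)*r1)) + ((q4-q2)*|r2|)) = (q2-q1)*(|r2|-r1) := by ring
        have pos : (0:ℝ) ≤ (q2-q1)*(|r2|-r1) := mul_nonneg (by linarith) (by linarith)
        have df := dminus y1 r1 q2 q3
        have dg := dD y2 r2 q1 q4 h14
        linarith
      · refine le_trans ?_ g1
        have key : (-(2*y1 + (q1+q2)*r1)) + ((q4-q3)*|r2|) - ((-(2*y1 + (q1+q3)*r1)) + ((q4-q2)*|r2|)) = (q3-q2)*(r1-|r2|) := by ring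
        have pos : (0:ℝ) ≤ (q3-q2)*(r1-|r2|) := mul_nonneg (by linarith) (by linarith)
        have df := dminus y1 r1 q1 q2
        have dg := dD y2 r2 q3 q4 h34
        linarith
  · -- D,S
    rcases abs_choice (2*y2 + (q2+q4)*r2) with hag | hag <;> rw [hag] at hg
    · -- (D,+)
      rcases le_total r2 (|r1|) with hr | hr
      · refine le_trans ?_ g3
        have key : ((q4-q1)*|r1|) + (2*y2 + (q2+q3)*r2) - (((q3-q1)*|r1|) + (2*y2 + (q2+q4)*r2)) = (q4-q3)*(|r1|-r2) := by ring
        have pos : (0:ℝ) ≤ (q4-q3)*(|r1|-r2) := mul_nonneg (by linarith) (by linarith)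
        have df := dD y1 r1 q1 q4 h14
        have dg := dplus y2 r2 q2 q3
        linarith
      · refine le_trans ?_ g1
        have key : ((q2-q1)*|r1|) + (2*y2 + (q3+q4)*r2) - (((q3-q1)*|r1|) + (2*y2 + (q2+q4)*r2)) = (q3-q2)*(r2-|r1|) := by ring
        have pos : (0:ℝ) ≤ (q3-q2)*(r2-|r1|) := mul_nonneg (by linarith) (by linarith)
        have df := dD y1 r1 q1 q2 h12
        have dg := dplus y2 r2 q3 q4
        linarith
    · -- (D,-)
      rcases le_total 0 (|r1|+r2) with hr | hr
      · refine le_trans ?_ g3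
        have key : ((q4-q1)*|r1|) + (-(2*y2 + (q2+q3)*r2)) - (((q3-q1)*|r1|) + (-(2*y2 + (q2+q4)*r2))) = (q4-q3)*(|r1|+r2) := by ring
        have pos : (0:ℝ) ≤ (q4-q3)*(|r1|+r2) := mul_nonneg (by linarith) (by linarith)
        have df := dD y1 r1 q1 q4 h14
        have dg := dminus y2 r2 q2 q3
        linarith
      · refine le_trans ?_ g1
        have key : ((q2-q1)*|r1|) + (-(2*y2 + (q3+q4)*r2)) - (((q3-q1)*|r1|) + (-(2*y2 + (q2+q4)*r2))) = (q3-q2)*(-(|r1|+r2)) := by ring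
        have pos : (0:ℝ) ≤ (q3-q2)*(-(|r1|+r2)) := mul_nonneg (by linarith) (by linarith)
        have df := dD y1 r1 q1 q2 h12
        have dg := dminus y2 r2 q3 q4
        linarith
  · -- D,D
      rcases le_total (|r2|) (|r1|) with hr | hr
      · refine le_trans ?_ g3
        have key : ((q4-q1)*|r1|) + ((q3-q2)*|r2|) - (((q3-q1)*|r1|) + ((q4-q2)*|r2|)) = (q4-q3)*(|r1|-|r2|) := by ring
        have pos : (0:ℝ) ≤ (q4-q3)*(|r1|-|r2|) := mul_nonneg (by linarith) (by linarith)
        have df := dD y1 r1 q1 q4 h14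
        have dg := dD y2 r2 q2 q3 h23
        linarith
      · refine le_trans ?_ g4
        have key : ((q3-q2)*|r1|) + ((q4-q1)*|r2|) - (((q3-q1)*|r1|) + ((q4-q2)*|r2|)) = (q2-q1)*(|r2|-|r1|) := by ring
        have pos : (0:ℝ) ≤ (q2-q1)*(|r2|-|r1|) := mul_nonneg (by linarith) (by linarith)
        have df := dD y1 r1 q2 q3 h23
        have dg := dD y2 r2 q1 q4 h14
        linarith



/-- Parity of the number of sign changes of a boolean sequence. -/
private lemma signChanges (g : ℕ → Bool) (s : ℕ) :
    (Finset.filter (fun j => g j ≠ g (j+1)) (Finset.range s)).card % 2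
      = if g 0 = g s then 0 else 1 := by
  induction s with
  | zero => simp
  | succ n ih =>
    rw [Finset.range_add_one, Finset.filter_insert]
    by_cases h : g n ≠ g (n+1)
    · rw [if_pos h, Finset.card_insert_of_notMem (by simp)]
      rcases Bool.eq_false_or_eq_true (g 0) with h0 | h0 <;>
        rcases Bool.eq_false_or_eq_true (g n) with hn | hn <;>
        rcases Bool.eq_false_or_eq_true (g (n+1)) with hn1 | hn1 <;>
        simp [h0, hn, hn1] at ih h ⊢ <;> omega
    · rw [if_neg h]
      rcases Bool.eq_false_or_eq_true (g 0) with h0 | h0 <;>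
        rcases Bool.eq_false_or_eq_true (g n) with hn | hn <;>
        rcases Bool.eq_false_or_eq_true (g (n+1)) with hn1 | hn1 <;>
        simp [h0, hn, hn1] at ih h ⊢ <;> omega

/-- Two integer paths with interleaved endpoints contain an ordered-overlapping
pair of edges. -/
lemma crossing_exists (a c : ℕ → ℤ) (s t : ℕ)
    (hdisj : ∀ j k, j ≤ s → k ≤ t → a j ≠ c k)
    (h1 : a 0 < c 0) (h2 : c 0 < a s) (h3 : a s < c t) :
    ∃ j, j < s ∧ ∃ k, k < t ∧ ∃ x y z w : ℤ,
      ((x = a j ∧ y = a (j+1)) ∨ (x = a (j+1) ∧ y = a j)) ∧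
      ((z = c k ∧ w = c (k+1)) ∨ (z = c (k+1) ∧ w = c k)) ∧
      ((x ≤ z ∧ z ≤ y ∧ y ≤ w) ∨ (z ≤ x ∧ x ≤ w ∧ w ≤ y)) := by
  classical
  by_contra hcon
  set ins : ℕ → ℤ → Prop := fun j v => ((a j < v) ↔ ¬ (a (j+1) < v)) with hins
  have step1 : ∀ j, j < s → ∀ k, k ≤ t → (ins j (c k) ↔ ins j (c 0)) := by
    intro j hj k
    induction k with
    | zero => intro _; rfl
    | succ k ihk =>
      intro hk1
      have hk : k < t := by omega
      have hkt : k ≤ t := by omega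
      rw [← ihk hkt]
      by_contra hne
      have d1 : a j ≠ c k := hdisj j k (by omega) hkt
      have d2 : a (j+1) ≠ c k := hdisj (j+1) k (by omega) hkt
      have d3 : a j ≠ c (k+1) := hdisj j (k+1) (by omega) (by omega)
      have d4 : a (j+1) ≠ c (k+1) := hdisj (j+1) (k+1) (by omega) (by omega)
      by_cases b1 : a j < c k <;> by_cases b2 : a (j+1) < c k <;>
        by_cases b3 : a j < c (k+1) <;> by_cases b4 : a (j+1) < c (k+1) <;>
      first
      | exact hne (by simp only [hins]; omega)
      | exact hcon ⟨j, hj, k, hk, (a j), (a (j+1)), (c k), (c (k+1)), Or.inl ⟨rfl, rfl⟩, Or.inl ⟨rfl, rfl⟩, Or.inl (by omega)⟩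
      | exact hcon ⟨j, hj, k, hk, (a j), (a (j+1)), (c k), (c (k+1)), Or.inl ⟨rfl, rfl⟩, Or.inl ⟨rfl, rfl⟩, Or.inr (by omega)⟩
      | exact hcon ⟨j, hj, k, hk, (a j), (a (j+1)), (c (k+1)), (c k), Or.inl ⟨rfl, rfl⟩, Or.inr ⟨rfl, rfl⟩, Or.inl (by omega)⟩
      | exact hcon ⟨j, hj, k, hk, (a j), (a (j+1)), (c (k+1)), (c k), Or.inl ⟨rfl, rfl⟩, Or.inr ⟨rfl, rfl⟩, Or.inr (by omega)⟩
      | exact hcon ⟨j, hj, k, hk, (a (j+1)), (a j), (c k), (c (k+1)), Or.inr ⟨rfl, rfl⟩, Or.inl ⟨rfl, rfl⟩, Or.inl (by omega)⟩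
      | exact hcon ⟨j, hj, k, hk, (a (j+1)), (a j), (c k), (c (k+1)), Or.inr ⟨rfl, rfl⟩, Or.inl ⟨rfl, rfl⟩, Or.inr (by omega)⟩
      | exact hcon ⟨j, hj, k, hk, (a (j+1)), (a j), (c (k+1)), (c k), Or.inr ⟨rfl, rfl⟩, Or.inr ⟨rfl, rfl⟩, Or.inl (by omega)⟩
      | exact hcon ⟨j, hj, k, hk, (a (j+1)), (a j), (c (k+1)), (c k), Or.inr ⟨rfl, rfl⟩, Or.inr ⟨rfl, rfl⟩, Or.inr (by omega)⟩
  have hfilt : (Finset.filter (fun j => ins j (c 0)) (Finset.range s)).card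
      = (Finset.filter (fun j => ins j (c t)) (Finset.range s)).card := by
    congr 1
    apply Finset.filter_congr
    intro j hj
    rw [Finset.mem_range] at hj
    have hh := (step1 j hj t le_rfl).symm
    first
    | exact hh
    | exact propext hh
    | (simp only [eq_iff_iff]; exact hh)
  have par : ∀ v : ℤ, (Finset.filter (fun j => ins j v) (Finset.range s)).card % 2
      = if ((a 0 < v) ↔ (a s < v)) then 0 else 1 := by
    intro v
    have hsc := signChanges (fun j => decide (a j < v)) s
    have heq : (Finset.filter (fun j => ins j v) (Finset.range s))
        = (Finset.filter (fun j => (fun jj => decide (a jj < v)) j ≠ (fun jj => decide (a jj < v)) (j+1)) (Finset.range s)) := by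
      apply Finset.filter_congr
      intro j _
      simp only [hins, ne_eq, decide_eq_decide]
      tauto
    rw [heq, hsc]
    by_cases hv : (a 0 < v) ↔ (a s < v)
    · rw [if_pos hv, if_pos (by simp [decide_eq_decide]; exact hv)]
    · rw [if_neg hv, if_neg (by simp [decide_eq_decide]; exact hv)]
  have p0 := par (c 0)
  have pt := par (c t)
  rw [hfilt] at p0
  rw [p0] at pt
  have hv0 : ¬ ((a 0 < c 0) ↔ (a s < c 0)) := by
    intro h; have := h.mp h1; omega
  have hvt : ((a 0 < c t) ↔ (a s < c t)) := by
    constructor <;> intro _ <;> omega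
  rw [if_neg hv0, if_pos hvt] at pt
  omega



variable {N : ℕ}

private noncomputable def wnext (φ ψ : Fin N → ℤ) (i : Fin N) : Option (Fin N) :=
  @dite _ (φ i ∈ Set.range ψ) (Classical.dec _) (fun h => some h.choose) (fun _ => none)

private noncomputable def wseq (φ ψ : Fin N → ℤ) (i0 : Fin N) : ℕ → Option (Fin N)
  | 0 => some i0
  | k+1 => (wseq φ ψ i0 k).bind (wnext φ ψ)

private lemma wnext_eq {φ ψ : Fin N → ℤ} {i j : Fin N} (h : wnext φ ψ i = some j) :
    ψ j = φ i := by
  unfold wnext at h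
  split at h
  · rename_i hmem
    simp only [Option.some_inj] at h
    rw [← h]
    exact hmem.choose_spec
  · simp at h

private lemma wnext_none {φ ψ : Fin N → ℤ} {i : Fin N} (h : wnext φ ψ i = none) :
    φ i ∉ Set.range ψ := by
  unfold wnext at h
  split at h
  · simp at h
  · rename_i hmem; exact hmem

private lemma wnext_some {φ ψ : Fin N → ℤ} {i : Fin N} (h : φ i ∈ Set.range ψ) :
    ∃ j, wnext φ ψ i = some j := by
  unfold wnext
  split
  · exact ⟨_, rfl⟩
  · rename_i hmem; exact absurd h hmem

private lemma wseq_succ (φ ψ : Fin N → ℤ) (i0 : Fin N) (k : ℕ) :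
    wseq φ ψ i0 (k+1) = (wseq φ ψ i0 k).bind (wnext φ ψ) := rfl

private lemma wseq_back {φ ψ : Fin N → ℤ} {i0 : Fin N} {k : ℕ} {j : Fin N}
    (h : wseq φ ψ i0 (k+1) = some j) :
    ∃ i, wseq φ ψ i0 k = some i ∧ wnext φ ψ i = some j := by
  rw [wseq_succ] at h
  cases hk : wseq φ ψ i0 k with
  | none => rw [hk] at h; simp at h
  | some i => rw [hk] at h; exact ⟨i, rfl, h⟩

private lemma wseq_inj {φ ψ : Fin N → ℤ} (hφ : Function.Injective φ)
    {i0 : Fin N} (h0 : ψ i0 ∉ Set.range φ) :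
    ∀ k m i, wseq φ ψ i0 k = some i → wseq φ ψ i0 m = some i → k = m := by
  have hnot0 : ∀ m i, wseq φ ψ i0 (m+1) = some i → i ≠ i0 := by
    intro m i h hcontr
    subst hcontr
    obtain ⟨j, -, hj2⟩ := wseq_back h
    exact h0 ⟨j, (wnext_eq hj2).symm⟩
  intro k
  induction k with
  | zero =>
    intro m i hk hm
    cases m with
    | zero => rfl
    | succ m' =>
      simp only [wseq, Option.some_inj] at hk
      subst hk
      exact absurd rfl (hnot0 m' i0 hm)
  | succ k' ih =>
    intro m i hk hm
    cases m with
    | zero =>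
      simp only [wseq, Option.some_inj] at hm
      subst hm
      exact absurd rfl (hnot0 k' i0 hk)
    | succ m' =>
      obtain ⟨a, ha1, ha2⟩ := wseq_back hk
      obtain ⟨b, hb1, hb2⟩ := wseq_back hm
      have hab : a = b := by
        apply hφ
        rw [← wnext_eq ha2, ← wnext_eq hb2]
      subst hab
      have := ih m' a ha1 hb1
      omega

private lemma wseq_stop {φ ψ : Fin N → ℤ} (hφ : Function.Injective φ)
    {i0 : Fin N} (h0 : ψ i0 ∉ Set.range φ) :
    ∃ n, ∃ i : Fin N, wseq φ ψ i0 n = some i ∧ wnext φ ψ i = none := by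
  by_contra hcon
  push_neg at hcon
  have hall : ∀ k, ∃ i, wseq φ ψ i0 k = some i := by
    intro k
    induction k with
    | zero => exact ⟨i0, rfl⟩
    | succ k' ih =>
      obtain ⟨i, hi⟩ := ih
      rcases hn : wnext φ ψ i with _ | j
      · exact absurd hn (hcon k' i hi)
      · exact ⟨j, by rw [wseq_succ, hi]; simpa using hn⟩
  choose f hf using hall
  have hinj : Function.Injective f := by
    intro k m hkm
    exact wseq_inj hφ h0 k m (f k) (hf k) (by rw [hkm]; exact hf m)
  obtain ⟨x, y, hxy, hfe⟩ := Finite.exists_ne_map_eq_of_infinite f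
  exact hxy (hinj hfe)

/-- The walk lemma: walking from a column `e ∈ range ψ \ range φ`, swapping along the
walk exchanges `e` with some exit column `f ∈ range φ \ range ψ`. -/
lemma walkSwap (φ ψ : Fin N → ℤ) (hφ : Function.Injective φ) (hψ : Function.Injective ψ)
    (e : ℤ) (he : e ∈ Set.range ψ) (he' : e ∉ Set.range φ) :
    ∃ (n : ℕ) (u : ℕ → Fin N) (φ' ψ' : Fin N → ℤ),
      (∀ j k, j ≤ n → k ≤ n → u j = u k → j = k) ∧
      ψ (u 0) = e ∧
      (∀ j, j < n → φ (u j) = ψ (u (j+1))) ∧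
      (φ (u n) ∉ Set.range ψ) ∧
      (∀ i, (φ' i = φ i ∧ ψ' i = ψ i) ∨ (φ' i = ψ i ∧ ψ' i = φ i)) ∧
      ((∀ j, j ≤ n → (φ' (u j) = ψ (u j) ∧ ψ' (u j) = φ (u j))) ∧
       (∀ i, (∀ j, j ≤ n → i ≠ u j) → (φ' i = φ i ∧ ψ' i = ψ i))) ∧
      Function.Injective φ' ∧ Function.Injective ψ' ∧
      Set.range φ' = insert e (Set.range φ \ {φ (u n)}) ∧
      Set.range ψ' = insert (φ (u n)) (Set.range ψ \ {e}) := by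
  classical
  obtain ⟨i0, hi0⟩ := he
  have h0 : ψ i0 ∉ Set.range φ := by rw [hi0]; exact he'
  obtain ⟨n, ilast, hseq, hstop⟩ := wseq_stop hφ h0
  have hall : ∀ d, ∃ i, wseq φ ψ i0 (n - d) = some i := by
    intro d
    induction d with
    | zero => exact ⟨ilast, by simpa using hseq⟩
    | succ d' ih =>
      obtain ⟨i, hi⟩ := ih
      rcases Nat.lt_or_ge (n - d') 1 with hnd | hnd
      · have h2 : n - (d'+1) = n - d' := by omega
        rw [h2]; exact ⟨i, hi⟩
      · have h1 : n - d' = (n - (d'+1)) + 1 := by omega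
        rw [h1] at hi
        obtain ⟨i', hi', -⟩ := wseq_back hi
        exact ⟨i', hi'⟩
  have hallk : ∀ k, k ≤ n → ∃ i, wseq φ ψ i0 k = some i := by
    intro k hk
    have := hall (n - k)
    rwa [Nat.sub_sub_self hk] at this
  set u : ℕ → Fin N := fun k => if hk : k ≤ n then (hallk k hk).choose else i0 with hu_def
  have hu : ∀ k, k ≤ n → wseq φ ψ i0 k = some (u k) := by
    intro k hk
    have := (hallk k hk).choose_spec
    simp only [hu_def, dif_pos hk]
    exact this
  have hu0 : u 0 = i0 := by
    have h1 := hu 0 (Nat.zero_le n)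
    simp only [wseq] at h1
    exact (Option.some_inj.mp h1).symm
  have hun : u n = ilast := by
    have h1 := hu n le_rfl
    rw [hseq] at h1
    exact (Option.some_inj.mp h1).symm
  have hstep : ∀ j, j < n → φ (u j) = ψ (u (j+1)) := by
    intro j hj
    have h1 := hu j (le_of_lt hj)
    have h2 := hu (j+1) hj
    rw [wseq_succ, h1] at h2
    simp only [Option.bind_some, Option.bind_fun_some] at h2
    exact (wnext_eq h2).symm
  have hexit : φ (u n) ∉ Set.range ψ := by
    rw [hun]; exact wnext_none hstop
  have huinj : ∀ j k, j ≤ n → k ≤ n → u j = u k → j = k := by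
    intro j k hj hk heq
    exact wseq_inj hφ h0 j k (u j) (hu j hj) (by rw [heq]; exact hu k hk)
  have hue : ψ (u 0) = e := by rw [hu0, hi0]
  set T : Finset (Fin N) := (Finset.range (n+1)).image u with hT_def
  have hmemT : ∀ i, i ∈ T ↔ ∃ j, j ≤ n ∧ u j = i := by
    intro i
    simp [hT_def, Finset.mem_image, Finset.mem_range, Nat.lt_succ_iff]
  set φ' : Fin N → ℤ := fun i => if i ∈ T then ψ i else φ i with hφ'_def
  set ψ' : Fin N → ℤ := fun i => if i ∈ T then φ i else ψ i with hψ'_def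
  have uT : ∀ j, j ≤ n → u j ∈ T := by
    intro j hj
    rw [hmemT]; exact ⟨j, hj, rfl⟩
  have hswap : ∀ i, (φ' i = φ i ∧ ψ' i = ψ i) ∨ (φ' i = ψ i ∧ ψ' i = φ i) := by
    intro i
    by_cases hi : i ∈ T
    · right; simp [hφ'_def, hψ'_def, hi]
    · left; simp [hφ'_def, hψ'_def, hi]
  have honT : ∀ j, j ≤ n → (φ' (u j) = ψ (u j) ∧ ψ' (u j) = φ (u j)) := by
    intro j hj
    simp [hφ'_def, hψ'_def, uT j hj]
  have hoffT : ∀ i, (∀ j, j ≤ n → i ≠ u j) → (φ' i = φ i ∧ ψ' i = ψ i) := by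
    intro i hi
    have : i ∉ T := by
      rw [hmemT]
      rintro ⟨j, hj, rfl⟩
      exact hi j hj rfl
    simp [hφ'_def, hψ'_def, this]
  -- injectivity of φ'
  have hφ'inj : Function.Injective φ' := by
    intro i i' heq
    by_cases hi : i ∈ T <;> by_cases hi' : i' ∈ T <;>
      simp only [hφ'_def, if_pos, if_neg, hi, hi', if_true, if_false] at heq
    · exact hψ heq
    · obtain ⟨j, hj, rfl⟩ := (hmemT i).mp hi
      rcases Nat.eq_zero_or_pos j with hj0 | hj0
      · subst hj0
        rw [hue] at heq
        exact absurd ⟨i', heq.symm⟩ he'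
      · have hj1 : j - 1 < n := by omega
        have := hstep (j-1) hj1
        rw [show j - 1 + 1 = j by omega] at this
        rw [← this] at heq
        have : u (j-1) = i' := hφ heq
        rw [← this] at hi'
        exact absurd (uT (j-1) (by omega)) hi'
    · obtain ⟨j, hj, rfl⟩ := (hmemT i').mp hi'
      rcases Nat.eq_zero_or_pos j with hj0 | hj0
      · subst hj0
        rw [hue] at heq
        exact absurd ⟨i, heq⟩ he'
      · have hj1 : j - 1 < n := by omega
        have hst := hstep (j-1) hj1
        rw [show j - 1 + 1 = j by omega] at hst
        rw [← hst] at heq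
        have : i = u (j-1) := hφ heq
        rw [this] at hi
        exact absurd (uT (j-1) (by omega)) hi
    · exact hφ heq
  -- injectivity of ψ'
  have hψ'inj : Function.Injective ψ' := by
    intro i i' heq
    by_cases hi : i ∈ T <;> by_cases hi' : i' ∈ T <;>
      simp only [hψ'_def, if_pos, if_neg, hi, hi', if_true, if_false] at heq
    · exact hφ heq
    · obtain ⟨j, hj, rfl⟩ := (hmemT i).mp hi
      rcases eq_or_lt_of_le hj with hjn | hjn
      · subst hjn
        exact absurd ⟨i', heq.symm⟩ hexit
      · rw [hstep j hjn] at heq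
        have : u (j+1) = i' := hψ heq
        rw [← this] at hi'
        exact absurd (uT (j+1) (by omega)) hi'
    · obtain ⟨j, hj, rfl⟩ := (hmemT i').mp hi'
      rcases eq_or_lt_of_le hj with hjn | hjn
      · subst hjn
        exact absurd ⟨i, heq⟩ hexit
      · rw [hstep j hjn] at heq
        have : i = u (j+1) := hψ heq
        rw [this] at hi
        exact absurd (uT (j+1) (by omega)) hi
    · exact hψ heq
  -- range of φ'
  have hrφ : Set.range φ' = insert e (Set.range φ \ {φ (u n)}) := by
    ext x
    constructor
    · rintro ⟨i, rfl⟩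
      by_cases hi : i ∈ T
      · obtain ⟨j, hj, rfl⟩ := (hmemT i).mp hi
        simp only [hφ'_def, if_pos hi]
        rcases Nat.eq_zero_or_pos j with hj0 | hj0
        · subst hj0; rw [hue]; exact Set.mem_insert _ _
        · have hj1 : j - 1 < n := by omega
          have hst := hstep (j-1) hj1
          rw [show j - 1 + 1 = j by omega] at hst
          refine Set.mem_insert_of_mem _ ⟨⟨u (j-1), hst⟩, ?_⟩
          simp only [Set.mem_singleton_iff]
          intro hcontr
          rw [← hst] at hcontr
          have : u (j-1) = u n := hφ hcontr
          have := huinj (j-1) n (by omega) le_rfl this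
          omega
      · simp only [hφ'_def, if_neg hi]
        refine Set.mem_insert_of_mem _ ⟨⟨i, rfl⟩, ?_⟩
        simp only [Set.mem_singleton_iff]
        intro hcontr
        have : i = u n := hφ hcontr
        rw [this] at hi
        exact hi (uT n le_rfl)
    · intro hx
      rcases Set.mem_insert_iff.mp hx with rfl | ⟨⟨i, rfl⟩, hne⟩
      · refine ⟨u 0, ?_⟩
        simp only [hφ'_def, if_pos (uT 0 (Nat.zero_le n))]
        exact hue
      · simp only [Set.mem_singleton_iff] at hne
        by_cases hi : i ∈ T
        · obtain ⟨j, hj, rfl⟩ := (hmemT i).mp hi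
          have hjn : j < n := by
            rcases eq_or_lt_of_le hj with h | h
            · exact absurd (by rw [h]) hne
            · exact h
          refine ⟨u (j+1), ?_⟩
          simp only [hφ'_def, if_pos (uT (j+1) (by omega))]
          exact (hstep j hjn).symm
        · exact ⟨i, by simp only [hφ'_def, if_neg hi]⟩
  -- range of ψ'
  have hrψ : Set.range ψ' = insert (φ (u n)) (Set.range ψ \ {e}) := by
    ext x
    constructor
    · rintro ⟨i, rfl⟩
      by_cases hi : i ∈ T
      · obtain ⟨j, hj, rfl⟩ := (hmemT i).mp hi
        simp only [hψ'_def, if_pos hi]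
        rcases eq_or_lt_of_le hj with hjn | hjn
        · subst hjn; exact Set.mem_insert _ _
        · rw [hstep j hjn]
          refine Set.mem_insert_of_mem _ ⟨⟨u (j+1), rfl⟩, ?_⟩
          simp only [Set.mem_singleton_iff]
          intro hcontr
          rw [← hue] at hcontr
          have := huinj (j+1) 0 (by omega) (Nat.zero_le n) (hψ hcontr)
          omega
      · simp only [hψ'_def, if_neg hi]
        refine Set.mem_insert_of_mem _ ⟨⟨i, rfl⟩, ?_⟩
        simp only [Set.mem_singleton_iff]
        intro hcontr
        rw [← hue] at hcontr
        have : i = u 0 := hψ hcontr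
        rw [this] at hi
        exact hi (uT 0 (Nat.zero_le n))
    · intro hx
      rcases Set.mem_insert_iff.mp hx with rfl | ⟨⟨i, rfl⟩, hne⟩
      · exact ⟨u n, by simp only [hψ'_def, if_pos (uT n le_rfl)]⟩
      · simp only [Set.mem_singleton_iff] at hne
        by_cases hi : i ∈ T
        · obtain ⟨j, hj, rfl⟩ := (hmemT i).mp hi
          have hj0 : 0 < j := by
            rcases Nat.eq_zero_or_pos j with h | h
            · subst h; exact absurd hue hne
            · exact h
          refine ⟨u (j-1), ?_⟩
          simp only [hψ'_def, if_pos (uT (j-1) (by omega))]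
          have hst := hstep (j-1) (by omega)
          rw [show j - 1 + 1 = j by omega] at hst
          exact hst
        · exact ⟨i, by simp only [hψ'_def, if_neg hi]⟩
  exact ⟨n, u, φ', ψ', huinj, hue, hstep, hexit, hswap, ⟨honT, hoffT⟩, hφ'inj, hψ'inj, hrφ, hrψ⟩



variable {N : ℕ}

lemma walks_disjoint (φ ψ : Fin N → ℤ) (hφ : Function.Injective φ)
    (hψ : Function.Injective ψ) (u v : ℕ → Fin N) (n m : ℕ)
    (hu0 : ψ (u 0) ∉ Set.range φ) (hv0 : ψ (v 0) ∉ Set.range φ)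
    (hne : ψ (u 0) ≠ ψ (v 0))
    (hustep : ∀ j, j < n → φ (u j) = ψ (u (j+1)))
    (hvstep : ∀ k, k < m → φ (v k) = ψ (v (k+1))) :
    ∀ j k, j ≤ n → k ≤ m → u j ≠ v k := by
  intro j
  induction j with
  | zero =>
    intro k _ hk heq
    cases k with
    | zero => exact hne (by rw [heq])
    | succ k' =>
      have h1 : ψ (u 0) = ψ (v (k'+1)) := by rw [heq]
      have h2 : φ (v k') = ψ (v (k'+1)) := hvstep k' (by omega)
      exact hu0 ⟨v k', by rw [h2, ← h1]⟩
  | succ j' ih =>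
    intro k hj hk heq
    cases k with
    | zero =>
      have h1 : ψ (u (j'+1)) = ψ (v 0) := by rw [heq]
      have h2 : φ (u j') = ψ (u (j'+1)) := hustep j' (by omega)
      exact hv0 ⟨u j', by rw [h2, h1]⟩
    | succ k' =>
      have h1 : ψ (u (j'+1)) = ψ (v (k'+1)) := by rw [heq]
      rw [← hustep j' (by omega), ← hvstep k' (by omega)] at h1
      exact ih k' (by omega) (by omega) (hφ h1)



lemma choice_lemma (yJ rJ yK rK : ℝ) (AJ AJ1 CK CK1 x yv z w : ℤ)
    (hxy : (x = AJ ∧ yv = AJ1) ∨ (x = AJ1 ∧ yv = AJ))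
    (hzw : (z = CK ∧ w = CK1) ∨ (z = CK1 ∧ w = CK))
    (hov : (x ≤ z ∧ z ≤ yv ∧ yv ≤ w) ∨ (z ≤ x ∧ x ≤ w ∧ w ≤ yv)) :
    ∃ X1 X2 Y1 Y2 : ℤ,
      ((X1 = CK ∧ X2 = CK1) ∨ (X1 = CK1 ∧ X2 = CK)) ∧
      ((Y1 = AJ ∧ Y2 = AJ1) ∨ (Y1 = AJ1 ∧ Y2 = AJ)) ∧
      (|yJ + (AJ : ℝ) * rJ| + |yJ + (AJ1 : ℝ) * rJ|
        + (|yK + (CK : ℝ) * rK| + |yK + (CK1 : ℝ) * rK|))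
      ≤ (|yJ + (X1 : ℝ) * rJ| + |yJ + (Y1 : ℝ) * rJ|
        + (|yK + (X2 : ℝ) * rK| + |yK + (Y2 : ℝ) * rK|)) := by
  rcases hxy with ⟨hx1, hx2⟩ | ⟨hx1, hx2⟩ <;> rcases hzw with ⟨hz1, hz2⟩ | ⟨hz1, hz2⟩ <;>
    subst hx1 <;> subst hx2 <;> subst hz1 <;> subst hz2 <;>
  all_goals
    rcases hov with ⟨ho1, ho2, ho3⟩ | ⟨ho1, ho2, ho3⟩
  all_goals try {
    have hat := atomic yJ rJ yK rK (x : ℝ) (z : ℝ) (yv : ℝ) (w : ℝ)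
      (by exact_mod_cast ho1) (by exact_mod_cast ho2) (by exact_mod_cast ho3)
    rcases le_max_iff.mp hat with h | h <;> rcases le_max_iff.mp h with h | h
    · exact ⟨z, w, x, yv, by tauto, by tauto, by linarith⟩
    · exact ⟨w, z, yv, x, by tauto, by tauto, by linarith⟩
    · exact ⟨w, z, x, yv, by tauto, by tauto, by linarith⟩
    · exact ⟨z, w, yv, x, by tauto, by tauto, by linarith⟩ }
  all_goals {
    have hat := atomic yK rK yJ rJ (z : ℝ) (x : ℝ) (w : ℝ) (yv : ℝ)
      (by exact_mod_cast ho1) (by exact_mod_cast ho2) (by exact_mod_cast ho3)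
    rcases le_max_iff.mp hat with h | h <;> rcases le_max_iff.mp h with h | h
    · exact ⟨w, z, yv, x, by tauto, by tauto, by linarith⟩
    · exact ⟨z, w, x, yv, by tauto, by tauto, by linarith⟩
    · exact ⟨w, z, x, yv, by tauto, by tauto, by linarith⟩
    · exact ⟨z, w, yv, x, by tauto, by tauto, by linarith⟩ }

lemma inj_of_range_ncard {N : ℕ} (hN : 0 < N) {f : Fin N → ℤ}
    (h : (Set.range f).ncard = N) : Function.Injective f := by
  by_contra hni
  rw [Function.not_injective_iff] at hni
  obtain ⟨i, i', hfe, hne⟩ := hni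
  have hsub : Set.range f ⊆ f '' (Set.univ \ {i'}) := by
    rintro xx ⟨j, rfl⟩
    by_cases hj : j = i'
    · subst hj; exact ⟨i, ⟨trivial, hne⟩, hfe⟩
    · exact ⟨j, ⟨trivial, hj⟩, rfl⟩
  have hle := Set.ncard_le_ncard hsub ((Set.univ \ {i'}).toFinite.image f)
  have himg := Set.ncard_image_le (s := Set.univ \ {i'}) (f := f) (Set.toFinite _)
  have hcard : (Set.univ \ {i'} : Set (Fin N)).ncard = N - 1 := by
    rw [Set.ncard_diff_singleton_of_mem (Set.mem_univ i'), Set.ncard_univ,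
      Nat.card_eq_fintype_card, Fintype.card_fin]
  omega

lemma recombine (y r : Fin N → ℝ) (φ ψ : Fin N → ℤ)
    (hφ : Function.Injective φ) (hψ : Function.Injective ψ)
    (u v : ℕ → Fin N) (n m : ℕ)
    (huinj : ∀ j k, j ≤ n → k ≤ n → u j = u k → j = k)
    (hvinj : ∀ j k, j ≤ m → k ≤ m → v j = v k → j = k)
    (hrowdisj : ∀ j k, j ≤ n → k ≤ m → u j ≠ v k)
    (hustep : ∀ j, j < n → φ (u j) = ψ (u (j+1)))
    (hvstep : ∀ k, k < m → φ (v k) = ψ (v (k+1)))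
    (hexitu : φ (u n) ∉ Set.range ψ) (hexitv : φ (v m) ∉ Set.range ψ)
    (hstartv : ψ (v 0) ∉ Set.range φ)
    (hord1 : ψ (u 0) < ψ (v 0)) (hord2 : ψ (v 0) < φ (u n)) (hord3 : φ (u n) < φ (v m)) :
    ∃ φ₃ ψ₃ : Fin N → ℤ, Function.Injective φ₃ ∧ Function.Injective ψ₃ ∧
      Set.range φ₃ = insert (ψ (v 0)) (Set.range φ \ {φ (u n)}) ∧
      Set.range ψ₃ = insert (φ (u n)) (Set.range ψ \ {ψ (v 0)}) ∧
      (∑ i, (|y i + (φ i : ℝ) * r i| + |y i + (ψ i : ℝ) * r i|))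
        ≤ (∑ i, (|y i + (φ₃ i : ℝ) * r i| + |y i + (ψ₃ i : ℝ) * r i|)) := by
  classical
  have hNpos : 0 < N := (u 0).pos
  set A : ℕ → ℤ := fun j => if j ≤ n then ψ (u j) else φ (u n) with hA_def
  set C : ℕ → ℤ := fun k => if k ≤ m then ψ (v k) else φ (v m) with hC_def
  have hA : ∀ j, j ≤ n → A j = ψ (u j) := by intro j hj; simp [hA_def, hj]
  have hC : ∀ k, k ≤ m → C k = ψ (v k) := by intro k hk; simp [hC_def, hk]
  have hA2 : ∀ j, j ≤ n → A (j+1) = φ (u j) := by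
    intro j hj
    by_cases h : j + 1 ≤ n
    · rw [hA (j+1) h]; exact (hustep j (by omega)).symm
    · have hjn : j = n := by omega
      subst hjn
      simp [hA_def, h]
  have hC2 : ∀ k, k ≤ m → C (k+1) = φ (v k) := by
    intro k hk
    by_cases h : k + 1 ≤ m
    · rw [hC (k+1) h]; exact (hvstep k (by omega)).symm
    · have hkm : k = m := by omega
      subst hkm
      simp [hC_def, h]
  have hAC : ∀ j k, j ≤ n+1 → k ≤ m+1 → A j ≠ C k := by
    intro j k hj hk
    by_cases hjn : j ≤ n <;> by_cases hkm : k ≤ m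
    · rw [hA j hjn, hC k hkm]
      intro h
      exact hrowdisj j k hjn hkm (hψ h)
    · have hk1 : k = m+1 := by omega
      subst hk1
      rw [hA j hjn, hC2 m le_rfl]
      intro h
      exact hexitv ⟨u j, h⟩
    · have hj1 : j = n+1 := by omega
      subst hj1
      rw [hA2 n le_rfl, hC k hkm]
      intro h
      exact hexitu ⟨v k, h.symm⟩
    · have hj1 : j = n+1 := by omega
      have hk1 : k = m+1 := by omega
      subst hj1; subst hk1
      rw [hA2 n le_rfl, hC2 m le_rfl]
      intro h
      exact hrowdisj n m le_rfl le_rfl (hφ h)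
  have hAinj : ∀ j j', j ≤ n+1 → j' ≤ n+1 → A j = A j' → j = j' := by
    intro j j' hj hj'
    by_cases h1 : j ≤ n <;> by_cases h2 : j' ≤ n
    · rw [hA j h1, hA j' h2]; intro h; exact huinj j j' h1 h2 (hψ h)
    · have : j' = n+1 := by omega
      subst this
      rw [hA j h1, hA2 n le_rfl]
      intro h
      exact absurd ⟨u j, h⟩ hexitu
    · have : j = n+1 := by omega
      subst this
      rw [hA j' h2, hA2 n le_rfl]
      intro h
      exact absurd ⟨u j', h.symm⟩ hexitu
    · omega
  have hCinj : ∀ k k', k ≤ m+1 → k' ≤ m+1 → C k = C k' → k = k' := by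
    intro k k' hk hk'
    by_cases h1 : k ≤ m <;> by_cases h2 : k' ≤ m
    · rw [hC k h1, hC k' h2]; intro h; exact hvinj k k' h1 h2 (hψ h)
    · have : k' = m+1 := by omega
      subst this
      rw [hC k h1, hC2 m le_rfl]
      intro h
      exact absurd ⟨v k, h⟩ hexitv
    · have : k = m+1 := by omega
      subst this
      rw [hC k' h2, hC2 m le_rfl]
      intro h
      exact absurd ⟨v k', h.symm⟩ hexitv
    · omega
  have hcr := crossing_exists A C (n+1) (m+1) hAC
      (by rw [hA 0 (by omega), hC 0 (by omega)]; exact hord1)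
      (by rw [hC 0 (by omega), hA2 n le_rfl]; exact hord2)
      (by rw [hA2 n le_rfl, hC2 m le_rfl]; exact hord3)
  obtain ⟨J, hJ, K, hK, x, yv, z, w, hxy, hzw, hov⟩ := hcr
  have hJn : J ≤ n := by omega
  have hKm : K ≤ m := by omega
  obtain ⟨X1, X2, Y1, Y2, hXform, hYform, hval⟩ :=
    choice_lemma (y (u J)) (r (u J)) (y (v K)) (r (v K))
      (A J) (A (J+1)) (C K) (C (K+1)) x yv z w hxy hzw hov
  set Pset : Finset (Fin N) := ((Finset.Ioc J n).image u) ∪ ((Finset.range K).image v)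
    with hP_def
  have hPmem : ∀ i : Fin N, i ∈ Pset ↔ ((∃ t, J < t ∧ t ≤ n ∧ u t = i) ∨ (∃ t, t < K ∧ v t = i)) := by
    intro i
    simp [hP_def, Finset.mem_union, Finset.mem_image, Finset.mem_Ioc, Finset.mem_range]
    constructor
    · rintro (⟨t, ⟨h1, h2⟩, h3⟩ | ⟨t, h1, h2⟩)
      · exact Or.inl ⟨t, h1, h2, h3⟩
      · exact Or.inr ⟨t, h1, h2⟩
    · rintro (⟨t, h1, h2, h3⟩ | ⟨t, h1, h2⟩)
      · exact Or.inl ⟨t, ⟨h1, h2⟩, h3⟩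
      · exact Or.inr ⟨t, h1, h2⟩
  set φ₃ : Fin N → ℤ := fun i => if i = u J then X1 else if i = v K then X2 else
    if i ∈ Pset then ψ i else φ i with hφ₃_def
  set ψ₃ : Fin N → ℤ := fun i => if i = u J then Y1 else if i = v K then Y2 else
    if i ∈ Pset then φ i else ψ i with hψ₃_def
  have huJvK : u J ≠ v K := hrowdisj J K hJn hKm
  -- evaluation lemmas
  have evφ1 : φ₃ (u J) = X1 := by simp [hφ₃_def]
  have evψ1 : ψ₃ (u J) = Y1 := by simp [hψ₃_def]
  have hvKuJ : ¬ (v K = u J) := fun h => huJvK h.symm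
  have evφ2 : φ₃ (v K) = X2 := by simp [hφ₃_def, hvKuJ]
  have evψ2 : ψ₃ (v K) = Y2 := by simp [hψ₃_def, hvKuJ]
  have evφ3 : ∀ t, J < t → t ≤ n → φ₃ (u t) = ψ (u t) := by
    intro t ht1 ht2
    have h1 : ¬ (u t = u J) := fun h => absurd (huinj t J ht2 hJn h) (by omega)
    have h2 : ¬ (u t = v K) := hrowdisj t K ht2 hKm
    have h3 : u t ∈ Pset := (hPmem (u t)).mpr (Or.inl ⟨t, ht1, ht2, rfl⟩)
    simp [hφ₃_def, h1, h2, h3]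
  have evψ3 : ∀ t, J < t → t ≤ n → ψ₃ (u t) = φ (u t) := by
    intro t ht1 ht2
    have h1 : ¬ (u t = u J) := fun h => absurd (huinj t J ht2 hJn h) (by omega)
    have h2 : ¬ (u t = v K) := hrowdisj t K ht2 hKm
    have h3 : u t ∈ Pset := (hPmem (u t)).mpr (Or.inl ⟨t, ht1, ht2, rfl⟩)
    simp [hψ₃_def, h1, h2, h3]
  have evφ4 : ∀ t, t < K → φ₃ (v t) = ψ (v t) := by
    intro t ht
    have h1 : ¬ (v t = u J) := fun h => hrowdisj J t hJn (by omega) h.symm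
    have h2 : ¬ (v t = v K) := fun h => absurd (hvinj t K (by omega) hKm h) (by omega)
    have h3 : v t ∈ Pset := (hPmem (v t)).mpr (Or.inr ⟨t, ht, rfl⟩)
    simp [hφ₃_def, h1, h2, h3]
  have evψ4 : ∀ t, t < K → ψ₃ (v t) = φ (v t) := by
    intro t ht
    have h1 : ¬ (v t = u J) := fun h => hrowdisj J t hJn (by omega) h.symm
    have h2 : ¬ (v t = v K) := fun h => absurd (hvinj t K (by omega) hKm h) (by omega)
    have h3 : v t ∈ Pset := (hPmem (v t)).mpr (Or.inr ⟨t, ht, rfl⟩)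
    simp [hψ₃_def, h1, h2, h3]
  have evother : ∀ i, i ≠ u J → i ≠ v K → i ∉ Pset → (φ₃ i = φ i ∧ ψ₃ i = ψ i) := by
    intro i h1 h2 h3
    constructor
    · simp [hφ₃_def, h1, h2, h3]
    · simp [hψ₃_def, h1, h2, h3]
  -- X/Y value facts
  have hX1mem : X1 = C K ∨ X1 = C (K+1) := by
    rcases hXform with ⟨h, -⟩ | ⟨h, -⟩
    exacts [Or.inl h, Or.inr h]
  have hX2mem : X2 = C K ∨ X2 = C (K+1) := by
    rcases hXform with ⟨-, h⟩ | ⟨-, h⟩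
    exacts [Or.inr h, Or.inl h]
  have hY1mem : Y1 = A J ∨ Y1 = A (J+1) := by
    rcases hYform with ⟨h, -⟩ | ⟨h, -⟩
    exacts [Or.inl h, Or.inr h]
  have hY2mem : Y2 = A J ∨ Y2 = A (J+1) := by
    rcases hYform with ⟨-, h⟩ | ⟨-, h⟩
    exacts [Or.inr h, Or.inl h]
  have hCK0 : K = 0 → C K = ψ (v 0) := by intro h; subst h; exact hC 0 (by omega)
  -- C-values with positive index are in range φ
  have hCpos : ∀ k, 1 ≤ k → k ≤ m+1 → C k = φ (v (k-1)) := by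
    intro k h1 h2
    have := hC2 (k-1) (by omega)
    rwa [show k - 1 + 1 = k by omega] at this
  have hApos : ∀ j, 1 ≤ j → j ≤ n+1 → A j = φ (u (j-1)) := by
    intro j h1 h2
    have := hA2 (j-1) (by omega)
    rwa [show j - 1 + 1 = j by omega] at this
  -- classification of arbitrary rows
  have hclass2 : ∀ i : Fin N, (∃ t, t ≤ n ∧ i = u t) ∨ (∃ t, t ≤ m ∧ i = v t) ∨
      ((∀ t, t ≤ n → i ≠ u t) ∧ (∀ t, t ≤ m → i ≠ v t)) := by
    intro i
    by_cases h1 : ∃ t, t ≤ n ∧ i = u t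
    · exact Or.inl h1
    by_cases h2 : ∃ t, t ≤ m ∧ i = v t
    · exact Or.inr (Or.inl h2)
    push_neg at h1 h2
    exact Or.inr (Or.inr ⟨h1, h2⟩)
  -- distinctness
  have hX12 : X1 ≠ X2 := by
    rcases hXform with ⟨ha, hb⟩ | ⟨ha, hb⟩ <;> subst ha <;> subst hb <;>
      · intro h
        have := hCinj _ _ (by omega) (by omega) h
        omega
  have hY12 : Y1 ≠ Y2 := by
    rcases hYform with ⟨ha, hb⟩ | ⟨ha, hb⟩ <;> subst ha <;> subst hb <;>
      · intro h
        have := hAinj _ _ (by omega) (by omega) h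
        omega
  -- range of φ₃
  have hrangeφ₃ : Set.range φ₃ = insert (C 0) (Set.range φ \ {A (n+1)}) := by
    ext mv
    constructor
    · rintro ⟨i, rfl⟩
      by_cases hi1 : i = u J
      · subst hi1; rw [evφ1]
        rcases hX1mem with h | h <;> rw [h]
        · rcases Nat.eq_zero_or_pos K with hK0 | hK0
          · subst hK0; exact Set.mem_insert _ _
          · refine Set.mem_insert_of_mem _ ⟨⟨v (K-1), (hCpos K (by omega) (by omega)).symm⟩, ?_⟩
            simp only [Set.mem_singleton_iff]
            exact fun hcc => (hAC (n+1) K le_rfl (by omega)) hcc.symm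
        · refine Set.mem_insert_of_mem _ ⟨⟨v K, (hC2 K hKm).symm⟩, ?_⟩
          simp only [Set.mem_singleton_iff]
          exact fun hcc => (hAC (n+1) (K+1) le_rfl (by omega)) hcc.symm
      · by_cases hi2 : i = v K
        · subst hi2; rw [evφ2]
          rcases hX2mem with h | h <;> rw [h]
          · rcases Nat.eq_zero_or_pos K with hK0 | hK0
            · subst hK0; exact Set.mem_insert _ _
            · refine Set.mem_insert_of_mem _ ⟨⟨v (K-1), (hCpos K (by omega) (by omega)).symm⟩, ?_⟩
              simp only [Set.mem_singleton_iff]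
              exact fun hcc => (hAC (n+1) K le_rfl (by omega)) hcc.symm
          · refine Set.mem_insert_of_mem _ ⟨⟨v K, (hC2 K hKm).symm⟩, ?_⟩
            simp only [Set.mem_singleton_iff]
            exact fun hcc => (hAC (n+1) (K+1) le_rfl (by omega)) hcc.symm
        · by_cases hi3 : i ∈ Pset
          · rcases (hPmem i).mp hi3 with ⟨t, ht1, ht2, rfl⟩ | ⟨t, ht, rfl⟩
            · rw [evφ3 t ht1 ht2]
              refine Set.mem_insert_of_mem _ ⟨⟨u (t-1), ?_⟩, ?_⟩
              · rw [← hApos t (by omega) (by omega), hA t ht2]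
              · simp only [Set.mem_singleton_iff]
                rw [← hA t ht2]
                intro h
                have := hAinj t (n+1) (by omega) le_rfl h
                omega
            · rw [evφ4 t ht]
              rcases Nat.eq_zero_or_pos t with ht0 | ht0
              · subst ht0
                rw [← hC 0 (by omega)]
                exact Set.mem_insert _ _
              · refine Set.mem_insert_of_mem _ ⟨⟨v (t-1), ?_⟩, ?_⟩
                · rw [← hCpos t (by omega) (by omega), hC t (by omega)]
                · simp only [Set.mem_singleton_iff]
                  rw [← hC t (by omega)]
                  intro h
                  exact (hAC (n+1) t le_rfl (by omega)) h.symm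
          · rw [(evother i hi1 hi2 hi3).1]
            refine Set.mem_insert_of_mem _ ⟨⟨i, rfl⟩, ?_⟩
            simp only [Set.mem_singleton_iff]
            rw [hApos (n+1) (by omega) le_rfl]
            intro h
            have hin : i = u (n+1-1) := hφ h
            rw [show n+1-1 = n by omega] at hin
            rcases Nat.lt_or_ge J n with hJltn | hJgen
            · apply hi3
              rw [hin]
              exact (hPmem _).mpr (Or.inl ⟨n, hJltn, le_rfl, rfl⟩)
            · have hJeq : J = n := by omega
              exact hi1 (by rw [hin, hJeq])
    · intro hmem
      rcases Set.mem_insert_iff.mp hmem with rfl | ⟨⟨i0, rfl⟩, hne⟩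
      · rcases Nat.eq_zero_or_pos K with hK0 | hK0
        · subst hK0
          rcases hXform with ⟨h1, h2⟩ | ⟨h1, h2⟩
          · exact ⟨u J, by rw [evφ1, h1]⟩
          · exact ⟨v 0, by rw [evφ2, h2]⟩
        · exact ⟨v 0, by rw [evφ4 0 hK0, ← hC 0 (by omega)]⟩
      · simp only [Set.mem_singleton_iff] at hne
        rcases hclass2 i0 with ⟨t, ht, rfl⟩ | ⟨t, ht, rfl⟩ | ⟨hnu, hnv⟩
        · have htn : t < n := by
            rcases eq_or_lt_of_le ht with hh | hh
            · exfalso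
              apply hne
              rw [hh, ← hA2 n le_rfl]
            · exact hh
          rcases Nat.lt_or_ge t J with h | h
          · have h1 : u t ≠ u J := fun hh => by
              have := huinj t J (by omega) hJn hh; omega
            have h2 : u t ≠ v K := hrowdisj t K (by omega) hKm
            have h3 : u t ∉ Pset := by
              intro hc
              rcases (hPmem _).mp hc with ⟨t', ht1', ht2', heq⟩ | ⟨t', ht', heq⟩
              · have := huinj t' t ht2' (by omega) heq; omega
              · exact hrowdisj t t' (by omega) (by omega) heq.symm
            exact ⟨u t, (evother _ h1 h2 h3).1⟩
          · refine ⟨u (t+1), ?_⟩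
            rw [evφ3 (t+1) (by omega) (by omega), ← hA (t+1) (by omega), hA2 t ht]
        · rcases Nat.lt_or_ge (t+1) K with h | h
          · exact ⟨v (t+1), by rw [evφ4 (t+1) h, ← hC (t+1) (by omega), hC2 t ht]⟩
          · rcases eq_or_lt_of_le h with h' | h'
            · rcases hXform with ⟨h1, h2⟩ | ⟨h1, h2⟩
              · exact ⟨u J, by rw [evφ1, h1, h', hC2 t ht]⟩
              · exact ⟨v K, by rw [evφ2, h2, h', hC2 t ht]⟩
            · rcases eq_or_lt_of_le (show K + 1 ≤ t + 1 by omega) with h'' | h''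
              · rcases hXform with ⟨h1, h2⟩ | ⟨h1, h2⟩
                · exact ⟨v K, by rw [evφ2, h2, h'', hC2 t ht]⟩
                · exact ⟨u J, by rw [evφ1, h1, h'', hC2 t ht]⟩
              · have h1 : v t ≠ u J := fun hh => hrowdisj J t hJn ht hh.symm
                have h2 : v t ≠ v K := fun hh => by
                  have := hvinj t K ht hKm hh; omega
                have h3 : v t ∉ Pset := by
                  intro hc
                  rcases (hPmem _).mp hc with ⟨t', ht1', ht2', heq⟩ | ⟨t', ht', heq⟩
                  · exact hrowdisj t' t ht2' ht heq
                  · have := hvinj t' t (by omega) ht heq; omega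
                exact ⟨v t, (evother _ h1 h2 h3).1⟩
        · have h1 : i0 ≠ u J := hnu J hJn
          have h2 : i0 ≠ v K := hnv K hKm
          have h3 : i0 ∉ Pset := by
            intro hc
            rcases (hPmem _).mp hc with ⟨t', ht1', ht2', heq⟩ | ⟨t', ht', heq⟩
            · exact hnu t' ht2' heq.symm
            · exact hnv t' (by omega) heq.symm
          exact ⟨i0, (evother _ h1 h2 h3).1⟩
  -- range of ψ₃
  have hrangeψ₃ : Set.range ψ₃ = insert (A (n+1)) (Set.range ψ \ {C 0}) := by
    ext mv
    constructor
    · rintro ⟨i, rfl⟩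
      by_cases hi1 : i = u J
      · subst hi1; rw [evψ1]
        rcases hY1mem with h | h <;> rw [h]
        · refine Set.mem_insert_of_mem _ ⟨⟨u J, (hA J hJn).symm⟩, ?_⟩
          simp only [Set.mem_singleton_iff]
          exact hAC J 0 (by omega) (by omega)
        · rcases eq_or_lt_of_le hJn with hJeq | hJlt
          · rw [hJeq]; exact Set.mem_insert _ _
          · refine Set.mem_insert_of_mem _ ⟨⟨u (J+1), (hA (J+1) (by omega)).symm⟩, ?_⟩
            simp only [Set.mem_singleton_iff]
            exact hAC (J+1) 0 (by omega) (by omega)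
      · by_cases hi2 : i = v K
        · subst hi2; rw [evψ2]
          rcases hY2mem with h | h <;> rw [h]
          · refine Set.mem_insert_of_mem _ ⟨⟨u J, (hA J hJn).symm⟩, ?_⟩
            simp only [Set.mem_singleton_iff]
            exact hAC J 0 (by omega) (by omega)
          · rcases eq_or_lt_of_le hJn with hJeq | hJlt
            · rw [hJeq]; exact Set.mem_insert _ _
            · refine Set.mem_insert_of_mem _ ⟨⟨u (J+1), (hA (J+1) (by omega)).symm⟩, ?_⟩
              simp only [Set.mem_singleton_iff]
              exact hAC (J+1) 0 (by omega) (by omega)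
        · by_cases hi3 : i ∈ Pset
          · rcases (hPmem i).mp hi3 with ⟨t, ht1, ht2, rfl⟩ | ⟨t, ht, rfl⟩
            · rw [evψ3 t ht1 ht2, ← hA2 t ht2]
              rcases eq_or_lt_of_le ht2 with hteq | htlt
              · rw [hteq]; exact Set.mem_insert _ _
              · refine Set.mem_insert_of_mem _ ⟨⟨u (t+1), (hA (t+1) (by omega)).symm⟩, ?_⟩
                simp only [Set.mem_singleton_iff]
                exact hAC (t+1) 0 (by omega) (by omega)
            · rw [evψ4 t ht, ← hC2 t (by omega)]
              refine Set.mem_insert_of_mem _ ⟨⟨v (t+1), (hC (t+1) (by omega)).symm⟩, ?_⟩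
              simp only [Set.mem_singleton_iff]
              intro h
              have := hCinj (t+1) 0 (by omega) (by omega) h
              omega
          · rw [(evother i hi1 hi2 hi3).2]
            refine Set.mem_insert_of_mem _ ⟨⟨i, rfl⟩, ?_⟩
            simp only [Set.mem_singleton_iff]
            rw [hC 0 (by omega)]
            intro h
            have hin : i = v 0 := hψ h
            rcases Nat.eq_zero_or_pos K with hK0 | hK0
            · exact hi2 (by rw [hin, hK0])
            · apply hi3
              rw [hin]
              exact (hPmem _).mpr (Or.inr ⟨0, hK0, rfl⟩)
    · intro hmem
      rcases Set.mem_insert_iff.mp hmem with rfl | ⟨⟨i0, rfl⟩, hne⟩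
      · rcases eq_or_lt_of_le hJn with hJeq | hJlt
        · rcases hYform with ⟨h1, h2⟩ | ⟨h1, h2⟩
          · exact ⟨v K, by rw [evψ2, h2, hJeq]⟩
          · exact ⟨u J, by rw [evψ1, h1, hJeq]⟩
        · exact ⟨u n, by rw [evψ3 n hJlt le_rfl, ← hA2 n le_rfl]⟩
      · simp only [Set.mem_singleton_iff] at hne
        rcases hclass2 i0 with ⟨t, ht, rfl⟩ | ⟨t, ht, rfl⟩ | ⟨hnu, hnv⟩
        · rcases Nat.lt_or_ge t J with h | h
          · have h1 : u t ≠ u J := fun hh => by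
              have := huinj t J ht hJn hh; omega
            have h2 : u t ≠ v K := hrowdisj t K ht hKm
            have h3 : u t ∉ Pset := by
              intro hc
              rcases (hPmem _).mp hc with ⟨t', ht1', ht2', heq⟩ | ⟨t', ht', heq⟩
              · have := huinj t' t ht2' ht heq; omega
              · exact hrowdisj t t' ht (by omega) heq.symm
            exact ⟨u t, (evother _ h1 h2 h3).2⟩
          · rcases eq_or_lt_of_le h with h' | h'
            · rcases hYform with ⟨h1, h2⟩ | ⟨h1, h2⟩
              · exact ⟨u J, by rw [evψ1, h1, h', hA t ht]⟩
              · exact ⟨v K, by rw [evψ2, h2, h', hA t ht]⟩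
            · rcases eq_or_lt_of_le (show J + 1 ≤ t by omega) with h'' | h''
              · rcases hYform with ⟨h1, h2⟩ | ⟨h1, h2⟩
                · exact ⟨v K, by rw [evψ2, h2, h'', hA t ht]⟩
                · exact ⟨u J, by rw [evψ1, h1, h'', hA t ht]⟩
              · refine ⟨u (t-1), ?_⟩
                rw [evψ3 (t-1) (by omega) (by omega), ← hApos t (by omega) (by omega), hA t ht]
        · rcases Nat.eq_zero_or_pos t with ht0 | ht0
          · exfalso; apply hne; rw [ht0, hC 0 (by omega)]
          · rcases Nat.lt_or_ge t (K+1) with h | h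
            · refine ⟨v (t-1), ?_⟩
              rw [evψ4 (t-1) (by omega), ← hCpos t (by omega) (by omega), hC t ht]
            · have h1 : v t ≠ u J := fun hh => hrowdisj J t hJn ht hh.symm
              have h2 : v t ≠ v K := fun hh => by
                have := hvinj t K ht hKm hh; omega
              have h3 : v t ∉ Pset := by
                intro hc
                rcases (hPmem _).mp hc with ⟨t', ht1', ht2', heq⟩ | ⟨t', ht', heq⟩
                · exact hrowdisj t' t ht2' ht heq
                · have := hvinj t' t (by omega) ht heq; omega
              exact ⟨v t, (evother _ h1 h2 h3).2⟩
        · have h1 : i0 ≠ u J := hnu J hJn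
          have h2 : i0 ≠ v K := hnv K hKm
          have h3 : i0 ∉ Pset := by
            intro hc
            rcases (hPmem _).mp hc with ⟨t', ht1', ht2', heq⟩ | ⟨t', ht', heq⟩
            · exact hnu t' ht2' heq.symm
            · exact hnv t' (by omega) heq.symm
          exact ⟨i0, (evother _ h1 h2 h3).2⟩
  -- cardinalities and injectivity
  have hrφcard : (Set.range φ).ncard = N := by
    rw [← Set.image_univ, Set.ncard_image_of_injective _ hφ, Set.ncard_univ,
      Nat.card_eq_fintype_card, Fintype.card_fin]
  have hrψcard : (Set.range ψ).ncard = N := by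
    rw [← Set.image_univ, Set.ncard_image_of_injective _ hψ, Set.ncard_univ,
      Nat.card_eq_fintype_card, Fintype.card_fin]
  have hC0notφ : C 0 ∉ Set.range φ := by rw [hC 0 (by omega)]; exact hstartv
  have hAn1φ : A (n+1) ∈ Set.range φ := ⟨u n, (hA2 n le_rfl).symm⟩
  have hAn1notψ : A (n+1) ∉ Set.range ψ := by rw [hA2 n le_rfl]; exact hexitu
  have hC0ψ : C 0 ∈ Set.range ψ := ⟨v 0, (hC 0 (by omega)).symm⟩
  have hinjφ₃ : Function.Injective φ₃ := by
    apply inj_of_range_ncard hNpos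
    rw [hrangeφ₃, Set.ncard_insert_of_notMem (fun hc => hC0notφ hc.1)
      (((Set.finite_range φ).subset Set.diff_subset)),
      Set.ncard_diff_singleton_of_mem hAn1φ, hrφcard]
    omega
  have hinjψ₃ : Function.Injective ψ₃ := by
    apply inj_of_range_ncard hNpos
    rw [hrangeψ₃, Set.ncard_insert_of_notMem (fun hc => hAn1notψ hc.1)
      (((Set.finite_range ψ).subset Set.diff_subset)),
      Set.ncard_diff_singleton_of_mem hC0ψ, hrψcard]
    omega
  -- the sum inequality
  have hsum : (∑ i, (|y i + (φ i : ℝ) * r i| + |y i + (ψ i : ℝ) * r i|))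
      ≤ (∑ i, (|y i + (φ₃ i : ℝ) * r i| + |y i + (ψ₃ i : ℝ) * r i|)) := by
    have hvKmem : v K ∈ (Finset.univ.erase (u J)) :=
      Finset.mem_erase.mpr ⟨fun h => huJvK h.symm, Finset.mem_univ _⟩
    have hsplit : ∀ g : Fin N → ℝ, ∑ i, g i
        = g (u J) + (g (v K) + ∑ i ∈ (Finset.univ.erase (u J)).erase (v K), g i) := by
      intro g
      rw [Finset.add_sum_erase _ g hvKmem, Finset.add_sum_erase _ g (Finset.mem_univ (u J))]
    rw [hsplit (fun i => |y i + (φ i : ℝ) * r i| + |y i + (ψ i : ℝ) * r i|),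
        hsplit (fun i => |y i + (φ₃ i : ℝ) * r i| + |y i + (ψ₃ i : ℝ) * r i|)]
    have hrest : ∑ i ∈ (Finset.univ.erase (u J)).erase (v K),
        (|y i + (φ i : ℝ) * r i| + |y i + (ψ i : ℝ) * r i|)
        = ∑ i ∈ (Finset.univ.erase (u J)).erase (v K),
        (|y i + (φ₃ i : ℝ) * r i| + |y i + (ψ₃ i : ℝ) * r i|) := by
      apply Finset.sum_congr rfl
      intro i hi
      have hi1 : i ≠ v K := (Finset.mem_erase.mp hi).1
      have hi2 : i ≠ u J := (Finset.mem_erase.mp (Finset.mem_erase.mp hi).2).1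
      by_cases hi3 : i ∈ Pset
      · rcases (hPmem i).mp hi3 with ⟨t, ht1, ht2, rfl⟩ | ⟨t, ht, rfl⟩
        · rw [evφ3 t ht1 ht2, evψ3 t ht1 ht2]; ring
        · rw [evφ4 t ht, evψ4 t ht]; ring
      · rw [(evother i hi2 hi1 hi3).1, (evother i hi2 hi1 hi3).2]
    rw [hrest]
    have e1 : φ (u J) = A (J+1) := (hA2 J hJn).symm
    have e2 : ψ (u J) = A J := (hA J hJn).symm
    have e3 : φ (v K) = C (K+1) := (hC2 K hKm).symm
    have e4 : ψ (v K) = C K := (hC K hKm).symm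
    rw [e1, e2, e3, e4, evφ1, evψ1, evφ2, evψ2]
    linarith [hval]
  refine ⟨φ₃, ψ₃, hinjφ₃, hinjψ₃, ?_, ?_, hsum⟩
  · rw [hrangeφ₃, hC 0 (by omega), hA2 n le_rfl]
  · rw [hrangeψ₃, hC 0 (by omega), hA2 n le_rfl]

end L2

/-- Lemma 2: the shifted form of the conditional ultradiscrete Plücker relation.
Single-hat terms have columns running over `{2,…,N+2} ∖ {k}`, double-hat terms over
`{1,…,N+2} ∖ {k, k'}`. -/
theorem lemma2 (N : ℕ) (hN : 2 ≤ N) (y r : Fin N → ℝ)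
    (k₁ k₂ k₃ : ℤ) (hk₁ : 1 < k₁) (h₁₂ : k₁ < k₂) (h₂₃ : k₂ < k₃) (hk₃ : k₃ ≤ (N : ℤ) + 2) :
    upX (xcol y r) (omitOne N 2 k₂) + upX (xcol y r) (omitTwo N 1 k₁ k₃) =
      max (upX (xcol y r) (omitOne N 2 k₃) + upX (xcol y r) (omitTwo N 1 k₁ k₂))
          (upX (xcol y r) (omitOne N 2 k₁) + upX (xcol y r) (omitTwo N 1 k₂ k₃)) := by
  classical
  have hNpos : 0 < N := by omega
  have rAL := L2.range_omitOne (N := N) (k := k₂) (by omega) (by omega)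
  have rA1 := L2.range_omitOne (N := N) (k := k₃) (by omega) (by omega)
  have rA2 := L2.range_omitOne (N := N) (k := k₁) (by omega) (by omega)
  have rBL := L2.range_omitTwo (N := N) (k := k₁) (k' := k₃) (by omega) (by omega) (by omega)
  have rB1 := L2.range_omitTwo (N := N) (k := k₁) (k' := k₂) (by omega) (by omega) (by omega)
  have rB2 := L2.range_omitTwo (N := N) (k := k₂) (k' := k₃) (by omega) (by omega) (by omega)
  have iAL : Function.Injective (omitOne N 2 k₂) := L2.omitOne_inj
  have iA1 : Function.Injective (omitOne N 2 k₃) := L2.omitOne_inj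
  have iA2 : Function.Injective (omitOne N 2 k₁) := L2.omitOne_inj
  have iBL : Function.Injective (omitTwo N 1 k₁ k₃) := L2.omitTwo_inj (by omega)
  have iB1 : Function.Injective (omitTwo N 1 k₁ k₂) := L2.omitTwo_inj (by omega)
  have iB2 : Function.Injective (omitTwo N 1 k₂ k₃) := L2.omitTwo_inj (by omega)
  -- achievers
  have achieve : ∀ c : Fin N → ℤ, ∃ φ : Fin N → ℤ, Function.Injective φ ∧
      Set.range φ = Set.range c ∧ Function.Injective c →
      True := fun _ => ⟨0, by intro h; trivial⟩
  clear achieve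
  have achieve : ∀ c : Fin N → ℤ, Function.Injective c →
      ∃ φ : Fin N → ℤ, Function.Injective φ ∧ Set.range φ = Set.range c ∧
        upX (xcol y r) c = ∑ i, |y i + (φ i : ℝ) * r i| := by
    intro c hc
    obtain ⟨σ, hσ⟩ := L2.exists_upX (xcol y r) c
    refine ⟨c ∘ σ, hc.comp σ.injective, σ.surjective.range_comp c, ?_⟩
    rw [hσ]
    rfl
  have bound : ∀ (g c : Fin N → ℤ), Function.Injective g → Function.Injective c →
      Set.range g = Set.range c →
      (∑ i, |y i + (g i : ℝ) * r i|) ≤ upX (xcol y r) c := by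
    intro g c hg hc hr
    have := L2.sum_le_upX (xcol y r) c g hc hg hr
    exact this
  have swap_sum : ∀ (φ ψ φ' ψ' : Fin N → ℤ),
      (∀ i, (φ' i = φ i ∧ ψ' i = ψ i) ∨ (φ' i = ψ i ∧ ψ' i = φ i)) →
      (∑ i, |y i + (φ i : ℝ) * r i|) + (∑ i, |y i + (ψ i : ℝ) * r i|)
      = (∑ i, |y i + (φ' i : ℝ) * r i|) + (∑ i, |y i + (ψ' i : ℝ) * r i|) := by
    intro φ ψ φ' ψ' h
    rw [← Finset.sum_add_distrib, ← Finset.sum_add_distrib]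
    apply Finset.sum_congr rfl
    intro i _
    rcases h i with ⟨h1, h2⟩ | ⟨h1, h2⟩ <;> rw [h1, h2]
    ring
  -- the master lemma: from ranges (SA2, SB2) the value is at most TL
  have master : ∀ φ ψ : Fin N → ℤ, Function.Injective φ → Function.Injective ψ →
      Set.range φ = Set.range (omitOne N 2 k₁) → Set.range ψ = Set.range (omitTwo N 1 k₂ k₃) →
      (∑ i, |y i + (φ i : ℝ) * r i|) + (∑ i, |y i + (ψ i : ℝ) * r i|)
        ≤ upX (xcol y r) (omitOne N 2 k₂) + upX (xcol y r) (omitTwo N 1 k₁ k₃) := by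
    intro φ ψ hφ hψ hrφ hrψ
    have hk₁ψ : k₁ ∈ Set.range ψ := by
      rw [hrψ, rB2]; simp only [Set.mem_setOf_eq]; omega
    have hk₁φ : k₁ ∉ Set.range φ := by
      rw [hrφ, rA2]; simp only [Set.mem_setOf_eq]; omega
    obtain ⟨n, u, φ', ψ', huinj, hue, hustep, hexit, hswapPt, -, hφ'inj, hψ'inj, hrφ', hrψ'⟩ :=
      L2.walkSwap φ ψ hφ hψ k₁ hk₁ψ hk₁φ
    have hfmem : φ (u n) ∈ {m : ℤ | 2 ≤ m ∧ m ≤ (N:ℤ)+2 ∧ m ≠ k₁} := by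
      rw [← rA2, ← hrφ]; exact ⟨u n, rfl⟩
    have hfnot : φ (u n) ∉ {m : ℤ | 1 ≤ m ∧ m ≤ (N:ℤ)+2 ∧ m ≠ k₂ ∧ m ≠ k₃} := by
      rw [← rB2, ← hrψ]; exact hexit
    simp only [Set.mem_setOf_eq] at hfmem hfnot
    have hcases : φ (u n) = k₂ ∨ φ (u n) = k₃ := by omega
    rcases hcases with hf | hf
    · -- done: ranges become (SAL, SBL)
      have hrangeφ' : Set.range φ' = Set.range (omitOne N 2 k₂) := by
        rw [hrφ', hf, hrφ, rA2, rAL]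
        ext mv
        simp only [Set.mem_insert_iff, Set.mem_diff, Set.mem_setOf_eq, Set.mem_singleton_iff]
        omega
      have hrangeψ' : Set.range ψ' = Set.range (omitTwo N 1 k₁ k₃) := by
        rw [hrψ', hf, hrψ, rB2, rBL]
        ext mv
        simp only [Set.mem_insert_iff, Set.mem_diff, Set.mem_setOf_eq, Set.mem_singleton_iff]
        omega
      rw [swap_sum φ ψ φ' ψ' hswapPt]
      exact add_le_add (bound φ' _ hφ'inj iAL hrangeφ') (bound ψ' _ hψ'inj iBL hrangeψ')
    · -- stuck: second walk from 1
      have h1ψ : (1:ℤ) ∈ Set.range ψ := by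
        rw [hrψ, rB2]; simp only [Set.mem_setOf_eq]; omega
      have h1φ : (1:ℤ) ∉ Set.range φ := by
        rw [hrφ, rA2]; simp only [Set.mem_setOf_eq]; omega
      obtain ⟨n', u', φ'', ψ'', huinj', hue', hustep', hexit', -, -, -, -, -, -⟩ :=
        L2.walkSwap φ ψ hφ hψ 1 h1ψ h1φ
      have hdisj : ∀ j k, j ≤ n' → k ≤ n → u' j ≠ u k := by
        apply L2.walks_disjoint φ ψ hφ hψ u' u n' n
        · rw [hue']; exact h1φ
        · rw [hue]; exact hk₁φ
        · rw [hue, hue']; omega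
        · exact hustep'
        · exact hustep
      have hfmem' : φ (u' n') ∈ {m : ℤ | 2 ≤ m ∧ m ≤ (N:ℤ)+2 ∧ m ≠ k₁} := by
        rw [← rA2, ← hrφ]; exact ⟨u' n', rfl⟩
      have hfnot' : φ (u' n') ∉ {m : ℤ | 1 ≤ m ∧ m ≤ (N:ℤ)+2 ∧ m ≠ k₂ ∧ m ≠ k₃} := by
        rw [← rB2, ← hrψ]; exact hexit'
      simp only [Set.mem_setOf_eq] at hfmem' hfnot'
      have hne : φ (u' n') ≠ k₃ := by
        intro hc
        rw [← hf] at hc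
        exact hdisj n' n le_rfl le_rfl (hφ hc)
      have hf' : φ (u' n') = k₂ := by omega
      obtain ⟨φ₃, ψ₃, hinj₃, hinj₃', hr₃, hr₃', hsum₃⟩ :=
        L2.recombine y r φ ψ hφ hψ u' u n' n huinj' huinj hdisj hustep' hustep
          hexit' hexit (by rw [hue]; exact hk₁φ)
          (by rw [hue', hue]; omega) (by rw [hue, hf']; omega) (by rw [hf', hf]; omega)
      have hrangeφ₃ : Set.range φ₃ = Set.range (omitOne N 2 k₂) := by
        rw [hr₃, hue, hf', hrφ, rA2, rAL]
        ext mv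
        simp only [Set.mem_insert_iff, Set.mem_diff, Set.mem_setOf_eq, Set.mem_singleton_iff]
        omega
      have hrangeψ₃ : Set.range ψ₃ = Set.range (omitTwo N 1 k₁ k₃) := by
        rw [hr₃', hue, hf', hrψ, rB2, rBL]
        ext mv
        simp only [Set.mem_insert_iff, Set.mem_diff, Set.mem_setOf_eq, Set.mem_singleton_iff]
        omega
      have hstep1 : (∑ i, |y i + (φ i : ℝ) * r i|) + (∑ i, |y i + (ψ i : ℝ) * r i|)
          ≤ (∑ i, |y i + (φ₃ i : ℝ) * r i|) + (∑ i, |y i + (ψ₃ i : ℝ) * r i|) := by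
        rw [← Finset.sum_add_distrib, ← Finset.sum_add_distrib]
        exact hsum₃
      exact le_trans hstep1
        (add_le_add (bound φ₃ _ hinj₃ iAL hrangeφ₃) (bound ψ₃ _ hinj₃' iBL hrangeψ₃))
  -- direction T1 ≤ TL
  have dir1 : upX (xcol y r) (omitOne N 2 k₃) + upX (xcol y r) (omitTwo N 1 k₁ k₂)
      ≤ upX (xcol y r) (omitOne N 2 k₂) + upX (xcol y r) (omitTwo N 1 k₁ k₃) := by
    obtain ⟨φ, hφ, hrφ, hφval⟩ := achieve (omitOne N 2 k₃) iA1
    obtain ⟨ψ, hψ, hrψ, hψval⟩ := achieve (omitTwo N 1 k₁ k₂) iB1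
    rw [hφval, hψval]
    have hk₃ψ : k₃ ∈ Set.range ψ := by
      rw [hrψ, rB1]; simp only [Set.mem_setOf_eq]; omega
    have hk₃φ : k₃ ∉ Set.range φ := by
      rw [hrφ, rA1]; simp only [Set.mem_setOf_eq]; omega
    obtain ⟨n, u, φ', ψ', huinj, hue, hustep, hexit, hswapPt, -, hφ'inj, hψ'inj, hrφ', hrψ'⟩ :=
      L2.walkSwap φ ψ hφ hψ k₃ hk₃ψ hk₃φ
    have hfmem : φ (u n) ∈ {m : ℤ | 2 ≤ m ∧ m ≤ (N:ℤ)+2 ∧ m ≠ k₃} := by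
      rw [← rA1, ← hrφ]; exact ⟨u n, rfl⟩
    have hfnot : φ (u n) ∉ {m : ℤ | 1 ≤ m ∧ m ≤ (N:ℤ)+2 ∧ m ≠ k₁ ∧ m ≠ k₂} := by
      rw [← rB1, ← hrψ]; exact hexit
    simp only [Set.mem_setOf_eq] at hfmem hfnot
    have hcases : φ (u n) = k₁ ∨ φ (u n) = k₂ := by omega
    rw [swap_sum φ ψ φ' ψ' hswapPt]
    rcases hcases with hf | hf
    · -- exits k₁ : lands at (SA2, SB2), use master
      apply master φ' ψ' hφ'inj hψ'inj
      · rw [hrφ', hf, hrφ, rA1, rA2]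
        ext mv
        simp only [Set.mem_insert_iff, Set.mem_diff, Set.mem_setOf_eq, Set.mem_singleton_iff]
        omega
      · rw [hrψ', hf, hrψ, rB1, rB2]
        ext mv
        simp only [Set.mem_insert_iff, Set.mem_diff, Set.mem_setOf_eq, Set.mem_singleton_iff]
        omega
    · -- exits k₂ : lands at (SAL, SBL)
      have hrangeφ' : Set.range φ' = Set.range (omitOne N 2 k₂) := by
        rw [hrφ', hf, hrφ, rA1, rAL]
        ext mv
        simp only [Set.mem_insert_iff, Set.mem_diff, Set.mem_setOf_eq, Set.mem_singleton_iff]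
        omega
      have hrangeψ' : Set.range ψ' = Set.range (omitTwo N 1 k₁ k₃) := by
        rw [hrψ', hf, hrψ, rB1, rBL]
        ext mv
        simp only [Set.mem_insert_iff, Set.mem_diff, Set.mem_setOf_eq, Set.mem_singleton_iff]
        omega
      exact add_le_add (bound φ' _ hφ'inj iAL hrangeφ') (bound ψ' _ hψ'inj iBL hrangeψ')
  -- direction T2 ≤ TL
  have dir2 : upX (xcol y r) (omitOne N 2 k₁) + upX (xcol y r) (omitTwo N 1 k₂ k₃)
      ≤ upX (xcol y r) (omitOne N 2 k₂) + upX (xcol y r) (omitTwo N 1 k₁ k₃) := by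
    obtain ⟨φ, hφ, hrφ, hφval⟩ := achieve (omitOne N 2 k₁) iA2
    obtain ⟨ψ, hψ, hrψ, hψval⟩ := achieve (omitTwo N 1 k₂ k₃) iB2
    rw [hφval, hψval]
    exact master φ ψ hφ hψ hrφ hrψ
  -- direction TL ≤ max (T1, T2)
  have dir3 : upX (xcol y r) (omitOne N 2 k₂) + upX (xcol y r) (omitTwo N 1 k₁ k₃)
      ≤ max (upX (xcol y r) (omitOne N 2 k₃) + upX (xcol y r) (omitTwo N 1 k₁ k₂))
            (upX (xcol y r) (omitOne N 2 k₁) + upX (xcol y r) (omitTwo N 1 k₂ k₃)) := by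
    obtain ⟨φ, hφ, hrφ, hφval⟩ := achieve (omitOne N 2 k₂) iAL
    obtain ⟨ψ, hψ, hrψ, hψval⟩ := achieve (omitTwo N 1 k₁ k₃) iBL
    rw [hφval, hψval]
    have hk₂ψ : k₂ ∈ Set.range ψ := by
      rw [hrψ, rBL]; simp only [Set.mem_setOf_eq]; omega
    have hk₂φ : k₂ ∉ Set.range φ := by
      rw [hrφ, rAL]; simp only [Set.mem_setOf_eq]; omega
    obtain ⟨n, u, φ', ψ', huinj, hue, hustep, hexit, hswapPt, -, hφ'inj, hψ'inj, hrφ', hrψ'⟩ :=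
      L2.walkSwap φ ψ hφ hψ k₂ hk₂ψ hk₂φ
    have hfmem : φ (u n) ∈ {m : ℤ | 2 ≤ m ∧ m ≤ (N:ℤ)+2 ∧ m ≠ k₂} := by
      rw [← rAL, ← hrφ]; exact ⟨u n, rfl⟩
    have hfnot : φ (u n) ∉ {m : ℤ | 1 ≤ m ∧ m ≤ (N:ℤ)+2 ∧ m ≠ k₁ ∧ m ≠ k₃} := by
      rw [← rBL, ← hrψ]; exact hexit
    simp only [Set.mem_setOf_eq] at hfmem hfnot
    have hcases : φ (u n) = k₁ ∨ φ (u n) = k₃ := by omega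
    rw [swap_sum φ ψ φ' ψ' hswapPt]
    rcases hcases with hf | hf
    · -- lands at (SA2, SB2) : bounded by T2
      refine le_max_of_le_right ?_
      have hrangeφ' : Set.range φ' = Set.range (omitOne N 2 k₁) := by
        rw [hrφ', hf, hrφ, rAL, rA2]
        ext mv
        simp only [Set.mem_insert_iff, Set.mem_diff, Set.mem_setOf_eq, Set.mem_singleton_iff]
        omega
      have hrangeψ' : Set.range ψ' = Set.range (omitTwo N 1 k₂ k₃) := by
        rw [hrψ', hf, hrψ, rBL, rB2]
        ext mv
        simp only [Set.mem_insert_iff, Set.mem_diff, Set.mem_setOf_eq, Set.mem_singleton_iff]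
        omega
      exact add_le_add (bound φ' _ hφ'inj iA2 hrangeφ') (bound ψ' _ hψ'inj iB2 hrangeψ')
    · -- lands at (SA1, SB1) : bounded by T1
      refine le_max_of_le_left ?_
      have hrangeφ' : Set.range φ' = Set.range (omitOne N 2 k₃) := by
        rw [hrφ', hf, hrφ, rAL, rA1]
        ext mv
        simp only [Set.mem_insert_iff, Set.mem_diff, Set.mem_setOf_eq, Set.mem_singleton_iff]
        omega
      have hrangeψ' : Set.range ψ' = Set.range (omitTwo N 1 k₁ k₂) := by
        rw [hrψ', hf, hrψ, rBL, rB1]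
        ext mv
        simp only [Set.mem_insert_iff, Set.mem_diff, Set.mem_setOf_eq, Set.mem_singleton_iff]
        omega
      exact add_le_add (bound φ' _ hφ'inj iA1 hrangeφ') (bound ψ' _ hψ'inj iB1 hrangeψ')
  exact le_antisymm dir3 (max_le dir1 dir2)
end
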